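/- arXiv:2211.02503 — 4 statements merged into one kernel-verified Lean document; each statement's English description precedes it below -/
import Mathlib

section
/- Let C be a strict d-dimensional Archimedean copula with generator ψ, ℓ ∈ {1,…,d−2}, and x ∈ (0,1)^ℓ. Define the conditional generator with respect to the event {X ≤ x} by ψ^{[0,x]}(z) := ψ(z + φ(C^{1:ℓ}(x)))/C^{1:ℓ}(x) = C^{1:ℓ+1}(x,ψ(z))/C^{1:ℓ}(x). Then for every z ∈ [0,∞): ψ^{[0,x]}(z) = (1/C^{1:ℓ}(x)) ∫_{[0,x]} ψˢ(z) dμ_{C^{1:ℓ}}(s), where ψˢ(z) = ψ^{(ℓ)}(Σ_{i=1}^ℓ φ(s_i)+z)/ψ^{(ℓ)}(Σ_{i=1}^ℓ φ(s_i)) is the pointwise conditional generator. -/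
open MeasureTheory ProbabilityTheory Set Filter Topology
open scoped ENNReal

noncomputable section
attribute [local instance] Classical.propDecidable

/-- The lower-orthant box `[0, y] = [0,y₁] × ⋯ × [0,y_k]` (as a lower set in `ℝ^k`;
all measures considered are supported on the unit cube). -/
def lowerBox {k : ℕ} (y : Fin k → ℝ) : Set (Fin k → ℝ) := {t | ∀ i, t i ≤ y i}

/-- The closed unit cube `[0,1]^k`. -/
def unitCube (k : ℕ) : Set (Fin k → ℝ) := {t | ∀ i, t i ∈ Icc (0 : ℝ) 1}

/-- `η` is a `k`-monotone Archimedean generator with (real-valued) pseudoinverse `ξ`. -/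
structure IsRealGenerator (k : ℕ) (η ξ : ℝ → ℝ) : Prop where
  continuousOn : ContinuousOn η (Ici 0)
  at_zero : η 0 = 1
  tendsto_zero : Tendsto η atTop (nhds 0)
  nonneg : ∀ z : ℝ, 0 ≤ z → 0 ≤ η z
  antitoneOn : AntitoneOn η (Ici 0)
  strict_anti : ∀ z₁ z₂ : ℝ, 0 ≤ z₁ → z₁ < z₂ → 0 < η z₂ → η z₂ < η z₁
  smooth : ∀ z : ℝ, 0 < z → ContDiffAt ℝ ((k - 2 : ℕ) : ℕ∞) η z
  alt_sign : ∀ m : ℕ, m ≤ k - 2 → ∀ z : ℝ, 0 < z → 0 ≤ (-1 : ℝ) ^ m * iteratedDeriv m η z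
  top_antitone : AntitoneOn (fun z => (-1 : ℝ) ^ (k - 2) * iteratedDeriv (k - 2) η z) (Ioi 0)
  top_convex : ConvexOn ℝ (Ioi 0) (fun z => (-1 : ℝ) ^ (k - 2) * iteratedDeriv (k - 2) η z)
  xi_nonneg : ∀ t : ℝ, 0 < t → t ≤ 1 → 0 ≤ ξ t
  eta_xi : ∀ t : ℝ, 0 < t → t ≤ 1 → η (ξ t) = t

/-- `ψ` is a strict `d`-monotone Archimedean generator with pseudoinverse `φ`
(strictness: `φ(0) = ∞`, equivalently `ψ > 0` on `[0,∞)` and `φ ∘ ψ = id` there). -/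
def IsStrictGenerator (d : ℕ) (ψ φ : ℝ → ℝ) : Prop :=
  IsRealGenerator d ψ φ ∧ (∀ z : ℝ, 0 ≤ z → 0 < ψ z) ∧ (∀ z : ℝ, 0 ≤ z → φ (ψ z) = z)

/-- The pseudoinverse `ξ(t) = inf{z ≥ 0 : η(z) ≤ t}` of a generator `η`. -/
def pseudoInv (η : ℝ → ℝ) (t : ℝ) : ℝ := sInf {z | 0 ≤ z ∧ η z ≤ t}

/-- The conditional Archimedean generator
`ψˣ(z) = ψ^{(ℓ)}(Σᵢ φ(xᵢ) + z) / ψ^{(ℓ)}(Σᵢ φ(xᵢ))`. -/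
def psiX (ψ φ : ℝ → ℝ) {l : ℕ} (x : Fin l → ℝ) (z : ℝ) : ℝ :=
  iteratedDeriv l ψ ((∑ i, φ (x i)) + z) / iteratedDeriv l ψ (∑ i, φ (x i))

/-- The common univariate marginal `g_x(y) = K_C(x, [0,y] × [0,1]^{d-ℓ-1})`
of the conditional distribution `K_C(x,·)` of a strict Archimedean copula; explicitly
`g_x(y) = ψ^{(ℓ)}(Σᵢ φ(xᵢ) + φ(y)) / ψ^{(ℓ)}(Σᵢ φ(xᵢ))` for `y ∈ (0,1]` and
`g_x(y) = 0` for `y ≤ 0`. -/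
def gxF (ψ φ : ℝ → ℝ) {l : ℕ} (x : Fin l → ℝ) (y : ℝ) : ℝ :=
  if y ≤ 0 then 0
  else iteratedDeriv l ψ ((∑ i, φ (x i)) + φ y) / iteratedDeriv l ψ (∑ i, φ (x i))

/-- The `ℓ`-Markov kernel of a strict `d`-dimensional Archimedean copula on the box
`[0,y]`: `K_C(x,[0,y]) = ψ^{(ℓ)}(Σᵢ φ(xᵢ) + Σⱼ φ(yⱼ)) / ψ^{(ℓ)}(Σᵢ φ(xᵢ))`
(equal to `0` whenever some `yⱼ = 0`). -/
def archKR (ψ φ : ℝ → ℝ) {l k : ℕ} (x : Fin l → ℝ) (y : Fin k → ℝ) : ℝ :=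
  if ∃ j, y j ≤ 0 then 0
  else iteratedDeriv l ψ ((∑ i, φ (x i)) + ∑ j, φ (y j)) / iteratedDeriv l ψ (∑ i, φ (x i))

/-- The conditional copula `Cˣ` of a strict Archimedean copula:
`Cˣ(u) = ψˣ(Σⱼ (ψˣ)⁻¹(uⱼ))` where `ψˣ` is the conditional generator (with the
convention `Cˣ(u) = 0` if some coordinate of `u` is `0`). -/
def condCop (ψ φ : ℝ → ℝ) {l : ℕ} (x : Fin l → ℝ) {k : ℕ} (u : Fin k → ℝ) : ℝ :=
  if ∃ j, u j ≤ 0 then 0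
  else psiX ψ φ x (∑ j, pseudoInv (psiX ψ φ x) (u j))

/-- The copula function of the Archimedean copula generated by `ψ`:
`C(x) = ψ(Σᵢ φ(xᵢ))` (with the convention `C(x) = 0` if some coordinate is `0`). -/
def archCopF (ψ φ : ℝ → ℝ) {k : ℕ} (x : Fin k → ℝ) : ℝ :=
  if ∃ i, x i ≤ 0 then 0 else ψ (∑ i, φ (x i))


-- ===== auxiliary lemmas =====

def gg (ψ : ℝ → ℝ) (m : ℕ) (w : ℝ) : ℝ := if 0 < w then iteratedDeriv m ψ w else 0

def upperBox {k : ℕ} (a : Fin k → ℝ) : Set (Fin k → ℝ) := {t | ∀ i, a i ≤ t i}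

lemma hasDerivAt_iteratedDeriv_aux {ψ : ℝ → ℝ} {n m : ℕ}
    (hsm : ∀ z : ℝ, 0 < z → ContDiffAt ℝ (n : ℕ∞) ψ z) (hm : m < n) {w : ℝ} (hw : 0 < w) :
    HasDerivAt (iteratedDeriv m ψ) (iteratedDeriv (m + 1) ψ w) w := by
  obtain ⟨u, hu, hcd⟩ := (hsm w hw).contDiffOn (le_refl _) (by simp)
  obtain ⟨V, hVu, hVo, hwV⟩ := mem_nhds_iff.mp hu
  have hUD : UniqueDiffOn ℝ V := hVo.uniqueDiffOn
  have hcd' : ContDiffOn ℝ (n : ℕ∞) ψ V := hcd.mono hVu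
  have heq : ∀ y ∈ V, iteratedDerivWithin m ψ V y = iteratedDeriv m ψ y := by
    intro y hy
    rw [iteratedDerivWithin_eq_iteratedFDerivWithin, iteratedDeriv_eq_iteratedFDeriv,
      iteratedFDerivWithin_of_isOpen m hVo hy]
  have hdw : DifferentiableWithinAt ℝ (iteratedDerivWithin m ψ V) V w :=
    hcd'.differentiableOn_iteratedDerivWithin (by exact_mod_cast hm) hUD w hwV
  have hda : DifferentiableAt ℝ (iteratedDerivWithin m ψ V) w :=
    hdw.differentiableAt (hVo.mem_nhds hwV)
  have hev : iteratedDeriv m ψ =ᶠ[nhds w] iteratedDerivWithin m ψ V := by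
    filter_upwards [hVo.mem_nhds hwV] with y hy using (heq y hy).symm
  have hda2 : DifferentiableAt ℝ (iteratedDeriv m ψ) w := hda.congr_of_eventuallyEq hev
  have h3 := hda2.hasDerivAt
  rwa [← iteratedDeriv_succ] at h3

lemma measurableSet_upperBox {k : ℕ} (a : Fin k → ℝ) : MeasurableSet (upperBox a) := by
  have : upperBox a = ⋂ i, {t : Fin k → ℝ | a i ≤ t i} := by
    ext t; simp [upperBox]
  rw [this]
  exact MeasurableSet.iInter fun i =>
    (isClosed_le continuous_const (continuous_apply i)).measurableSet


lemma continuousOn_iteratedDeriv_lt {ψ : ℝ → ℝ} {n m : ℕ}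
    (hsm : ∀ z : ℝ, 0 < z → ContDiffAt ℝ (n : ℕ∞) ψ z) (hm : m < n) :
    ContinuousOn (iteratedDeriv m ψ) (Ioi 0) := fun w hw =>
  ((hasDerivAt_iteratedDeriv_aux hsm hm hw).continuousAt).continuousWithinAt

lemma continuousOn_iteratedDeriv_top {ψ : ℝ → ℝ} {n : ℕ}
    (hcv : ConvexOn ℝ (Ioi 0) (fun z => (-1 : ℝ) ^ n * iteratedDeriv n ψ z)) :
    ContinuousOn (iteratedDeriv n ψ) (Ioi 0) := by
  have h := hcv.continuousOn isOpen_Ioi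
  have h2 := h.const_smul ((-1 : ℝ) ^ n)
  have : (fun z => ((-1:ℝ)^n) • ((-1 : ℝ) ^ n * iteratedDeriv n ψ z)) = iteratedDeriv n ψ := by
    funext z
    simp [smul_eq_mul, ← mul_assoc, ← pow_add, Even.neg_one_pow (⟨n, rfl⟩ : Even (n + n))]
  rw [← this]; exact h2

lemma antitoneOn_aux {ψ : ℝ → ℝ} {n m : ℕ}
    (hsm : ∀ z : ℝ, 0 < z → ContDiffAt ℝ (n : ℕ∞) ψ z)
    (hsign : ∀ k ≤ n, ∀ z : ℝ, 0 < z → 0 ≤ (-1 : ℝ) ^ k * iteratedDeriv k ψ z)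
    (hm : m + 1 ≤ n) :
    AntitoneOn (fun w => (-1 : ℝ) ^ m * iteratedDeriv m ψ w) (Ioi 0) := by
  have hder : ∀ w : ℝ, 0 < w →
      HasDerivAt (fun w => (-1 : ℝ) ^ m * iteratedDeriv m ψ w)
        ((-1 : ℝ) ^ m * iteratedDeriv (m + 1) ψ w) w := fun w hw =>
    (hasDerivAt_iteratedDeriv_aux hsm hm hw).const_mul _
  apply antitoneOn_of_deriv_nonpos (convex_Ioi 0)
  · exact fun w hw => (hder w hw).continuousAt.continuousWithinAt
  · rw [interior_Ioi]
    exact fun w hw => (hder w hw).differentiableAt.differentiableWithinAt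
  · rw [interior_Ioi]
    intro w hw
    rw [(hder w hw).deriv]
    have := hsign (m + 1) hm w hw
    rw [pow_succ] at this
    nlinarith

lemma tendsto_iteratedDeriv_aux {ψ : ℝ → ℝ} {n : ℕ}
    (hsm : ∀ z : ℝ, 0 < z → ContDiffAt ℝ (n : ℕ∞) ψ z)
    (hsign : ∀ k ≤ n, ∀ z : ℝ, 0 < z → 0 ≤ (-1 : ℝ) ^ k * iteratedDeriv k ψ z)
    (hanti : ∀ k ≤ n, AntitoneOn (fun w => (-1 : ℝ) ^ k * iteratedDeriv k ψ w) (Ioi 0))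
    (h0 : Tendsto ψ atTop (𝓝 0)) :
    ∀ m, m + 1 ≤ n → Tendsto (iteratedDeriv m ψ) atTop (𝓝 0) := by
  intro m
  induction m with
  | zero => intro _; simpa [iteratedDeriv_zero] using h0
  | succ m IH =>
    intro hm2
    have hmn : m + 1 ≤ n := by omega
    have hmltn : m < n := by omega
    have IH' := IH hmn
    set h : ℝ → ℝ := fun w => (-1 : ℝ) ^ (m + 1) * iteratedDeriv (m + 1) ψ w with hh
    have hnn : ∀ w : ℝ, 0 < w → 0 ≤ h w := fun w hw => hsign (m + 1) hmn w hw
    have hant : AntitoneOn h (Ioi 0) := hanti (m + 1) hmn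
    set h2 : ℝ → ℝ := fun w => h (max w 1) with hh2
    have hant2 : Antitone h2 := fun w1 w2 hle =>
      hant (show max w1 1 ∈ Ioi (0:ℝ) from mem_Ioi.mpr (lt_max_iff.mpr (Or.inr one_pos)))
        (show max w2 1 ∈ Ioi (0:ℝ) from mem_Ioi.mpr (lt_max_iff.mpr (Or.inr one_pos)))
        (max_le_max hle le_rfl)
    have hbdd : BddBelow (range h2) := by
      refine ⟨0, ?_⟩
      rintro y ⟨w, rfl⟩
      exact hnn _ (lt_max_iff.mpr (Or.inr one_pos))
    have ht2 : Tendsto h2 atTop (𝓝 (⨅ w, h2 w)) := tendsto_atTop_ciInf hant2 hbdd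
    set L : ℝ := ⨅ w, h2 w with hL
    have hL0 : 0 ≤ L := le_ciInf fun w => hnn _ (lt_max_iff.mpr (Or.inr one_pos))
    have hLle : ∀ w, L ≤ h2 w := fun w => ciInf_le hbdd w
    have hLzero : L = 0 := by
      by_contra hne
      have hLpos : 0 < L := lt_of_le_of_ne hL0 (Ne.symm hne)
      set u : ℝ → ℝ := fun w => (-1 : ℝ) ^ m * iteratedDeriv m ψ w + L * w with hu
      have hu' : ∀ w : ℝ, 0 < w →
          HasDerivAt u ((-1 : ℝ) ^ m * iteratedDeriv (m + 1) ψ w + L) w := by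
        intro w hw
        have h1 := (hasDerivAt_iteratedDeriv_aux hsm hmltn hw).const_mul ((-1 : ℝ) ^ m)
        have h2' := (hasDerivAt_id w).const_mul L
        exact (h1.add h2').congr_deriv (by ring)
      have hder_nonpos : ∀ w ∈ interior (Ici (1:ℝ)), deriv u w ≤ 0 := by
        intro w hw
        rw [interior_Ici] at hw
        have hw0 : (0:ℝ) < w := lt_trans one_pos hw
        rw [(hu' w hw0).deriv]
        have hhw : L ≤ h w := by
          have := hLle w
          simpa [hh2, max_eq_left (le_of_lt (mem_Ioi.mp hw))] using this
        have hsgn : (-1 : ℝ) ^ m * iteratedDeriv (m + 1) ψ w = -h w := by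
          simp only [hh]; ring
        rw [hsgn]; linarith
      have hu_anti : AntitoneOn u (Ici 1) := by
        apply antitoneOn_of_deriv_nonpos (convex_Ici 1)
        · exact fun w hw => (hu' w (lt_of_lt_of_le one_pos hw)).continuousAt.continuousWithinAt
        · rw [interior_Ici]
          exact fun w hw => (hu' w (lt_trans one_pos hw)).differentiableAt.differentiableWithinAt
        · exact hder_nonpos
      have hIT : Tendsto (fun w => (-1 : ℝ) ^ m * iteratedDeriv m ψ w) atTop (𝓝 0) := by
        simpa using IH'.const_mul ((-1 : ℝ) ^ m)
      have hev1 : ∀ᶠ w : ℝ in atTop, -1 < (-1 : ℝ) ^ m * iteratedDeriv m ψ w :=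
        hIT.eventually (eventually_gt_nhds (by norm_num))
      have hev2 : ∀ᶠ w : ℝ in atTop, u 1 - L * w < -1 := by
        have hLT : Tendsto (fun w : ℝ => u 1 - L * w) atTop atBot := by
          apply Filter.tendsto_atBot_add_const_left
          have : Tendsto (fun w : ℝ => L * w) atTop atTop := tendsto_id.const_mul_atTop hLpos
          exact tendsto_neg_atTop_atBot.comp this
        exact hLT.eventually_lt_atBot (-1)
      have hev3 : ∀ᶠ w : ℝ in atTop, (1:ℝ) ≤ w := eventually_ge_atTop 1
      obtain ⟨w, hw1, hw2, hw3⟩ := (hev1.and (hev2.and hev3)).exists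
      have := hu_anti self_mem_Ici hw3 hw3
      simp only [hu] at this
      have hu1 : (-1 : ℝ) ^ m * iteratedDeriv m ψ w ≤ u 1 - L * w := by
        simp only [hu]; linarith
      linarith
    have hth : Tendsto h atTop (𝓝 0) := by
      rw [hLzero] at ht2
      apply ht2.congr'
      filter_upwards [eventually_ge_atTop (1:ℝ)] with w hw
      simp [hh2, max_eq_left hw]
    have : Tendsto (fun w => (-1 : ℝ) ^ (m + 1) * h w) atTop (𝓝 0) := by
      simpa using hth.const_mul ((-1 : ℝ) ^ (m + 1))
    apply this.congr
    intro w
    simp [hh, ← mul_assoc, ← pow_add, Even.neg_one_pow (⟨m + 1, rfl⟩ : Even (m + 1 + (m + 1)))]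

lemma measurable_gg {ψ : ℝ → ℝ} {m : ℕ} (hc : ContinuousOn (iteratedDeriv m ψ) (Ioi 0)) :
    Measurable (gg ψ m) := by
  apply measurable_of_isOpen
  intro O hO
  have hset : gg ψ m ⁻¹' O =
      (Ioi 0 ∩ iteratedDeriv m ψ ⁻¹' O) ∪ (if (0:ℝ) ∈ O then Iic 0 else ∅) := by
    ext w
    by_cases hw : (0:ℝ) < w
    · simp [gg, hw, not_le.mpr hw]
    · simp only [gg, mem_preimage, if_neg hw, mem_union, mem_inter_iff, mem_Ioi, mem_Iic]
      constructor
      · intro h0; right; rw [if_pos h0]; exact not_lt.mp hw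
      · rintro (⟨h1, _⟩ | h2)
        · exact absurd h1 hw
        · by_contra h0; rw [if_neg h0] at h2; exact h2
  rw [hset]
  refine ((hc.isOpen_inter_preimage isOpen_Ioi hO).measurableSet).union ?_
  split <;> simp [measurableSet_Iic]

lemma ftc_aux {ψ : ℝ → ℝ} {m : ℕ}
    (hder : ∀ w : ℝ, 0 < w → HasDerivAt (iteratedDeriv m ψ) (iteratedDeriv (m + 1) ψ w) w)
    (hsgn : ∀ w : ℝ, 0 < w → 0 ≤ (-1 : ℝ) ^ (m + 1) * iteratedDeriv (m + 1) ψ w)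
    (hten : Tendsto (iteratedDeriv m ψ) atTop (𝓝 0))
    {C b : ℝ} (hC : 0 ≤ C) (hb : 0 < b) :
    ∫⁻ x : ℝ, (Ici b).indicator
        (fun x => ENNReal.ofReal ((-1 : ℝ) ^ (m + 1) * gg ψ (m + 1) (C + x))) x
      = ENNReal.ofReal ((-1 : ℝ) ^ m * iteratedDeriv m ψ (C + b)) := by
  set g : ℝ → ℝ := fun x => -((-1 : ℝ) ^ m * iteratedDeriv m ψ (C + x)) with hgdef
  set g' : ℝ → ℝ := fun x => (-1 : ℝ) ^ (m + 1) * iteratedDeriv (m + 1) ψ (C + x) with hg'def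
  have hg : ∀ x ∈ Ici b, HasDerivAt g (g' x) x := by
    intro x hx
    have hpos : 0 < C + x := by have := mem_Ici.mp hx; linarith
    have h1 : HasDerivAt (fun x : ℝ => iteratedDeriv m ψ (C + x))
        (iteratedDeriv (m + 1) ψ (C + x)) x := by
      have h2 := (hder _ hpos).comp x ((hasDerivAt_id x).const_add C)
      simpa [Function.comp_def] using h2
    have h3 := (h1.const_mul ((-1 : ℝ) ^ m)).neg
    refine HasDerivAt.congr_deriv h3 ?_
    show _ = (-1 : ℝ) ^ (m + 1) * iteratedDeriv (m + 1) ψ (C + x); ring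
  have hgpos : ∀ x ∈ Ioi b, 0 ≤ g' x := fun x hx =>
    hsgn _ (by have := mem_Ioi.mp hx; linarith)
  have hgten : Tendsto g atTop (𝓝 0) := by
    have h2 : Tendsto (fun x : ℝ => iteratedDeriv m ψ (C + x)) atTop (𝓝 0) :=
      hten.comp (tendsto_atTop_add_const_left atTop C tendsto_id)
    simpa using (h2.const_mul ((-1 : ℝ) ^ m)).neg
  have hint := integral_Ioi_of_hasDerivAt_of_nonneg' hg hgpos hgten
  have hinteg := integrableOn_Ioi_deriv_of_nonneg' hg hgpos hgten
  rw [lintegral_indicator measurableSet_Ici]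
  rw [Measure.restrict_congr_set Ioi_ae_eq_Ici.symm]
  rw [setLIntegral_congr_fun measurableSet_Ioi ((fun x hx => by
    have hpos : 0 < C + x := by have := mem_Ioi.mp hx; linarith
    show ENNReal.ofReal ((-1 : ℝ) ^ (m + 1) * gg ψ (m + 1) (C + x)) = ENNReal.ofReal (g' x)
    rw [gg, if_pos hpos]))]
  rw [← ofReal_integral_eq_lintegral_ofReal hinteg
    ((ae_restrict_iff' measurableSet_Ioi).mpr (ae_of_all _ hgpos))]
  rw [hint]
  simp [hgdef]

lemma mem_upperBox {k : ℕ} {a t : Fin k → ℝ} : t ∈ upperBox a ↔ ∀ i, a i ≤ t i := Iff.rfl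

lemma IT_aux {ψ : ℝ → ℝ} {n : ℕ}
    (hder : ∀ m, m < n → ∀ w : ℝ, 0 < w →
      HasDerivAt (iteratedDeriv m ψ) (iteratedDeriv (m + 1) ψ w) w)
    (hsgn : ∀ m, m ≤ n → ∀ w : ℝ, 0 < w → 0 ≤ (-1 : ℝ) ^ m * iteratedDeriv m ψ w)
    (hten : ∀ m, m < n → Tendsto (iteratedDeriv m ψ) atTop (𝓝 0))
    (hcont : ∀ m, m ≤ n → ContinuousOn (iteratedDeriv m ψ) (Ioi 0)) :
    ∀ k, k ≤ n → ∀ c : ℝ, 0 ≤ c → (k = 0 → 0 < c) → ∀ a : Fin k → ℝ, (∀ i, 0 < a i) →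
    ∫⁻ t : Fin k → ℝ, (upperBox a).indicator
        (fun t => ENNReal.ofReal ((-1 : ℝ) ^ k * gg ψ k (c + ∑ i, t i))) t
      = ENNReal.ofReal (ψ (c + ∑ i, a i)) := by
  intro k
  induction k with
  | zero =>
    intro _ c hc hc0 a _
    have hc' : 0 < c := hc0 rfl
    have hub : upperBox a = univ := eq_univ_iff_forall.mpr fun t i => i.elim0
    rw [hub, indicator_univ]
    simp only [Finset.univ_eq_empty, Finset.sum_empty]
    rw [lintegral_const]
    have hvol : (volume : Measure (Fin 0 → ℝ)) univ = 1 := by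
      simp [volume_pi, Measure.pi_univ]
    rw [hvol, mul_one]
    congr 1
    simp [gg, hc', iteratedDeriv_zero]
  | succ k IH =>
    intro hk1 c hc _ a ha
    have hkn : k ≤ n := by omega
    have hkltn : k < n := by omega
    set e := MeasurableEquiv.piFinSuccAbove (fun _ : Fin (k + 1) => ℝ) 0 with he_def
    have he : ∀ t : Fin (k + 1) → ℝ, e t = (t 0, fun j => t j.succ) := by
      intro t
      simp only [he_def, MeasurableEquiv.piFinSuccAbove, MeasurableEquiv.coe_mk,
        Fin.insertNthEquiv_symm_apply]
      refine Prod.ext rfl ?_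
      funext j
      simp [Fin.removeNth, Fin.zero_succAbove, Fin.tail]
    set a' : Fin k → ℝ := fun j => a j.succ with ha'_def
    set G : ℝ × (Fin k → ℝ) → ℝ≥0∞ := fun p =>
      if a 0 ≤ p.1 then
        (if ∀ j, a' j ≤ p.2 j then
          ENNReal.ofReal ((-1 : ℝ) ^ (k + 1) * gg ψ (k + 1) (c + (p.1 + ∑ j, p.2 j)))
        else 0)
      else 0 with hG_def
    have hggm : Measurable (gg ψ (k + 1)) := measurable_gg (hcont (k + 1) hk1)
    have hs1 : MeasurableSet {p : ℝ × (Fin k → ℝ) | a 0 ≤ p.1} :=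
      measurableSet_Ici.preimage measurable_fst
    have hs2 : MeasurableSet {p : ℝ × (Fin k → ℝ) | ∀ j, a' j ≤ p.2 j} :=
      (measurableSet_upperBox a').preimage measurable_snd
    have hGm : Measurable G := by
      apply Measurable.ite hs1
      · apply Measurable.ite hs2
        · apply Measurable.ennreal_ofReal
          apply Measurable.const_mul
          apply hggm.comp
          exact measurable_const.add (measurable_fst.add
            (Finset.univ.measurable_sum fun j _ => (measurable_pi_apply j).comp measurable_snd))
        · exact measurable_const
      · exact measurable_const
    have hFG : ∀ t : Fin (k + 1) → ℝ,
        (upperBox a).indicator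
          (fun t => ENNReal.ofReal ((-1 : ℝ) ^ (k + 1) * gg ψ (k + 1) (c + ∑ i, t i))) t
        = G (e t) := by
      intro t
      rw [he t, Set.indicator_apply]
      simp only [hG_def, mem_upperBox]
      by_cases h0 : a 0 ≤ t 0
      · by_cases hsucc : ∀ j : Fin k, a' j ≤ t j.succ
        · have hall : ∀ i, a i ≤ t i := Fin.cases h0 hsucc
          rw [if_pos hall, if_pos h0, if_pos hsucc]
          congr 2
          rw [Fin.sum_univ_succ]
        · have hnall : ¬ ∀ i, a i ≤ t i := fun hall => hsucc fun j => hall j.succ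
          rw [if_neg hnall, if_pos h0, if_neg hsucc]
      · have hnall : ¬ ∀ i, a i ≤ t i := fun hall => h0 (hall 0)
        rw [if_neg hnall, if_neg h0]
    calc ∫⁻ t : Fin (k + 1) → ℝ, (upperBox a).indicator
          (fun t => ENNReal.ofReal ((-1 : ℝ) ^ (k + 1) * gg ψ (k + 1) (c + ∑ i, t i))) t
        = ∫⁻ t : Fin (k + 1) → ℝ, G (e t) := lintegral_congr hFG
      _ = ∫⁻ p : ℝ × (Fin k → ℝ), G p :=
          (volume_preserving_piFinSuccAbove (fun _ : Fin (k + 1) => ℝ) 0).lintegral_comp hGm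
      _ = ∫⁻ y : Fin k → ℝ, ∫⁻ u : ℝ, G (u, y) := by
          rw [Measure.volume_eq_prod]
          exact lintegral_prod_symm' G hGm
      _ = ∫⁻ y : Fin k → ℝ, (upperBox a').indicator
            (fun y => ENNReal.ofReal ((-1 : ℝ) ^ k * gg ψ k ((c + a 0) + ∑ j, y j))) y := by
          apply lintegral_congr
          intro y
          rw [Set.indicator_apply]
          simp only [mem_upperBox]
          by_cases hy : ∀ j, a' j ≤ y j
          · rw [if_pos hy]
            have hsum_nn : 0 ≤ ∑ j, y j :=
              Finset.sum_nonneg fun j _ => le_of_lt (lt_of_lt_of_le (ha j.succ) (hy j))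
            have hCnn : 0 ≤ c + ∑ j, y j := by linarith
            have hstep : ∀ u : ℝ, G (u, y) = (Ici (a 0)).indicator
                (fun u => ENNReal.ofReal
                  ((-1 : ℝ) ^ (k + 1) * gg ψ (k + 1) ((c + ∑ j, y j) + u))) u := by
              intro u
              rw [Set.indicator_apply]
              simp only [hG_def, mem_Ici, if_pos hy]
              by_cases hu : a 0 ≤ u
              · rw [if_pos hu, if_pos hu]
                congr 2
                ring
              · rw [if_neg hu, if_neg hu]
            rw [lintegral_congr hstep,
              ftc_aux (hder k hkltn) (hsgn (k + 1) hk1) (hten k hkltn) hCnn (ha 0)]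
            have hpos : (0:ℝ) < (c + a 0) + ∑ j, y j := by linarith [ha 0]
            rw [gg, if_pos hpos]
            congr 2
            ring
          · rw [if_neg hy]
            have hzero : ∀ u : ℝ, G (u, y) = 0 := by
              intro u
              simp only [hG_def, if_neg hy]
              split <;> rfl
            rw [lintegral_congr hzero, lintegral_zero]
      _ = ENNReal.ofReal (ψ ((c + a 0) + ∑ j, a' j)) :=
          IH hkn (c + a 0) (by linarith [ha 0]) (fun _ => by linarith [ha 0]) a'
            (fun j => ha j.succ)
      _ = ENNReal.ofReal (ψ (c + ∑ i, a i)) := by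
          congr 2
          rw [Fin.sum_univ_succ]
          ring

lemma measurableSet_lowerBox {k : ℕ} (v : Fin k → ℝ) : MeasurableSet (lowerBox v) := by
  have : lowerBox v = ⋂ i, {t : Fin k → ℝ | t i ≤ v i} := by ext t; simp [lowerBox]
  rw [this]
  exact MeasurableSet.iInter fun i =>
    (isClosed_le (continuous_apply i) continuous_const).measurableSet

lemma pi_eq_generateFrom_lowerBox (l : ℕ) :
    (inferInstance : MeasurableSpace (Fin l → ℝ)) =
      MeasurableSpace.generateFrom {S : Set (Fin l → ℝ) | ∃ v, S = lowerBox v} := by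
  apply le_antisymm
  · show MeasurableSpace.pi ≤ _
    refine iSup_le fun i => ?_
    have hb : (Real.measurableSpace : MeasurableSpace ℝ) = borel ℝ := BorelSpace.measurable_eq
    show MeasurableSpace.comap (fun (b : Fin l → ℝ) => b i) Real.measurableSpace ≤ _
    rw [hb, borel_eq_generateFrom_Iic ℝ, MeasurableSpace.comap_generateFrom]
    refine MeasurableSpace.generateFrom_le ?_
    rintro S ⟨T, ⟨c, rfl⟩, rfl⟩
    have hset : (fun t : Fin l → ℝ => t i) ⁻¹' Iic c
        = ⋃ m : ℕ, lowerBox (fun j => if j = i then c else m) := by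
      ext t
      simp only [mem_preimage, mem_Iic, mem_iUnion]
      constructor
      · intro h
        obtain ⟨m, hm⟩ := exists_nat_ge (∑ j, |t j|)
        refine ⟨m, fun j => ?_⟩
        show t j ≤ if j = i then c else (m:ℝ)
        by_cases hj : j = i
        · simpa [hj] using h
        · rw [if_neg hj]
          calc t j ≤ |t j| := le_abs_self _
            _ ≤ ∑ j', |t j'| := Finset.single_le_sum (fun j' _ => abs_nonneg (t j'))
                (Finset.mem_univ j)
            _ ≤ m := hm
      · rintro ⟨m, hm⟩
        have := hm i
        simpa using this
    rw [hset]
    exact MeasurableSet.iUnion fun m =>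
      MeasurableSpace.measurableSet_generateFrom ⟨_, rfl⟩
  · exact MeasurableSpace.generateFrom_le (by rintro S ⟨v, rfl⟩; exact measurableSet_lowerBox v)

lemma isPiSystem_lowerBox (l : ℕ) :
    IsPiSystem {S : Set (Fin l → ℝ) | ∃ v, S = lowerBox v} := by
  rintro S ⟨v, rfl⟩ T ⟨w, rfl⟩ -
  refine ⟨fun i => min (v i) (w i), ?_⟩
  ext t
  simp only [lowerBox, mem_inter_iff, mem_setOf_eq, le_min_iff]
  exact ⟨fun h => fun i => ⟨(h.1 i), (h.2 i)⟩, fun h => ⟨fun i => (h i).1, fun i => (h i).2⟩⟩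

lemma measurableSet_unitCube (k : ℕ) : MeasurableSet (unitCube k) := by
  have : unitCube k = ⋂ i, ({t : Fin k → ℝ | 0 ≤ t i} ∩ {t : Fin k → ℝ | t i ≤ 1}) := by
    ext t; simp [unitCube, forall_and]
  rw [this]
  exact MeasurableSet.iInter fun i =>
    ((isClosed_le continuous_const (continuous_apply i)).measurableSet).inter
      ((isClosed_le (continuous_apply i) continuous_const).measurableSet)

def phiT (φ : ℝ → ℝ) (u : ℝ) : ℝ := if 0 < u ∧ u ≤ 1 then φ u else 0

lemma measurable_phiT {ψ φ : ℝ → ℝ}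
    (hpos : ∀ z : ℝ, 0 ≤ z → 0 < ψ z)
    (hxi_nonneg : ∀ t : ℝ, 0 < t → t ≤ 1 → 0 ≤ φ t)
    (heta : ∀ t : ℝ, 0 < t → t ≤ 1 → ψ (φ t) = t)
    (hanti : AntitoneOn ψ (Ici 0))
    (hstrict : ∀ z₁ z₂ : ℝ, 0 ≤ z₁ → z₁ < z₂ → 0 < ψ z₂ → ψ z₂ < ψ z₁) :
    Measurable (phiT φ) := by
  apply measurable_of_Ioi
  intro c
  by_cases hc : c < 0
  · have : phiT φ ⁻¹' Ioi c = univ := by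
      apply eq_univ_iff_forall.mpr
      intro u
      simp only [mem_preimage, mem_Ioi, phiT]
      split_ifs with h
      · exact lt_of_lt_of_le hc (hxi_nonneg u h.1 h.2)
      · exact hc
    rw [this]; exact MeasurableSet.univ
  · push_neg at hc
    have hkey : phiT φ ⁻¹' Ioi c = Ioc 0 1 ∩ Iio (ψ c) := by
      ext u
      simp only [mem_preimage, mem_Ioi, mem_inter_iff, mem_Ioc, mem_Iio, phiT]
      split_ifs with h
      · constructor
        · intro hgt
          refine ⟨⟨h.1, h.2⟩, ?_⟩
          have := hstrict c (φ u) hc hgt (by rw [heta u h.1 h.2]; exact h.1)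
          rwa [heta u h.1 h.2] at this
        · rintro ⟨-, hlt⟩
          by_contra hle
          push_neg at hle
          have := hanti (mem_Ici.mpr (hxi_nonneg u h.1 h.2)) (mem_Ici.mpr hc) hle
          rw [heta u h.1 h.2] at this
          linarith
      · constructor
        · intro h0; linarith
        · rintro ⟨h1, -⟩
          exact absurd ⟨h1.1, h1.2⟩ h
    rw [hkey]
    exact measurableSet_Ioc.inter measurableSet_Iio


set_option maxHeartbeats 2000000 in
/-- **Remark 6.4** (the conditional generator w.r.t. the event `X ≤ x`). Let `C` be a
strict `d`-dimensional Archimedean copula with generator `ψ`, `ℓ ∈ {1,…,d-2}` and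
`x ∈ (0,1)^ℓ`, and let `ν = μ_{C^{1:ℓ}}` be the measure of the marginal copula
`C^{1:ℓ}(x) = ψ(Σᵢφ(xᵢ))`. The conditional generator
`ψ^{[0,x]}(z) := ψ(z + φ(C^{1:ℓ}(x)))/C^{1:ℓ}(x)` also equals
`C^{1:ℓ+1}(x, ψ(z))/C^{1:ℓ}(x) = ψ(Σᵢφ(xᵢ) + φ(ψ(z)))/C^{1:ℓ}(x)` and satisfies
`ψ^{[0,x]}(z) = (1/C^{1:ℓ}(x)) ∫_{[0,x]} ψˢ(z) dμ_{C^{1:ℓ}}(s)`,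
where `ψˢ(z) = ψ^{(ℓ)}(Σᵢφ(sᵢ)+z)/ψ^{(ℓ)}(Σᵢφ(sᵢ))` is the pointwise conditional
generator. -/
theorem conditional_generator_event
    (d l : ℕ) (hd : 2 ≤ d) (hl1 : 1 ≤ l) (hl2 : l ≤ d - 2)
    (ψ φ : ℝ → ℝ) (hgen : IsStrictGenerator d ψ φ)
    (x : Fin l → ℝ) (hx : ∀ i, x i ∈ Ioo (0:ℝ) 1)
    (ν : Measure (Fin l → ℝ)) (hνp : IsProbabilityMeasure ν)
    (hνc : ν (unitCube l) = 1)
    (hν : ∀ v : Fin l → ℝ, (∀ i, v i ∈ Ioc (0:ℝ) 1) →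
      ν (lowerBox v) = ENNReal.ofReal (ψ (∑ i, φ (v i)))) :
    ∀ z : ℝ, 0 ≤ z →
      ψ (z + φ (ψ (∑ i, φ (x i)))) / ψ (∑ i, φ (x i))
        = ψ ((∑ i, φ (x i)) + φ (ψ z)) / ψ (∑ i, φ (x i)) ∧
      ψ (z + φ (ψ (∑ i, φ (x i)))) / ψ (∑ i, φ (x i))
        = (ψ (∑ i, φ (x i)))⁻¹ * ∫ s in lowerBox x, psiX ψ φ s z ∂ν := by
  obtain ⟨G, hpos, hinv⟩ := hgen
  set n := d - 2 with hn_def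
  have hl2' : l ≤ n := hl2
  have hl0 : l ≠ 0 := by omega
  have hsm : ∀ z : ℝ, 0 < z → ContDiffAt ℝ (n : ℕ∞) ψ z := G.smooth
  have hsgn : ∀ m, m ≤ n → ∀ w : ℝ, 0 < w → 0 ≤ (-1:ℝ)^m * iteratedDeriv m ψ w :=
    fun m hm => G.alt_sign m hm
  have hder : ∀ m, m < n → ∀ w : ℝ, 0 < w →
      HasDerivAt (iteratedDeriv m ψ) (iteratedDeriv (m+1) ψ w) w :=
    fun m hm w hw => hasDerivAt_iteratedDeriv_aux hsm hm hw
  have hcont : ∀ m, m ≤ n → ContinuousOn (iteratedDeriv m ψ) (Ioi 0) := by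
    intro m hm
    rcases eq_or_lt_of_le hm with rfl | hlt
    · exact continuousOn_iteratedDeriv_top G.top_convex
    · exact continuousOn_iteratedDeriv_lt hsm hlt
  have hanti : ∀ m, m ≤ n → AntitoneOn (fun w => (-1:ℝ)^m * iteratedDeriv m ψ w) (Ioi 0) := by
    intro m hm
    rcases eq_or_lt_of_le hm with rfl | hlt
    · exact G.top_antitone
    · exact antitoneOn_aux hsm hsgn hlt
  have hten : ∀ m, m < n → Tendsto (iteratedDeriv m ψ) atTop (𝓝 0) := fun m hm =>
    tendsto_iteratedDeriv_aux hsm hsgn hanti G.tendsto_zero m hm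
  have hψ0 : ψ 0 = 1 := G.at_zero
  have hstrict : ∀ z₁ z₂ : ℝ, 0 ≤ z₁ → z₁ < z₂ → ψ z₂ < ψ z₁ := fun z₁ z₂ h1 h2 =>
    G.strict_anti z₁ z₂ h1 h2 (hpos z₂ (by linarith))
  have hφpos : ∀ v : ℝ, 0 < v → v < 1 → 0 < φ v := by
    intro v hv0 hv1
    rcases eq_or_lt_of_le (G.xi_nonneg v hv0 (le_of_lt hv1)) with h | h
    · exfalso; have h2 := G.eta_xi v hv0 hv1.le; rw [← h, hψ0] at h2; linarith
    · exact h
  have hle_iff : ∀ v : ℝ, 0 < v → v ≤ 1 → ∀ t : ℝ, 0 ≤ t → (ψ t ≤ v ↔ φ v ≤ t) := by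
    intro v hv0 hv1 t ht
    constructor
    · intro h
      by_contra hlt
      push_neg at hlt
      have h2 := hstrict t (φ v) ht hlt
      rw [G.eta_xi v hv0 hv1] at h2
      linarith
    · intro h
      have h2 := G.antitoneOn (mem_Ici.mpr (G.xi_nonneg v hv0 hv1)) (mem_Ici.mpr ht) h
      rwa [G.eta_xi v hv0 hv1] at h2
  set A := ∑ i, φ (x i) with hA_def
  have hφx_pos : ∀ i, 0 < φ (x i) := fun i => hφpos _ (hx i).1 (hx i).2
  haveI : Nonempty (Fin l) := ⟨⟨0, by omega⟩⟩
  have hA_pos : 0 < A := Finset.sum_pos (fun i _ => hφx_pos i) Finset.univ_nonempty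
  have hA_nonneg : 0 ≤ A := hA_pos.le
  have hψA_pos : 0 < ψ A := hpos A hA_nonneg
  -- the density measure
  set Spos : Set (Fin l → ℝ) := {t | ∀ i, 0 < t i} with hSpos_def
  have hSposm : MeasurableSet Spos := by
    have h : Spos = ⋂ i, {t : Fin l → ℝ | 0 < t i} := by ext t; simp [hSpos_def]
    rw [h]
    exact MeasurableSet.iInter fun i =>
      (isOpen_lt continuous_const (continuous_apply i)).measurableSet
  set Dfun : (Fin l → ℝ) → ℝ≥0∞ :=
    fun t => ENNReal.ofReal ((-1:ℝ)^l * gg ψ l (∑ i, t i)) with hD_def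
  have hDm : Measurable Dfun := by
    apply Measurable.ennreal_ofReal
    exact ((measurable_gg (hcont l hl2')).comp
      (Finset.univ.measurable_sum fun i _ => measurable_pi_apply i)).const_mul _
  set ρ : Measure (Fin l → ℝ) := (volume.restrict Spos).withDensity Dfun with hρ_def
  have hψm_cont : Continuous (fun u : ℝ => ψ (max u 0)) :=
    G.continuousOn.comp_continuous (continuous_id.max continuous_const)
      (fun u => mem_Ici.mpr (le_max_right u 0))
  set Tψ : (Fin l → ℝ) → (Fin l → ℝ) := fun t i => ψ (max (t i) 0) with hT_def
  have hTm : Measurable Tψ :=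
    measurable_pi_lambda _ fun i => hψm_cont.measurable.comp (measurable_pi_apply i)
  set ν' : Measure (Fin l → ℝ) := ρ.map Tψ with hν'_def
  have hρap : ∀ S : Set (Fin l → ℝ), MeasurableSet S →
      ρ S = ∫⁻ t in S ∩ Spos, Dfun t ∂volume := by
    intro S hS
    rw [hρ_def, withDensity_apply _ hS, Measure.restrict_restrict hS]
  have hbase : ∀ a : Fin l → ℝ, (∀ i, 0 < a i) →
      ∫⁻ t in upperBox a, Dfun t ∂volume = ENNReal.ofReal (ψ (∑ i, a i)) := by
    intro a ha
    rw [← lintegral_indicator (measurableSet_upperBox a)]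
    have h := IT_aux hder hsgn hten hcont l hl2' 0 le_rfl (fun h0 => absurd h0 hl0) a ha
    simp only [zero_add] at h
    exact h
  have hρbox : ∀ a : Fin l → ℝ, (∀ i, 0 < a i) →
      ρ (upperBox a) = ENNReal.ofReal (ψ (∑ i, a i)) := by
    intro a ha
    have hint : upperBox a ∩ Spos = upperBox a := by
      apply inter_eq_left.mpr
      intro t ht i
      exact lt_of_lt_of_le (ha i) (mem_upperBox.mp ht i)
    rw [hρap _ (measurableSet_upperBox a), hint, hbase a ha]
  have hpre : ∀ v : Fin l → ℝ, (∀ i, 0 < v i ∧ v i < 1) →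
      (Tψ ⁻¹' lowerBox v) ∩ Spos = upperBox (fun i => φ (v i)) := by
    intro v hv
    ext t
    simp only [mem_inter_iff, mem_preimage, hT_def, lowerBox, mem_setOf_eq, mem_upperBox,
      hSpos_def]
    constructor
    · rintro ⟨h1, h2⟩ i
      have hti : (0:ℝ) ≤ t i := (h2 i).le
      have h3 := h1 i
      rw [max_eq_left hti] at h3
      exact (hle_iff (v i) (hv i).1 (hv i).2.le (t i) hti).mp h3
    · intro h
      have hpos' : ∀ i, 0 < t i :=
        fun i => lt_of_lt_of_le (hφpos _ (hv i).1 (hv i).2) (h i)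
      refine ⟨fun i => ?_, hpos'⟩
      rw [max_eq_left (hpos' i).le]
      exact (hle_iff (v i) (hv i).1 (hv i).2.le (t i) (hpos' i).le).mpr (h i)
  have hν'box : ∀ v : Fin l → ℝ, (∀ i, v i ∈ Ioo (0:ℝ) 1) →
      ν' (lowerBox v) = ENNReal.ofReal (ψ (∑ i, φ (v i))) := by
    intro v hv
    rw [hν'_def, Measure.map_apply hTm (measurableSet_lowerBox v),
      hρap _ (hTm (measurableSet_lowerBox v)), hpre v (fun i => ⟨(hv i).1, (hv i).2⟩),
      hbase _ (fun i => hφpos _ (hv i).1 (hv i).2)]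
  -- total mass of ν'
  have hUmono : Monotone (fun m : ℕ => upperBox (fun _ : Fin l => (1:ℝ)/(m+1))) := by
    intro m1 m2 hm t ht i
    refine le_trans ?_ (ht i)
    apply one_div_le_one_div_of_le (by positivity)
    have : (m1:ℝ) ≤ m2 := Nat.cast_le.mpr hm
    linarith
  have hUnion : (⋃ m : ℕ, upperBox (fun _ : Fin l => (1:ℝ)/(m+1))) = Spos := by
    ext t
    simp only [mem_iUnion, mem_upperBox, hSpos_def, mem_setOf_eq]
    constructor
    · rintro ⟨m, hm⟩ i; exact lt_of_lt_of_le (by positivity) (hm i)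
    · intro h
      have hmin : (0:ℝ) < Finset.univ.inf' Finset.univ_nonempty t := by
        rw [Finset.lt_inf'_iff]; exact fun i _ => h i
      obtain ⟨m, hm⟩ := exists_nat_one_div_lt hmin
      exact ⟨m, fun i => le_trans hm.le (Finset.inf'_le _ (Finset.mem_univ i))⟩
  have htend := tendsto_measure_iUnion_atTop (μ := ρ)
    (s := fun m : ℕ => upperBox (fun _ : Fin l => (1:ℝ)/(m+1))) hUmono
  rw [hUnion] at htend
  have hvals : ∀ m : ℕ, ρ (upperBox (fun _ : Fin l => (1:ℝ)/(m+1)))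
      = ENNReal.ofReal (ψ ((l:ℝ) * (1/(m+1)))) := by
    intro m
    rw [hρbox _ (fun i => by positivity)]
    congr 2
    rw [Finset.sum_const, Finset.card_univ, Fintype.card_fin, nsmul_eq_mul]
  have hseq : Tendsto (fun m : ℕ => (l:ℝ) * (1/(m+1))) atTop (𝓝 0) := by
    have h := tendsto_one_div_add_atTop_nhds_zero_nat (𝕜 := ℝ)
    simpa using h.const_mul (l:ℝ)
  have hψc : Tendsto (fun m : ℕ => ψ ((l:ℝ) * (1/(m+1)))) atTop (𝓝 (ψ 0)) := by
    apply (G.continuousOn 0 self_mem_Ici).tendsto.comp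
    rw [tendsto_nhdsWithin_iff]
    exact ⟨hseq, Filter.Eventually.of_forall fun m => mem_Ici.mpr (by positivity)⟩
  have h2lim : Tendsto (fun m : ℕ => ρ (upperBox (fun _ : Fin l => (1:ℝ)/(m+1)))) atTop
      (𝓝 1) := by
    have h3 := (ENNReal.continuous_ofReal.tendsto (ψ 0)).comp hψc
    rw [hψ0] at h3
    simp only [ENNReal.ofReal_one] at h3
    apply h3.congr
    intro m
    simp only [Function.comp_apply]
    exact (hvals m).symm
  have hρSpos : ρ Spos = 1 := tendsto_nhds_unique (by exact htend) h2lim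
  have hρuniv : ρ univ = 1 := by
    have e1 : ρ univ = ∫⁻ t in Spos, Dfun t ∂volume := by
      rw [hρap univ MeasurableSet.univ, univ_inter]
    have e2 : ρ Spos = ∫⁻ t in Spos, Dfun t ∂volume := by
      rw [hρap Spos hSposm, inter_self]
    rw [e1, ← e2, hρSpos]
  have hν'univ : ν' univ = 1 := by
    rw [hν'_def, Measure.map_apply hTm MeasurableSet.univ, preimage_univ, hρuniv]
  haveI hν'fin : IsFiniteMeasure ν' := ⟨by rw [hν'univ]; exact ENNReal.one_lt_top⟩
  -- φ 1 = 0
  have hφ1 : φ 1 = 0 := by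
    have h1 : ν (lowerBox (fun _ : Fin l => (1:ℝ))) = 1 := by
      refine le_antisymm prob_le_one ?_
      rw [← hνc]
      exact measure_mono (fun t ht => fun i => (ht i).2)
    have h2 := hν (fun _ => 1) (fun i => ⟨one_pos, le_rfl⟩)
    rw [h1] at h2
    have hS_nonneg : 0 ≤ ∑ _i : Fin l, φ 1 :=
      Finset.sum_nonneg fun i _ => G.xi_nonneg 1 one_pos le_rfl
    have h3 : (1:ℝ) ≤ ψ (∑ _i : Fin l, φ 1) := by
      by_contra h4
      push_neg at h4
      have := ENNReal.ofReal_lt_one.mpr h4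
      rw [← h2] at this
      exact lt_irrefl _ this
    have hS0 : ∑ _i : Fin l, φ 1 = 0 := by
      by_contra h5
      have h6 : 0 < ∑ _i : Fin l, φ 1 := lt_of_le_of_ne hS_nonneg (Ne.symm h5)
      have := hstrict 0 _ le_rfl h6
      rw [hψ0] at this
      linarith
    have h7 : (l:ℝ) * φ 1 = 0 := by
      rw [← hS0, Finset.sum_const, Finset.card_univ, Fintype.card_fin, nsmul_eq_mul]
    rcases mul_eq_zero.mp h7 with h8 | h8
    · exact absurd h8 (by exact_mod_cast hl0)
    · exact h8
  -- null sets for ν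
  have hνcubec : ν (unitCube l)ᶜ = 0 := by
    rw [measure_compl (measurableSet_unitCube l) (measure_ne_top ν _), hνc, measure_univ,
      tsub_self]
  have hofreal_lim : Tendsto (fun m : ℕ => ENNReal.ofReal (1/(m+1))) atTop (𝓝 0) := by
    have h := (ENNReal.continuous_ofReal.tendsto 0).comp tendsto_one_div_add_atTop_nhds_zero_nat
    simpa [Function.comp_def] using h
  have hν_le0 : ∀ i, ν {s : Fin l → ℝ | s i ≤ 0} = 0 := by
    intro i
    have hb : ∀ m : ℕ, ν {s : Fin l → ℝ | s i ≤ 0} ≤ ENNReal.ofReal (1/(m+1)) := by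
      intro m
      set vε : Fin l → ℝ := fun j => if j = i then 1/(m+1) else 1 with hvε
      have hvmem : ∀ j, vε j ∈ Ioc (0:ℝ) 1 := by
        intro j
        simp only [hvε]
        split_ifs
        · constructor
          · positivity
          · rw [div_le_one (by positivity)]; linarith [Nat.cast_nonneg (α := ℝ) m]
        · exact ⟨one_pos, le_rfl⟩
      have hsub : {s : Fin l → ℝ | s i ≤ 0} ⊆ (unitCube l)ᶜ ∪ lowerBox vε := by
        intro s hs
        by_cases hc : s ∈ unitCube l
        · right
          intro j
          simp only [hvε]
          split_ifs with hj
          · subst hj; exact le_trans hs (by positivity)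
          · exact (hc j).2
        · left; exact hc
      calc ν {s : Fin l → ℝ | s i ≤ 0} ≤ ν ((unitCube l)ᶜ ∪ lowerBox vε) := measure_mono hsub
        _ ≤ ν (unitCube l)ᶜ + ν (lowerBox vε) := measure_union_le _ _
        _ = ν (lowerBox vε) := by rw [hνcubec, zero_add]
        _ = ENNReal.ofReal (ψ (∑ j, φ (vε j))) := hν vε hvmem
        _ = ENNReal.ofReal (1/(m+1)) := by
            have hsum : ∑ j, φ (vε j) = φ (1/(m+1)) := by
              rw [Finset.sum_eq_single i]
              · simp [hvε]
              · intro j _ hj; simp [hvε, hj, hφ1]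
              · intro hj; exact absurd (Finset.mem_univ i) hj
            have hle1 : (1:ℝ)/(m+1) ≤ 1 := by
              rw [div_le_one (by positivity)]
              linarith [Nat.cast_nonneg (α := ℝ) m]
            rw [hsum, G.eta_xi _ (by positivity) hle1]
    exact le_zero_iff.mp (ge_of_tendsto' hofreal_lim hb)
  
  have hν_gt1 : ∀ i, ν {s : Fin l → ℝ | 1 < s i} = 0 := by
    intro i
    apply measure_mono_null (fun s hs => ?_) hνcubec
    intro hc
    exact absurd (hc i).2 (not_le.mpr hs)
  have hν_eq1 : ∀ i, ν {s : Fin l → ℝ | s i = 1} = 0 := by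
    intro i
    have hb : ∀ m : ℕ, ν {s : Fin l → ℝ | s i = 1} ≤ ENNReal.ofReal (1/(m+2)) := by
      intro m
      have hmε : (0:ℝ) < 1/(m+2) := by positivity
      have hmε1 : (1:ℝ)/(m+2) ≤ 1 := by
        rw [div_le_one (by positivity)]
        linarith [Nat.cast_nonneg (α := ℝ) m]
      set vε : Fin l → ℝ := fun j => if j = i then 1 - 1/(m+2) else 1 with hvε
      have hvmem : ∀ j, vε j ∈ Ioc (0:ℝ) 1 := by
        intro j
        simp only [hvε]
        split_ifs
        · have h12 : (1:ℝ)/(m+2) ≤ 1/2 := by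
            apply one_div_le_one_div_of_le
            · norm_num
            · linarith [Nat.cast_nonneg (α := ℝ) m]
          constructor <;> [linarith; linarith]
        · exact ⟨one_pos, le_rfl⟩
      have hsub : {s : Fin l → ℝ | s i = 1} ⊆ (lowerBox vε)ᶜ := by
        intro s hs hmem
        have := hmem i
        simp only [hvε, if_pos rfl] at this
        rw [mem_setOf_eq] at hs
        rw [hs] at this
        linarith
      have h12 : (1:ℝ)/(m+2) ≤ 1/2 := by
        apply one_div_le_one_div_of_le
        · norm_num
        · linarith [Nat.cast_nonneg (α := ℝ) m]
      have hlb : ν (lowerBox vε) = ENNReal.ofReal (1 - 1/(m+2)) := by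
        rw [hν vε hvmem]
        have hsum : ∑ j, φ (vε j) = φ (1 - 1/(m+2)) := by
          rw [Finset.sum_eq_single i]
          · simp [hvε]
          · intro j _ hj; simp [hvε, hj, hφ1]
          · intro hj; exact absurd (Finset.mem_univ i) hj
        rw [hsum, G.eta_xi _ (by linarith) (by linarith)]
      calc ν {s : Fin l → ℝ | s i = 1} ≤ ν (lowerBox vε)ᶜ := measure_mono hsub
        _ = 1 - ENNReal.ofReal (1 - 1/(m+2)) := by
            rw [measure_compl (measurableSet_lowerBox vε) (measure_ne_top ν _), measure_univ,
              hlb]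
        _ = ENNReal.ofReal (1/(m+2)) := by
            rw [show (1:ℝ≥0∞) = ENNReal.ofReal 1 from ENNReal.ofReal_one.symm,
              ← ENNReal.ofReal_sub _ (by linarith)]
            norm_num
    have hlim2 : Tendsto (fun m : ℕ => ENNReal.ofReal (1/(m+2))) atTop (𝓝 0) := by
      have h0 : Tendsto (fun m : ℕ => 1/((m:ℝ)+2)) atTop (𝓝 0) := by
        apply squeeze_zero (fun m => by positivity) (fun m => ?_)
          tendsto_one_div_add_atTop_nhds_zero_nat
        apply one_div_le_one_div_of_le (by positivity)
        linarith [Nat.cast_nonneg (α := ℝ) m]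
      have h := (ENNReal.continuous_ofReal.tendsto 0).comp h0
      simpa [Function.comp_def] using h
    exact le_zero_iff.mp (ge_of_tendsto' hlim2 hb)
  -- null sets for ν'
  have hν'_le0 : ∀ i, ν' {s : Fin l → ℝ | s i ≤ 0} = 0 := by
    intro i
    have hms : MeasurableSet {s : Fin l → ℝ | s i ≤ 0} :=
      (isClosed_le (continuous_apply i) continuous_const).measurableSet
    rw [hν'_def, Measure.map_apply hTm hms]
    have hempty : Tψ ⁻¹' {s : Fin l → ℝ | s i ≤ 0} = ∅ := by
      ext t
      simp only [mem_preimage, mem_setOf_eq, hT_def, mem_empty_iff_false, iff_false, not_le]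
      exact hpos _ (le_max_right _ _)
    rw [hempty, measure_empty]
  have hν'_gt1 : ∀ i, ν' {s : Fin l → ℝ | 1 < s i} = 0 := by
    intro i
    have hms : MeasurableSet {s : Fin l → ℝ | 1 < s i} :=
      (isOpen_lt continuous_const (continuous_apply i)).measurableSet
    rw [hν'_def, Measure.map_apply hTm hms]
    have hempty : Tψ ⁻¹' {s : Fin l → ℝ | 1 < s i} = ∅ := by
      ext t
      simp only [mem_preimage, mem_setOf_eq, hT_def, mem_empty_iff_false, iff_false, not_lt]
      have := G.antitoneOn self_mem_Ici (mem_Ici.mpr (le_max_right (t i) 0))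
        (le_max_right (t i) 0)
      rwa [hψ0] at this
    rw [hempty, measure_empty]
  have hν'_eq1 : ∀ i, ν' {s : Fin l → ℝ | s i = 1} = 0 := by
    intro i
    have hms : MeasurableSet {s : Fin l → ℝ | s i = 1} :=
      (isClosed_eq (continuous_apply i) continuous_const).measurableSet
    rw [hν'_def, Measure.map_apply hTm hms, hρap _ (hTm hms)]
    have hempty : (Tψ ⁻¹' {s : Fin l → ℝ | s i = 1}) ∩ Spos = ∅ := by
      ext t
      simp only [mem_inter_iff, mem_preimage, mem_setOf_eq, hT_def, hSpos_def,
        mem_empty_iff_false, iff_false, not_and]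
      intro h1 h2
      have hti := h2 i
      rw [max_eq_left hti.le] at h1
      have := hstrict 0 (t i) le_rfl hti
      rw [hψ0, h1] at this
      exact lt_irrefl _ this
    rw [hempty]
    simp
  -- box agreement
  have hboxes : ∀ v : Fin l → ℝ, ν (lowerBox v) = ν' (lowerBox v) := by
    intro v
    by_cases hv0 : ∃ i, v i ≤ 0
    · obtain ⟨i, hi⟩ := hv0
      have hsub : lowerBox v ⊆ {s : Fin l → ℝ | s i ≤ 0} := fun s hs => le_trans (hs i) hi
      rw [measure_mono_null hsub (hν_le0 i), measure_mono_null hsub (hν'_le0 i)]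
    · push_neg at hv0
      set w : Fin l → ℝ := fun i => min (v i) 1 with hw_def
      have hkey1 : ∀ μ : Measure (Fin l → ℝ), (∀ i, μ {s : Fin l → ℝ | 1 < s i} = 0) →
          μ (lowerBox v) = μ (lowerBox w) := by
        intro μ hμ
        apply le_antisymm
        · have hsub : lowerBox v ⊆ lowerBox w ∪ ⋃ i, {s : Fin l → ℝ | 1 < s i} := by
            intro s hs
            by_cases hall : ∀ i, s i ≤ 1
            · left; exact fun i => le_min (hs i) (hall i)
            · right
              push_neg at hall
              obtain ⟨i, hi⟩ := hall
              exact mem_iUnion.mpr ⟨i, hi⟩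
          calc μ (lowerBox v) ≤ μ (lowerBox w ∪ ⋃ i, {s : Fin l → ℝ | 1 < s i}) :=
              measure_mono hsub
            _ ≤ μ (lowerBox w) + μ (⋃ i, {s : Fin l → ℝ | 1 < s i}) := measure_union_le _ _
            _ = μ (lowerBox w) := by
                rw [measure_iUnion_null (fun i => hμ i), add_zero]
        · exact measure_mono (fun s hs i => le_trans (hs i) (min_le_left _ _))
      set wseq : ℕ → (Fin l → ℝ) := fun m i => min (w i) (1 - 1/(m+2)) with hwseq_def
      have hwseq_mono : Monotone (fun m => lowerBox (wseq m)) := by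
        intro m1 m2 hm s hs i
        refine le_trans (hs i) (min_le_min le_rfl ?_)
        have h1 : (1:ℝ)/(m2+2) ≤ 1/(m1+2) := by
          apply one_div_le_one_div_of_le
          · positivity
          · have : (m1:ℝ) ≤ m2 := Nat.cast_le.mpr hm
            linarith
        linarith
      have hkey2 : ∀ μ : Measure (Fin l → ℝ), (∀ i, μ {s : Fin l → ℝ | s i = 1} = 0) →
          μ (lowerBox w) = μ (⋃ m, lowerBox (wseq m)) := by
        intro μ hμ
        apply le_antisymm
        · have hsub : lowerBox w ⊆ (⋃ m, lowerBox (wseq m)) ∪ ⋃ i, {s : Fin l → ℝ | s i = 1} := by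
            intro s hs
            by_cases hall : ∀ i, s i ≠ 1
            · left
              have hlt1 : ∀ i, s i < 1 :=
                fun i => lt_of_le_of_ne (le_trans (hs i) (min_le_right _ _)) (hall i)
              have hex : ∀ i, ∃ m : ℕ, 1/((m:ℝ)+1) < 1 - s i :=
                fun i => exists_nat_one_div_lt (by linarith [hlt1 i])
              choose f hf using hex
              set N := Finset.univ.sup f with hN_def
              refine mem_iUnion.mpr ⟨N, fun i => le_min (hs i) ?_⟩
              have hfN : (f i : ℝ) + 1 ≤ (N:ℝ) + 2 := by
                have h8 : f i ≤ N := Finset.le_sup (Finset.mem_univ i)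
                have h9 : (f i : ℝ) ≤ (N : ℝ) := Nat.cast_le.mpr h8
                linarith
              have : (1:ℝ)/(N+2) ≤ 1/(f i + 1) :=
                one_div_le_one_div_of_le (by positivity) hfN
              linarith [hf i]
            · right
              push_neg at hall
              obtain ⟨i, hi⟩ := hall
              exact mem_iUnion.mpr ⟨i, hi⟩
          calc μ (lowerBox w) ≤ _ := measure_mono hsub
            _ ≤ μ (⋃ m, lowerBox (wseq m)) + μ (⋃ i, {s : Fin l → ℝ | s i = 1}) :=
              measure_union_le _ _
            _ = μ (⋃ m, lowerBox (wseq m)) := by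
                rw [measure_iUnion_null (fun i => hμ i), add_zero]
        · apply measure_mono
          apply iUnion_subset
          intro m s hs i
          exact le_trans (hs i) (min_le_left _ _)
      have hwseq_mem : ∀ m : ℕ, ∀ i, wseq m i ∈ Ioo (0:ℝ) 1 := by
        intro m i
        have h12 : (1:ℝ)/(m+2) ≤ 1/2 := by
          apply one_div_le_one_div_of_le
          · norm_num
          · linarith [Nat.cast_nonneg (α := ℝ) m]
        have hε : (0:ℝ) < 1/(m+2) := by positivity
        constructor
        · apply lt_min (lt_min (hv0 i) one_pos)
          linarith
        · apply lt_of_le_of_lt (min_le_right _ _)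
          linarith
      have hνw : Tendsto (fun m => ν (lowerBox (wseq m))) atTop
          (𝓝 (ν (⋃ m, lowerBox (wseq m)))) := tendsto_measure_iUnion_atTop hwseq_mono
      have hν'w : Tendsto (fun m => ν' (lowerBox (wseq m))) atTop
          (𝓝 (ν' (⋃ m, lowerBox (wseq m)))) := tendsto_measure_iUnion_atTop hwseq_mono
      have hsame : ∀ m, ν (lowerBox (wseq m)) = ν' (lowerBox (wseq m)) := by
        intro m
        rw [hν (wseq m) (fun i => ⟨(hwseq_mem m i).1, (hwseq_mem m i).2.le⟩),
          hν'box (wseq m) (hwseq_mem m)]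
      have hUeq : ν (⋃ m, lowerBox (wseq m)) = ν' (⋃ m, lowerBox (wseq m)) := by
        apply tendsto_nhds_unique (hνw.congr hsame) hν'w
      rw [hkey1 ν hν_gt1, hkey1 ν' hν'_gt1, hkey2 ν hν_eq1, hkey2 ν' hν'_eq1, hUeq]
  -- the two measures agree
  have hνν' : ν = ν' := by
    apply MeasureTheory.ext_of_generate_finite {S : Set (Fin l → ℝ) | ∃ v, S = lowerBox v}
      (pi_eq_generateFrom_lowerBox l) (isPiSystem_lowerBox l)
    · rintro S ⟨v, rfl⟩
      exact hboxes v
    · rw [measure_univ, hν'univ]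
  
  -- final computation
  intro z hz
  have hinvA : φ (ψ A) = A := hinv A hA_nonneg
  have hinvz : φ (ψ z) = z := hinv z hz
  have hlbm : MeasurableSet (lowerBox x) := measurableSet_lowerBox x
  set a : Fin l → ℝ := fun i => φ (x i) with ha_def
  have hax : ∀ i, 0 < a i := hφx_pos
  have hES : (Tψ ⁻¹' lowerBox x) ∩ Spos = upperBox a :=
    hpre x (fun i => ⟨(hx i).1, (hx i).2⟩)
  set pX : (Fin l → ℝ) → ℝ := fun s =>
    gg ψ l ((∑ i, phiT φ (s i)) + z) / gg ψ l (∑ i, phiT φ (s i)) with hpX_def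
  have hphiTm : Measurable (phiT φ) :=
    measurable_phiT hpos G.xi_nonneg G.eta_xi G.antitoneOn G.strict_anti
  have hggl : Measurable (gg ψ l) := measurable_gg (hcont l hl2')
  have hsum_m : Measurable (fun s : Fin l → ℝ => ∑ i, phiT φ (s i)) :=
    Finset.univ.measurable_sum fun i _ => hphiTm.comp (measurable_pi_apply i)
  have hpXm : Measurable pX := (hggl.comp (hsum_m.add_const z)).div (hggl.comp hsum_m)
  set Gset : Set (Fin l → ℝ) := {s | ∀ i, 0 < s i ∧ s i < 1} with hGset_def
  have hGsetm : MeasurableSet Gset := by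
    have h : Gset = ⋂ i, ({s : Fin l → ℝ | 0 < s i} ∩ {s : Fin l → ℝ | s i < 1}) := by
      ext s; simp [hGset_def, forall_and]
    rw [h]
    exact MeasurableSet.iInter fun i =>
      ((isOpen_lt continuous_const (continuous_apply i)).measurableSet).inter
        ((isOpen_lt (continuous_apply i) continuous_const).measurableSet)
  have hagree : ∀ s ∈ Gset, psiX ψ φ s z = pX s := by
    intro s hs
    have h1 : ∀ i, phiT φ (s i) = φ (s i) := fun i => if_pos ⟨(hs i).1, (hs i).2.le⟩
    have hsum_eq : ∑ i, phiT φ (s i) = ∑ i, φ (s i) :=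
      Finset.sum_congr rfl fun i _ => h1 i
    have hSpos' : 0 < ∑ i, φ (s i) :=
      Finset.sum_pos (fun i _ => hφpos _ (hs i).1 (hs i).2) Finset.univ_nonempty
    simp only [psiX, hpX_def, hsum_eq]
    rw [gg, if_pos (by linarith : (0:ℝ) < (∑ i, φ (s i)) + z), gg, if_pos hSpos']
  set μ₀ := ρ.restrict (Tψ ⁻¹' lowerBox x) with hμ₀_def
  have hrmap : ν'.restrict (lowerBox x) = μ₀.map Tψ := by
    rw [hν'_def, Measure.restrict_map hTm hlbm]
  have hmap_null : (μ₀.map Tψ) Gsetᶜ = 0 := by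
    rw [Measure.map_apply hTm hGsetm.compl, hμ₀_def,
      Measure.restrict_apply (hTm hGsetm.compl),
      hρap _ ((hTm hGsetm.compl).inter (hTm hlbm))]
    have hsub : Tψ ⁻¹' Gsetᶜ ∩ Tψ ⁻¹' lowerBox x ∩ Spos = ∅ := by
      apply eq_empty_iff_forall_notMem.mpr
      rintro t ⟨⟨hnG, hbox⟩, hSp⟩
      apply hnG
      intro i
      refine ⟨hpos _ (le_max_right _ _), ?_⟩
      exact lt_of_le_of_lt (hbox i) (hx i).2
    rw [hsub]
    simp
  have haesm : AEStronglyMeasurable (fun s => psiX ψ φ s z) (μ₀.map Tψ) := by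
    refine ⟨pX, hpXm.stronglyMeasurable, ?_⟩
    rw [Filter.EventuallyEq, ae_iff]
    apply measure_mono_null (fun s hs => ?_) hmap_null
    simp only [mem_setOf_eq] at hs
    intro hGs
    exact hs (hagree s hGs)
  set R : (Fin l → ℝ) → ℝ := fun t => gg ψ l ((∑ i, t i) + z) / gg ψ l (∑ i, t i) with hR_def
  have hsum_m2 : Measurable fun t : Fin l → ℝ => ∑ i, t i :=
    Finset.univ.measurable_sum fun i _ => measurable_pi_apply i
  have hRm : Measurable R := (hggl.comp (hsum_m2.add_const z)).div (hggl.comp hsum_m2)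
  have hsgn_gg : ∀ w : ℝ, 0 ≤ (-1:ℝ)^l * gg ψ l w := by
    intro w
    by_cases hw : (0:ℝ) < w
    · rw [gg, if_pos hw]; exact hsgn l hl2' w hw
    · rw [gg, if_neg hw, mul_zero]
  have hR_nonneg : ∀ t, 0 ≤ R t := by
    intro t
    have hneq : ((-1:ℝ)^l) ≠ 0 := pow_ne_zero _ (by norm_num)
    show 0 ≤ gg ψ l ((∑ i, t i) + z) / gg ψ l (∑ i, t i)
    rw [show gg ψ l ((∑ i, t i) + z) / gg ψ l (∑ i, t i)
        = ((-1:ℝ)^l * gg ψ l ((∑ i, t i) + z)) / ((-1:ℝ)^l * gg ψ l (∑ i, t i)) from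
      (mul_div_mul_left _ _ hneq).symm]
    exact div_nonneg (hsgn_gg _) (hsgn_gg _)
  have hμ₀Spos : ∀ᵐ t ∂μ₀, t ∈ Spos := by
    rw [ae_iff]
    have hcompl : {t : Fin l → ℝ | ¬ t ∈ Spos} = Sposᶜ := rfl
    rw [hcompl, hμ₀_def, Measure.restrict_apply hSposm.compl,
      hρap _ (hSposm.compl.inter (hTm hlbm))]
    have hsub : Sposᶜ ∩ Tψ ⁻¹' lowerBox x ∩ Spos = ∅ := by
      apply eq_empty_iff_forall_notMem.mpr
      rintro t ⟨⟨h1, _⟩, h2⟩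
      exact h1 h2
    rw [hsub]
    simp
  have hae2 : (fun t => psiX ψ φ (Tψ t) z) =ᵐ[μ₀] R := by
    filter_upwards [hμ₀Spos] with t ht
    have h2 : ∀ i, φ (Tψ t i) = t i := by
      intro i
      have h1 : Tψ t i = ψ (t i) := by
        simp only [hT_def]
        rw [max_eq_left (ht i).le]
      rw [h1]
      exact hinv _ (ht i).le
    have hsum3 : ∑ i, φ (Tψ t i) = ∑ i, t i := Finset.sum_congr rfl fun i _ => h2 i
    have hSpos3 : 0 < ∑ i, t i := Finset.sum_pos (fun i _ => ht i) Finset.univ_nonempty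
    simp only [psiX, hR_def, hsum3]
    rw [gg, if_pos (by linarith : (0:ℝ) < (∑ i, t i) + z), gg, if_pos hSpos3]
  have hμ₀eq : μ₀ = (volume.restrict (upperBox a)).withDensity Dfun := by
    rw [hμ₀_def, hρ_def, restrict_withDensity (hTm hlbm),
      Measure.restrict_restrict (hTm hlbm), hES]
  have hptwise : ∀ t ∈ upperBox a, (Dfun * fun t => ENNReal.ofReal (R t)) t
      = ENNReal.ofReal ((-1:ℝ)^l * gg ψ l (z + ∑ i, t i)) := by
    intro t ht
    have hS : 0 < ∑ i, t i :=
      lt_of_lt_of_le (Finset.sum_pos (fun i _ => hax i) Finset.univ_nonempty)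
        (Finset.sum_le_sum fun i _ => mem_upperBox.mp ht i)
    have hzS : (0:ℝ) < z + ∑ i, t i := by linarith
    have hcomm : (∑ i, t i) + z = z + ∑ i, t i := add_comm _ _
    simp only [Pi.mul_apply, hD_def, hR_def, hcomm]
    have hden_nn : 0 ≤ (-1:ℝ)^l * gg ψ l (∑ i, t i) := hsgn_gg _
    rcases eq_or_lt_of_le hden_nn with hzero | hpos'
    · have hgg0 : (-1:ℝ)^l * gg ψ l (∑ i, t i) = 0 := hzero.symm
      have hval0 : (-1:ℝ)^l * gg ψ l (z + ∑ i, t i) = 0 := by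
        have hle := hanti l hl2' (mem_Ioi.mpr hS) (mem_Ioi.mpr hzS)
          (by linarith : ∑ i, t i ≤ z + ∑ i, t i)
        have hge := hsgn l hl2' _ hzS
        have hgg0' : (-1:ℝ)^l * iteratedDeriv l ψ (∑ i, t i) = 0 := by
          rw [gg, if_pos hS] at hgg0
          exact hgg0
        rw [gg, if_pos hzS]
        simp only at hle
        linarith
      rw [ENNReal.ofReal_eq_zero.mpr (le_of_eq hgg0), zero_mul, hval0, ENNReal.ofReal_zero]
    · have hggne : gg ψ l (∑ i, t i) ≠ 0 := by
        intro h0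
        rw [h0, mul_zero] at hpos'
        exact lt_irrefl _ hpos'
      rw [← ENNReal.ofReal_mul hden_nn]
      congr 1
      field_simp
  have hI : ∫ s in lowerBox x, psiX ψ φ s z ∂ν = ψ (z + A) := by
    rw [hνν']
    calc ∫ s in lowerBox x, psiX ψ φ s z ∂ν'
        = ∫ s, psiX ψ φ s z ∂(μ₀.map Tψ) := by rw [← hrmap]
      _ = ∫ t, psiX ψ φ (Tψ t) z ∂μ₀ := integral_map hTm.aemeasurable haesm
      _ = ∫ t, R t ∂μ₀ := integral_congr_ae hae2
      _ = (∫⁻ t, ENNReal.ofReal (R t) ∂μ₀).toReal :=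
          integral_eq_lintegral_of_nonneg_ae (ae_of_all _ hR_nonneg)
            hRm.aestronglyMeasurable
      _ = ψ (z + A) := by
          rw [hμ₀eq, lintegral_withDensity_eq_lintegral_mul _ hDm hRm.ennreal_ofReal,
            setLIntegral_congr_fun (measurableSet_upperBox a) hptwise,
            ← lintegral_indicator (measurableSet_upperBox a),
            IT_aux hder hsgn hten hcont l hl2' z hz (fun h0 => absurd h0 hl0) a hax,
            ENNReal.toReal_ofReal (G.nonneg _ (by linarith))]
  refine ⟨by rw [hinvA, hinvz, add_comm], ?_⟩
  rw [hinvA, hI, div_eq_mul_inv, mul_comm]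
end
end

section
/- Let C, C₁, C₂, … be strict d-dimensional Archimedean copulas with strict, normalized generators ψ, ψ₁, ψ₂, … (normalized meaning ψ(1) = ψ_n(1) = 1/2). If (C_n) converges pointwise to C on [0,1]^d, then for every ℓ ∈ {1,…,d−2} and every fixed x ∈ (0,1)^ℓ the conditional copulas converge pointwise: lim_{n→∞} C_nˣ(u) = Cˣ(u) for every u ∈ [0,1]^{d−ℓ}; moreover the conditional generators converge uniformly: ψ_nˣ → ψˣ uniformly on [0,∞). -/
open MeasureTheory ProbabilityTheory Set Filter Topology
open scoped ENNReal

noncomputable section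
attribute [local instance] Classical.propDecidable

/-! ### Auxiliary development -/

/-- basics of local iterated derivatives -/
lemma iteratedDerivWithin_eq_iteratedDeriv' {f : ℝ → ℝ} {s : Set ℝ} (hs : IsOpen s)
    {x : ℝ} (hx : x ∈ s) (n : ℕ) :
    iteratedDerivWithin n f s x = iteratedDeriv n f x := by
  rw [iteratedDerivWithin, iteratedDeriv, iteratedFDerivWithin_of_isOpen n hs hx]

lemma contDiffAt_continuousAt_iteratedDeriv {f : ℝ → ℝ} {N : ℕ} {z : ℝ}
    (h : ContDiffAt ℝ (N : ℕ∞) f z) {m : ℕ} (hm : m ≤ N) :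
    ContinuousAt (iteratedDeriv m f) z := by
  obtain ⟨u, hu, hcd⟩ := h.contDiffOn (le_refl _) (by simp)
  obtain ⟨t, hts, ht, hzt⟩ := mem_nhds_iff.1 hu
  have hcd' : ContDiffOn ℝ (N : ℕ∞) f t := hcd.mono hts
  have hC := ((contDiffOn_iff_continuousOn_differentiableOn_deriv ht.uniqueDiffOn).1 hcd').1
      m (by exact_mod_cast hm)
  have : ContinuousOn (iteratedDeriv m f) t := by
    intro y hy
    exact ((hC y hy).congr (fun w hw => (iteratedDerivWithin_eq_iteratedDeriv' ht hw m).symm)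
      (iteratedDerivWithin_eq_iteratedDeriv' ht hy m).symm)
  exact this.continuousAt (ht.mem_nhds hzt)

lemma contDiffAt_hasDerivAt_iteratedDeriv {f : ℝ → ℝ} {N : ℕ} {z : ℝ}
    (h : ContDiffAt ℝ (N : ℕ∞) f z) {m : ℕ} (hm : m < N) :
    HasDerivAt (iteratedDeriv m f) (iteratedDeriv (m + 1) f z) z := by
  obtain ⟨u, hu, hcd⟩ := h.contDiffOn (le_refl _) (by simp)
  obtain ⟨t, hts, ht, hzt⟩ := mem_nhds_iff.1 hu
  have hcd' : ContDiffOn ℝ (N : ℕ∞) f t := hcd.mono hts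
  have hD := hcd'.differentiableOn_iteratedDerivWithin (m := m)
      (by exact_mod_cast hm) ht.uniqueDiffOn
  have hDA : DifferentiableAt ℝ (iteratedDeriv m f) z := by
    have := (hD z hzt).differentiableAt (ht.mem_nhds hzt)
    refine this.congr_of_eventuallyEq ?_
    filter_upwards [ht.mem_nhds hzt] with w hw
    exact (iteratedDerivWithin_eq_iteratedDeriv' ht hw m).symm
  have := hDA.hasDerivAt
  rwa [show deriv (iteratedDeriv m f) z = iteratedDeriv (m+1) f z by
    rw [iteratedDeriv_succ]] at this

lemma slope_mvt {f f' : ℝ → ℝ} {a b : ℝ} (hab : a < b)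
    (hc : ∀ w ∈ Icc a b, ContinuousAt f w)
    (hd : ∀ w ∈ Ioo a b, HasDerivAt f (f' w) w) :
    ∃ c ∈ Ioo a b, f b - f a = f' c * (b - a) := by
  obtain ⟨c, hc', he⟩ := exists_hasDerivAt_eq_slope f f' hab
    (fun w hw => (hc w hw).continuousWithinAt) hd
  refine ⟨c, hc', ?_⟩
  rw [he, div_mul_cancel₀]
  exact sub_ne_zero.2 hab.ne'

lemma neg_one_sq' (i : ℕ) : ((-1:ℝ)^i) * ((-1:ℝ)^i) = 1 := by
  rcases neg_one_pow_eq_or ℝ i with h | h <;> rw [h] <;> norm_num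
namespace SG

variable {d : ℕ} {ψ φ : ℝ → ℝ}

lemma psi_pos (hg : IsStrictGenerator d ψ φ) {z : ℝ} (hz : 0 ≤ z) : 0 < ψ z := hg.2.1 z hz

lemma phi_psi (hg : IsStrictGenerator d ψ φ) {z : ℝ} (hz : 0 ≤ z) : φ (ψ z) = z := hg.2.2 z hz

lemma psi_zero (hg : IsStrictGenerator d ψ φ) : ψ 0 = 1 := hg.1.at_zero

lemma psi_le_one (hg : IsStrictGenerator d ψ φ) {z : ℝ} (hz : 0 ≤ z) : ψ z ≤ 1 := by
  have := hg.1.antitoneOn (self_mem_Ici) hz hz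
  rwa [hg.1.at_zero] at this

lemma psi_lt (hg : IsStrictGenerator d ψ φ) {z₁ z₂ : ℝ} (h1 : 0 ≤ z₁) (h12 : z₁ < z₂) :
    ψ z₂ < ψ z₁ :=
  hg.1.strict_anti z₁ z₂ h1 h12 (hg.2.1 z₂ (le_trans h1 h12.le))

lemma psi_antitone (hg : IsStrictGenerator d ψ φ) {z₁ z₂ : ℝ} (h1 : 0 ≤ z₁) (h12 : z₁ ≤ z₂) :
    ψ z₂ ≤ ψ z₁ := hg.1.antitoneOn h1 (le_trans h1 h12) h12

lemma phi_nonneg (hg : IsStrictGenerator d ψ φ) {t : ℝ} (h0 : 0 < t) (h1 : t ≤ 1) : 0 ≤ φ t :=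
  hg.1.xi_nonneg t h0 h1

lemma psi_phi (hg : IsStrictGenerator d ψ φ) {t : ℝ} (h0 : 0 < t) (h1 : t ≤ 1) : ψ (φ t) = t :=
  hg.1.eta_xi t h0 h1

lemma phi_one (hg : IsStrictGenerator d ψ φ) : φ 1 = 0 := by
  have := hg.2.2 0 le_rfl
  rwa [hg.1.at_zero] at this

lemma phi_pos (hg : IsStrictGenerator d ψ φ) {t : ℝ} (h0 : 0 < t) (h1 : t < 1) : 0 < φ t := by
  rcases eq_or_lt_of_le (hg.1.xi_nonneg t h0 h1.le) with h | h
  · exfalso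
    have := hg.1.eta_xi t h0 h1.le
    rw [← h, hg.1.at_zero] at this
    exact absurd this.symm (ne_of_lt h1)
  · exact h

/-- `φ` reverses strictly. -/
lemma phi_lt (hg : IsStrictGenerator d ψ φ) {t₁ t₂ : ℝ} (h0 : 0 < t₁) (h12 : t₁ < t₂)
    (h1 : t₂ ≤ 1) : φ t₂ < φ t₁ := by
  by_contra hle
  push_neg at hle
  have := hg.1.antitoneOn (mem_Ici.2 (hg.1.xi_nonneg t₁ h0 (le_of_lt (lt_of_lt_of_le h12 h1))))
    (mem_Ici.2 (le_trans (hg.1.xi_nonneg t₁ h0 (le_of_lt (lt_of_lt_of_le h12 h1))) hle)) hle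
  rw [hg.1.eta_xi t₂ (h0.trans h12) h1, hg.1.eta_xi t₁ h0 (le_of_lt (lt_of_lt_of_le h12 h1))]
    at this
  exact absurd h12 (not_lt.2 this)

/-- key inversion bounds : if `t > ψ a` then `φ t < a`. -/
lemma phi_lt_of_gt_psi (hg : IsStrictGenerator d ψ φ) {t a : ℝ} (h0 : 0 < t) (h1 : t ≤ 1)
    (ha : 0 ≤ a) (h : ψ a < t) : φ t < a := by
  by_contra hle
  push_neg at hle
  have := hg.1.antitoneOn (mem_Ici.2 ha) (mem_Ici.2 (le_trans ha hle)) hle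
  rw [hg.1.eta_xi t h0 h1] at this
  exact absurd h (not_lt.2 this)

lemma phi_gt_of_lt_psi (hg : IsStrictGenerator d ψ φ) {t a : ℝ} (h0 : 0 < t)
    (h1 : t ≤ 1) (ha : 0 ≤ a) (h : t < ψ a) : a < φ t := by
  by_contra hle
  push_neg at hle
  have := hg.1.antitoneOn (mem_Ici.2 (hg.1.xi_nonneg t h0 h1)) (mem_Ici.2 ha) hle
  rw [hg.1.eta_xi t h0 h1] at this
  exact absurd h (not_lt.2 this)

/-- continuity of `φ` on `(0,1]`. -/
lemma phi_continuousOn (hg : IsStrictGenerator d ψ φ) :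
    ContinuousOn φ (Ioc (0:ℝ) 1) := by
  intro t0 ht0
  rw [Metric.continuousWithinAt_iff]
  intro ε hε
  have hφ0 : 0 ≤ φ t0 := hg.1.xi_nonneg t0 ht0.1 ht0.2
  have hψφ : ψ (φ t0) = t0 := hg.1.eta_xi t0 ht0.1 ht0.2
  -- lower window : t > ψ (φ t0 + ε) forces φ t < φ t0 + ε
  have hlow : ψ (φ t0 + ε) < t0 := by
    have := psi_lt hg hφ0 (show φ t0 < φ t0 + ε by linarith)
    rwa [hψφ] at this
  by_cases hc : φ t0 - ε < 0
  · -- only the upper window is needed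
    refine ⟨t0 - ψ (φ t0 + ε), by linarith, ?_⟩
    intro t ht hd
    rw [Real.dist_eq] at hd ⊢
    have h1 : ψ (φ t0 + ε) < t := by
      have := abs_lt.1 hd
      linarith
    have h2 : φ t < φ t0 + ε := phi_lt_of_gt_psi hg ht.1 ht.2 (by linarith) h1
    have h3 : 0 ≤ φ t := hg.1.xi_nonneg t ht.1 ht.2
    rw [abs_lt]; constructor <;> linarith
  · push_neg at hc
    have hup : t0 < ψ (φ t0 - ε) := by
      have := psi_lt hg hc (show φ t0 - ε < φ t0 by linarith)
      rwa [hψφ] at this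
    refine ⟨min (t0 - ψ (φ t0 + ε)) (ψ (φ t0 - ε) - t0), by
      apply lt_min <;> linarith, ?_⟩
    intro t ht hd
    rw [Real.dist_eq] at hd ⊢
    have hd' := abs_lt.1 hd
    have hmin1 := min_le_left (t0 - ψ (φ t0 + ε)) (ψ (φ t0 - ε) - t0)
    have hmin2 := min_le_right (t0 - ψ (φ t0 + ε)) (ψ (φ t0 - ε) - t0)
    have h1 : ψ (φ t0 + ε) < t := by linarith
    have h2 : t < ψ (φ t0 - ε) := by linarith
    have h3 : φ t < φ t0 + ε := phi_lt_of_gt_psi hg ht.1 ht.2 (by linarith) h1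
    have h4 : φ t0 - ε < φ t := phi_gt_of_lt_psi hg ht.1 ht.2 hc h2
    rw [abs_lt]; constructor <;> linarith

lemma psi_continuousAt (hg : IsStrictGenerator d ψ φ) {z : ℝ} (hz : 0 < z) :
    ContinuousAt ψ z :=
  hg.1.continuousOn.continuousAt (Ici_mem_nhds hz)


/-- iterated derivative: derivative step. -/
lemma hasDerivAt_iter (hg : IsStrictGenerator d ψ φ) {m : ℕ} (hm : m < d - 2)
    {z : ℝ} (hz : 0 < z) :
    HasDerivAt (iteratedDeriv m ψ) (iteratedDeriv (m + 1) ψ z) z :=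
  contDiffAt_hasDerivAt_iteratedDeriv (hg.1.smooth z hz) hm

lemma continuousAt_iter (hg : IsStrictGenerator d ψ φ) {m : ℕ} (hm : m ≤ d - 2)
    {z : ℝ} (hz : 0 < z) : ContinuousAt (iteratedDeriv m ψ) z :=
  contDiffAt_continuousAt_iteratedDeriv (hg.1.smooth z hz) hm

/-- the signed iterated derivatives are antitone on `(0,∞)`. -/
lemma signed_antitoneOn (hg : IsStrictGenerator d ψ φ) {j : ℕ} (hj1 : 1 ≤ j) (hj2 : j ≤ d - 2) :
    AntitoneOn (fun z => (-1:ℝ)^j * iteratedDeriv j ψ z) (Ioi 0) := by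
  rcases eq_or_lt_of_le hj2 with he | hlt
  · rw [he]; exact hg.1.top_antitone
  · apply antitoneOn_of_deriv_nonpos (convex_Ioi 0)
    · intro w hw
      exact (continuousAt_const.mul (continuousAt_iter hg hj2 hw)).continuousWithinAt
    · intro w hw
      rw [interior_Ioi] at hw
      exact (((hasDerivAt_iter hg hlt hw).const_mul ((-1:ℝ)^j)).differentiableAt).differentiableWithinAt
    · intro w hw
      rw [interior_Ioi] at hw
      have hD := (hasDerivAt_iter hg hlt hw).const_mul ((-1:ℝ)^j)
      rw [hD.deriv]
      have h := hg.1.alt_sign (j+1) hlt w hw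
      have hr : (-1:ℝ)^(j+1) * iteratedDeriv (j+1) ψ w
          = -((-1:ℝ)^j * iteratedDeriv (j+1) ψ w) := by rw [pow_succ]; ring
      rw [hr] at h
      linarith

/-- the signed iterated derivatives are strictly positive on `(0,∞)`. -/
lemma signed_pos (hg : IsStrictGenerator d ψ φ) :
    ∀ j, j ≤ d - 2 → ∀ z : ℝ, 0 < z → 0 < (-1:ℝ)^j * iteratedDeriv j ψ z := by
  intro j
  induction j with
  | zero =>
    intro _ z hz
    simpa [iteratedDeriv_zero] using hg.2.1 z hz.le
  | succ i IH =>
    intro hj z hz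
    have hnn := hg.1.alt_sign (i+1) hj z hz
    rcases eq_or_lt_of_le hnn with heq | h
    swap
    · exact h
    exfalso
    -- the signed (i+1)-derivative vanishes at z, hence on [z,∞)
    have hzero : ∀ w, z ≤ w → iteratedDeriv (i+1) ψ w = 0 := by
      intro w hw
      have h1 : (-1:ℝ)^(i+1) * iteratedDeriv (i+1) ψ w ≤ 0 := by
        have := signed_antitoneOn hg (Nat.succ_le_succ (Nat.zero_le i)) hj
          (mem_Ioi.2 hz) (mem_Ioi.2 (lt_of_lt_of_le hz hw)) hw
        simpa [← heq] using this
      have h2 := hg.1.alt_sign (i+1) hj w (lt_of_lt_of_le hz hw)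
      have h3 : (-1:ℝ)^(i+1) * iteratedDeriv (i+1) ψ w = 0 := le_antisymm h1 h2
      exact (mul_eq_zero.1 h3).resolve_left (pow_ne_zero _ (by norm_num))
    -- hence the i-th derivative is constant on [z,∞)
    have hconst : ∀ w, z ≤ w → iteratedDeriv i ψ w = iteratedDeriv i ψ z := by
      intro w hw
      rcases eq_or_lt_of_le hw with rfl | hlt
      · rfl
      obtain ⟨c, hc, he⟩ := slope_mvt (f := iteratedDeriv i ψ)
        (f' := fun u => iteratedDeriv (i+1) ψ u) hlt
        (fun u hu => continuousAt_iter hg (by omega) (lt_of_lt_of_le hz hu.1))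
        (fun u hu => hasDerivAt_iter hg (by omega) (lt_trans hz hu.1))
      rw [hzero c hc.1.le] at he
      linarith
    have hγpos : 0 < (-1:ℝ)^i * iteratedDeriv i ψ z := IH (by omega) z hz
    rcases i with _ | i'
    · -- ψ is constant on [z,∞), contradicting strict decrease
      have h1 := hconst (z+1) (by linarith)
      rw [iteratedDeriv_zero] at h1
      have h2 := psi_lt hg hz.le (show z < z + 1 by linarith)
      rw [h1] at h2
      exact lt_irrefl _ h2
    · -- the (i')-th signed derivative becomes negative : contradiction
      set v := iteratedDeriv (i'+1) ψ z with hv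
      have key : ∀ Z, z < Z →
          iteratedDeriv i' ψ Z - iteratedDeriv i' ψ z = v * (Z - z) := by
        intro Z hZ
        obtain ⟨c, hc, he⟩ := slope_mvt (f := iteratedDeriv i' ψ)
          (f' := fun u => iteratedDeriv (i'+1) ψ u) hZ
          (fun u hu => continuousAt_iter hg (by omega) (lt_of_lt_of_le hz hu.1))
          (fun u hu => hasDerivAt_iter hg (by omega) (lt_trans hz hu.1))
        rw [hconst c hc.1.le] at he
        exact he
      have hBnn : 0 ≤ (-1:ℝ)^i' * iteratedDeriv i' ψ z := hg.1.alt_sign i' (by omega) z hz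
      have hne : ((-1:ℝ)^(i'+1) * v) ≠ 0 := ne_of_gt hγpos
      have hQpos : 0 < ((-1:ℝ)^i' * iteratedDeriv i' ψ z + 1) / ((-1:ℝ)^(i'+1) * v) :=
        div_pos (by linarith) hγpos
      set Q := ((-1:ℝ)^i' * iteratedDeriv i' ψ z + 1) / ((-1:ℝ)^(i'+1) * v) with hQ
      have hZz : z < z + Q := by linarith
      have hkey := key (z + Q) hZz
      have halt := hg.1.alt_sign i' (by omega) (z + Q) (lt_trans hz hZz)
      have h2 : (-1:ℝ)^i' * iteratedDeriv i' ψ (z + Q)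
          = (-1:ℝ)^i' * iteratedDeriv i' ψ z + ((-1:ℝ)^i' * v) * Q := by
        linear_combination ((-1:ℝ)^i') * hkey
      have h3 : ((-1:ℝ)^i' * v) = -((-1:ℝ)^(i'+1) * v) := by rw [pow_succ]; ring
      have h4 : ((-1:ℝ)^(i'+1) * v) * Q = (-1:ℝ)^i' * iteratedDeriv i' ψ z + 1 := by
        rw [hQ]; field_simp; exact div_self (right_ne_zero_of_mul hne)
      rw [h3] at h2
      linarith [halt, h2, h4]

/-- iterated derivatives tend to 0 at infinity. -/
lemma iter_tendsto_zero (hg : IsStrictGenerator d ψ φ) :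
    ∀ j, j ≤ d - 2 → Tendsto (iteratedDeriv j ψ) atTop (nhds 0) := by
  intro j hj
  rcases j with _ | i
  · rw [iteratedDeriv_zero]; exact hg.1.tendsto_zero
  · have hsmall : ∀ ε : ℝ, 0 < ε → ∃ z : ℝ, 0 < z ∧
        (-1:ℝ)^(i+1) * iteratedDeriv (i+1) ψ z < ε := by
      intro ε hε
      by_contra hcon
      push_neg at hcon
      have hBnn : 0 ≤ (-1:ℝ)^i * iteratedDeriv i ψ 1 := hg.1.alt_sign i (by omega) 1 one_pos
      have hq : 0 < ((-1:ℝ)^i * iteratedDeriv i ψ 1 + 1)/ε := div_pos (by linarith) hε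
      have hZ : (1:ℝ) < 1 + ((-1:ℝ)^i * iteratedDeriv i ψ 1 + 1)/ε := by linarith
      obtain ⟨c, hc, he⟩ := slope_mvt (f := iteratedDeriv i ψ)
        (f' := fun u => iteratedDeriv (i+1) ψ u) hZ
        (fun u hu => continuousAt_iter hg (by omega) (lt_of_lt_of_le one_pos hu.1))
        (fun u hu => hasDerivAt_iter hg (by omega) (lt_trans one_pos hu.1))
      have hgc := hcon c (lt_trans one_pos hc.1)
      have halt := hg.1.alt_sign i (by omega) (1 + ((-1:ℝ)^i * iteratedDeriv i ψ 1 + 1)/ε)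
        (by linarith)
      have h2 : (-1:ℝ)^i * iteratedDeriv i ψ (1 + ((-1:ℝ)^i * iteratedDeriv i ψ 1 + 1)/ε)
          = (-1:ℝ)^i * iteratedDeriv i ψ 1
            + ((-1:ℝ)^i * iteratedDeriv (i+1) ψ c) * (((-1:ℝ)^i * iteratedDeriv i ψ 1 + 1)/ε) := by
        linear_combination ((-1:ℝ)^i) * he
      have h3 : ((-1:ℝ)^i * iteratedDeriv (i+1) ψ c)
          = -((-1:ℝ)^(i+1) * iteratedDeriv (i+1) ψ c) := by rw [pow_succ]; ring
      rw [h3] at h2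
      have h4 : ((-1:ℝ)^(i+1) * iteratedDeriv (i+1) ψ c)
            * (((-1:ℝ)^i * iteratedDeriv i ψ 1 + 1)/ε)
          ≥ ε * (((-1:ℝ)^i * iteratedDeriv i ψ 1 + 1)/ε) :=
        mul_le_mul_of_nonneg_right hgc hq.le
      have h5 : ε * (((-1:ℝ)^i * iteratedDeriv i ψ 1 + 1)/ε)
          = (-1:ℝ)^i * iteratedDeriv i ψ 1 + 1 := by field_simp
      rw [h5] at h4
      linarith
    rw [Metric.tendsto_atTop]
    intro ε hε
    obtain ⟨z0, hz0, hz0s⟩ := hsmall ε hε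
    refine ⟨z0, fun z hz => ?_⟩
    have hz' : 0 < z := lt_of_lt_of_le hz0 hz
    have hmono := signed_antitoneOn hg (Nat.succ_le_succ (Nat.zero_le i)) hj
      (mem_Ioi.2 hz0) (mem_Ioi.2 hz') hz
    have hnn := hg.1.alt_sign (i+1) hj z hz'
    have hmono' : (-1:ℝ)^(i+1) * iteratedDeriv (i+1) ψ z
        ≤ (-1:ℝ)^(i+1) * iteratedDeriv (i+1) ψ z0 := hmono
    rw [Real.dist_eq, sub_zero]
    rcases neg_one_pow_eq_or ℝ (i+1) with h1 | h1 <;> rw [h1] at hmono' hnn hz0s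
    · rw [abs_of_nonneg (by linarith)]
      simp only [one_mul] at hmono' hz0s ⊢
      linarith
    · rw [abs_of_nonpos (by linarith)]
      linarith
/-- strict decrease of signed derivatives. -/
lemma signed_strictAnti (hg : IsStrictGenerator d ψ φ) {j : ℕ} (hj1 : 1 ≤ j) (hj2 : j ≤ d - 2)
    {a b : ℝ} (ha : 0 < a) (hab : a < b) :
    (-1:ℝ)^j * iteratedDeriv j ψ b < (-1:ℝ)^j * iteratedDeriv j ψ a := by
  have hb : 0 < b := lt_trans ha hab
  have hle := signed_antitoneOn hg hj1 hj2 (mem_Ioi.2 ha) (mem_Ioi.2 hb) hab.le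
  rcases eq_or_lt_of_le hle with heq | h
  swap
  · exact h
  exfalso
  have heqb : (-1:ℝ)^j * iteratedDeriv j ψ b = (-1:ℝ)^j * iteratedDeriv j ψ a := heq
  rcases eq_or_lt_of_le hj2 with hetop | hlt
  · -- top case: use convexity
    have hconv : ConvexOn ℝ (Ioi 0) (fun z => (-1:ℝ)^j * iteratedDeriv j ψ z) := by
      rw [hetop]; exact hg.1.top_convex
    have hpos := signed_pos hg j hj2 a ha
    have hmin : ∀ z, b < z →
        (-1:ℝ)^j * iteratedDeriv j ψ b ≤ (-1:ℝ)^j * iteratedDeriv j ψ z := by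
      intro z hbz
      have hs := hconv.slope_mono_adjacent (mem_Ioi.2 ha) (mem_Ioi.2 (lt_trans hb hbz)) hab hbz
      have e1 : ((-1:ℝ)^j * iteratedDeriv j ψ b - (-1:ℝ)^j * iteratedDeriv j ψ a) / (b - a)
          = 0 := by rw [heqb]; simp
      rw [e1] at hs
      have := mul_le_mul_of_nonneg_right hs (le_of_lt (sub_pos.2 hbz))
      rw [zero_mul, div_mul_cancel₀ _ (sub_ne_zero.2 hbz.ne')] at this
      linarith
    have htend : Tendsto (fun z => (-1:ℝ)^j * iteratedDeriv j ψ z) atTop (nhds 0) := by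
      have := (iter_tendsto_zero hg j hj2).const_mul ((-1:ℝ)^j)
      simpa using this
    have hposb : (0:ℝ) < (-1:ℝ)^j * iteratedDeriv j ψ b := by rw [heqb]; exact hpos
    have hev := htend.eventually (gt_mem_nhds hposb)
    obtain ⟨z, hz1, hz2⟩ := (hev.and (eventually_gt_atTop b)).exists
    exact absurd (hmin z hz2) (not_le.2 hz1)
  · -- interior case: MVT with strictly negative derivative
    obtain ⟨c, hc, he⟩ := slope_mvt (f := iteratedDeriv j ψ)
      (f' := fun u => iteratedDeriv (j+1) ψ u) hab
      (fun u hu => continuousAt_iter hg hj2 (lt_of_lt_of_le ha hu.1))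
      (fun u hu => hasDerivAt_iter hg hlt (lt_trans ha hu.1))
    have hpos := signed_pos hg (j+1) hlt c (lt_trans ha hc.1)
    have h2 : (-1:ℝ)^j * iteratedDeriv j ψ b - (-1:ℝ)^j * iteratedDeriv j ψ a
        = ((-1:ℝ)^j * iteratedDeriv (j+1) ψ c) * (b - a) := by
      linear_combination ((-1:ℝ)^j) * he
    have h3 : ((-1:ℝ)^j * iteratedDeriv (j+1) ψ c)
        = -((-1:ℝ)^(j+1) * iteratedDeriv (j+1) ψ c) := by rw [pow_succ]; ring
    rw [h3, heqb] at h2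
    nlinarith [mul_pos hpos (sub_pos.2 hab)]

/-! ### density of `2^j 3^m` -/

lemma exp_int_mul_log {c : ℝ} (hc : 0 < c) (j : ℤ) :
    Real.exp ((j:ℝ) * Real.log c) = c ^ j := by
  rw [← Real.log_zpow, Real.exp_log (zpow_pos hc _)]

lemma no_pow23 : ∀ q p : ℤ, 0 < q → 0 < p → (2:ℝ)^q = 3^p → False := by
  intro q p hq hp he
  lift q to ℕ using hq.le with Q
  lift p to ℕ using hp.le with P
  rw [zpow_natCast, zpow_natCast] at he
  have hQ : 2^Q = 3^P := by exact_mod_cast he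
  have h2 : 2 ∣ 2^Q := dvd_pow_self 2 (by exact_mod_cast hq.ne')
  rw [hQ] at h2
  have := Nat.Prime.dvd_of_dvd_pow Nat.prime_two h2
  norm_num at this

lemma dense_pow23 {a b : ℝ} (ha : 0 < a) (hab : a < b) :
    ∃ j m : ℤ, a < 2^j * 3^m ∧ (2:ℝ)^j * 3^m < b := by
  have hl2 : (0:ℝ) < Real.log 2 := Real.log_pos (by norm_num)
  have hl3 : (0:ℝ) < Real.log 3 := Real.log_pos (by norm_num)
  set S : AddSubgroup ℝ := AddSubgroup.closure {Real.log 2, Real.log 3} with hS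
  have hdense : Dense (S : Set ℝ) := by
    rcases S.dense_or_cyclic with h | ⟨c, hc⟩
    · exact h
    · exfalso
      have h2 : Real.log 2 ∈ S := AddSubgroup.subset_closure (by simp)
      have h3 : Real.log 3 ∈ S := AddSubgroup.subset_closure (by simp)
      rw [hc, AddSubgroup.mem_closure_singleton] at h2 h3
      obtain ⟨p, hp⟩ := h2
      obtain ⟨q, hq⟩ := h3
      have hp0 : p ≠ 0 := by rintro rfl; simp at hp; linarith
      have hq0 : q ≠ 0 := by rintro rfl; simp at hq; linarith
      have key : (q:ℝ) * Real.log 2 = (p:ℝ) * Real.log 3 := by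
        rw [← hp, ← hq]
        push_cast [zsmul_eq_mul]
        ring
      have keq : (2:ℝ)^q = (3:ℝ)^p := by
        have key2 : Real.log ((2:ℝ)^q) = Real.log ((3:ℝ)^p) := by
          rw [Real.log_zpow, Real.log_zpow, key]
        have := congrArg Real.exp key2
        rwa [Real.exp_log (zpow_pos (by norm_num) _),
          Real.exp_log (zpow_pos (by norm_num) _)] at this
      rcases lt_trichotomy q 0 with hqn | hqz | hqp
      · -- then p < 0 as well
        have hpn : p < 0 := by
          by_contra hge
          push_neg at hge
          have hple : (p:ℝ) * Real.log 3 ≥ 0 :=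
            mul_nonneg (by exact_mod_cast hge) hl3.le
          have : (q:ℝ) * Real.log 2 < 0 :=
            mul_neg_of_neg_of_pos (by exact_mod_cast hqn) hl2
          linarith [key]
        have keq' : (2:ℝ)^(-q) = (3:ℝ)^(-p) := by
          rw [zpow_neg, zpow_neg, keq]
        exact no_pow23 (-q) (-p) (by omega) (by omega) keq'
      · exact hq0 hqz
      · have hpp : 0 < p := by
          by_contra hge
          push_neg at hge
          have h1 : (p:ℝ) * Real.log 3 ≤ 0 :=
            mul_nonpos_of_nonpos_of_nonneg (by exact_mod_cast hge) hl3.le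
          have h2' : 0 < (q:ℝ) * Real.log 2 :=
            mul_pos (by exact_mod_cast hqp) hl2
          linarith [key]
        exact no_pow23 q p hqp hpp keq
  obtain ⟨x, hxS, hx⟩ := hdense.exists_between (Real.log_lt_log ha hab)
  have hxS' : x ∈ S := hxS
  rw [hS, AddSubgroup.mem_closure_pair] at hxS'
  obtain ⟨j, m, hjm⟩ := hxS'
  have hxe : Real.exp x = 2^j * 3^m := by
    rw [← hjm, zsmul_eq_mul, zsmul_eq_mul, Real.exp_add,
      exp_int_mul_log (by norm_num : (0:ℝ) < 2), exp_int_mul_log (by norm_num : (0:ℝ) < 3)]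
  refine ⟨j, m, ?_, ?_⟩
  · calc a = Real.exp (Real.log a) := (Real.exp_log ha).symm
    _ < Real.exp x := Real.exp_lt_exp.2 hx.1
    _ = 2^j * 3^m := hxe
  · calc (2:ℝ)^j * 3^m = Real.exp x := hxe.symm
    _ < Real.exp (Real.log b) := Real.exp_lt_exp.2 hx.2
    _ = b := Real.exp_log (lt_trans ha hab)

/-! ### the transformations `t ↦ ψ(θ φ(t))` -/

/-- `Fq ψ φ θ t = ψ (θ * φ t)`. -/
def Fq (ψ φ : ℝ → ℝ) (θ t : ℝ) : ℝ := ψ (θ * φ t)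

lemma Fq_mem (hg : IsStrictGenerator d ψ φ) {θ t : ℝ} (hθ : 0 < θ) (ht : t ∈ Ioc (0:ℝ) 1) :
    Fq ψ φ θ t ∈ Ioc (0:ℝ) 1 := by
  have h0 : 0 ≤ θ * φ t := mul_nonneg hθ.le (phi_nonneg hg ht.1 ht.2)
  exact ⟨psi_pos hg h0, psi_le_one hg h0⟩

lemma Fq_id (hg : IsStrictGenerator d ψ φ) {t : ℝ} (ht : t ∈ Ioc (0:ℝ) 1) :
    Fq ψ φ 1 t = t := by
  rw [Fq, one_mul, psi_phi hg ht.1 ht.2]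

lemma Fq_comp (hg : IsStrictGenerator d ψ φ) {θ θ' t : ℝ} (hθ : 0 < θ) (hθ' : 0 < θ')
    (ht : t ∈ Ioc (0:ℝ) 1) :
    Fq ψ φ θ (Fq ψ φ θ' t) = Fq ψ φ (θ * θ') t := by
  have h0 : 0 ≤ θ' * φ t := mul_nonneg hθ'.le (phi_nonneg hg ht.1 ht.2)
  rw [Fq, Fq, Fq, phi_psi hg h0, mul_assoc]

lemma Fq_lt (hg : IsStrictGenerator d ψ φ) {θ t₁ t₂ : ℝ} (hθ : 0 < θ)
    (h1 : 0 < t₁) (h12 : t₁ < t₂) (h2 : t₂ ≤ 1) :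
    Fq ψ φ θ t₁ < Fq ψ φ θ t₂ := by
  have hφ := phi_lt hg h1 h12 h2
  have h0 : 0 ≤ θ * φ t₂ := mul_nonneg hθ.le (phi_nonneg hg (h1.trans h12) h2)
  exact psi_lt hg h0 (by nlinarith)

lemma Fq_le (hg : IsStrictGenerator d ψ φ) {θ t₁ t₂ : ℝ} (hθ : 0 < θ)
    (h1 : 0 < t₁) (h12 : t₁ ≤ t₂) (h2 : t₂ ≤ 1) :
    Fq ψ φ θ t₁ ≤ Fq ψ φ θ t₂ := by
  rcases eq_or_lt_of_le h12 with rfl | h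
  · exact le_rfl
  · exact (Fq_lt hg hθ h1 h h2).le

lemma Fq_continuousOn (hg : IsStrictGenerator d ψ φ) {θ : ℝ} (hθ : 0 < θ) :
    ContinuousOn (Fq ψ φ θ) (Ioc (0:ℝ) 1) := by
  apply hg.1.continuousOn.comp (continuousOn_const.mul (phi_continuousOn hg))
  intro t ht
  exact mul_nonneg hθ.le (phi_nonneg hg ht.1 ht.2)

/-- squeeze lemma : monotone functions converging pointwise to a continuous limit,
composed with a converging sequence of arguments. -/
lemma sq_incr {fn : ℕ → ℝ → ℝ} {f : ℝ → ℝ} {xn : ℕ → ℝ} {x : ℝ}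
    (hmono : ∀ n, ∀ s ∈ Ioc (0:ℝ) 1, ∀ t ∈ Ioc (0:ℝ) 1, s ≤ t → fn n s ≤ fn n t)
    (hconv : ∀ t ∈ Ioc (0:ℝ) 1, Tendsto (fun n => fn n t) atTop (nhds (f t)))
    (hcont : ContinuousWithinAt f (Ioc (0:ℝ) 1) x)
    (hx : x ∈ Ioc (0:ℝ) 1)
    (hxn : ∀ n, xn n ∈ Ioc (0:ℝ) 1)
    (hxc : Tendsto xn atTop (nhds x)) :
    Tendsto (fun n => fn n (xn n)) atTop (nhds (f x)) := by
  rw [Metric.tendsto_nhds]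
  intro ε hε
  obtain ⟨δ, hδ, hδ'⟩ := Metric.continuousWithinAt_iff.1 hcont (ε/2) (by linarith)
  set a := x - min (δ/2) (x/2) with ha
  have hminpos : 0 < min (δ/2) (x/2) := lt_min (by linarith) (by linarith [hx.1])
  have haS : a ∈ Ioc (0:ℝ) 1 := by
    constructor
    · have : min (δ/2) (x/2) ≤ x/2 := min_le_right _ _
      rw [ha]; linarith [hx.1]
    · rw [ha]; linarith [hx.2]
  have hax : a < x := by rw [ha]; linarith
  have hfa : dist (f a) (f x) < ε/2 := by
    apply hδ' haS
    rw [Real.dist_eq, ha]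
    rw [abs_lt]
    constructor <;> [linarith [min_le_left (δ/2) (x/2)]; linarith [min_le_left (δ/2) (x/2)]]
  set b := min 1 (x + δ/2) with hb
  have hbS : b ∈ Ioc (0:ℝ) 1 := by
    constructor
    · rw [hb]; exact lt_min one_pos (by linarith [hx.1])
    · exact min_le_left _ _
  have hxb : x ≤ b := le_min hx.2 (by linarith)
  have hfb : dist (f b) (f x) < ε/2 := by
    apply hδ' hbS
    rw [Real.dist_eq, abs_lt]
    have : b ≤ x + δ/2 := min_le_right _ _
    constructor <;> linarith
  have hevb : ∀ᶠ n in atTop, xn n ≤ b := by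
    rcases eq_or_lt_of_le hx.2 with h1 | h1
    · exact Eventually.of_forall fun n => le_trans (hxn n).2 (le_min le_rfl (by rw [← h1]; linarith))
    · have hxb' : x < b := lt_min h1 (by linarith)
      exact (hxc.eventually (gt_mem_nhds hxb')).mono fun n h => h.le
  have heva : ∀ᶠ n in atTop, a ≤ xn n :=
    (hxc.eventually (lt_mem_nhds hax)).mono fun n h => h.le
  have hA := Metric.tendsto_nhds.1 (hconv a haS) (ε/2) (by linarith)
  have hB := Metric.tendsto_nhds.1 (hconv b hbS) (ε/2) (by linarith)
  filter_upwards [hA, hB, heva, hevb] with n hna hnb h1 h2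
  have l1 := hmono n a haS (xn n) (hxn n) h1
  have l2 := hmono n (xn n) (hxn n) b hbS h2
  rw [Real.dist_eq] at hna hnb hfa hfb ⊢
  rw [abs_lt] at hna hnb hfa hfb ⊢
  constructor <;> linarith

/-- the convergence predicate for the transformations. -/
def PQ (ψ φ : ℝ → ℝ) (ψn φn : ℕ → ℝ → ℝ) (θ : ℝ) : Prop :=
  ∀ t ∈ Ioc (0:ℝ) 1,
    Tendsto (fun n => Fq (ψn n) (φn n) θ t) atTop (nhds (Fq ψ φ θ t))

variable {ψn φn : ℕ → ℝ → ℝ}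

lemma PQ_one (hg : IsStrictGenerator d ψ φ) (hgn : ∀ n, IsStrictGenerator d (ψn n) (φn n)) :
    PQ ψ φ ψn φn 1 := by
  intro t ht
  have h1 : (fun n => Fq (ψn n) (φn n) 1 t) = fun _ => t :=
    funext fun n => Fq_id (hgn n) ht
  rw [h1, Fq_id hg ht]
  exact tendsto_const_nhds

lemma PQ_mul (hg : IsStrictGenerator d ψ φ) (hgn : ∀ n, IsStrictGenerator d (ψn n) (φn n))
    {θ θ' : ℝ} (hθ : 0 < θ) (hθ' : 0 < θ')
    (h : PQ ψ φ ψn φn θ) (h' : PQ ψ φ ψn φn θ') : PQ ψ φ ψn φn (θ * θ') := by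
  intro t ht
  have hx : Fq ψ φ θ' t ∈ Ioc (0:ℝ) 1 := Fq_mem hg hθ' ht
  have heq : ∀ n, Fq (ψn n) (φn n) θ (Fq (ψn n) (φn n) θ' t)
      = Fq (ψn n) (φn n) (θ * θ') t := fun n => Fq_comp (hgn n) hθ hθ' ht
  have htarget : Fq ψ φ (θ * θ') t = Fq ψ φ θ (Fq ψ φ θ' t) := (Fq_comp hg hθ hθ' ht).symm
  rw [htarget]
  have hmain := sq_incr (fn := fun n => Fq (ψn n) (φn n) θ) (f := Fq ψ φ θ)
    (xn := fun n => Fq (ψn n) (φn n) θ' t) (x := Fq ψ φ θ' t)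
    (fun n s hs u hu hsu => Fq_le (hgn n) hθ hs.1 hsu hu.2)
    (fun u hu => h u hu)
    ((Fq_continuousOn hg hθ) _ hx)
    hx (fun n => Fq_mem (hgn n) hθ' ht) (h' t ht)
  exact Tendsto.congr (fun n => heq n) hmain

lemma PQ_inv (hg : IsStrictGenerator d ψ φ) (hgn : ∀ n, IsStrictGenerator d (ψn n) (φn n))
    {θ : ℝ} (hθ : 0 < θ) (h : PQ ψ φ ψn φn θ) : PQ ψ φ ψn φn θ⁻¹ := by
  intro t ht
  set A := Fq ψ φ θ⁻¹ t with hA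
  have hAm : A ∈ Ioc (0:ℝ) 1 := Fq_mem hg (inv_pos.2 hθ) ht
  have hTA : Fq ψ φ θ A = t := by
    rw [hA, Fq_comp hg hθ (inv_pos.2 hθ) ht, mul_inv_cancel₀ hθ.ne', Fq_id hg ht]
  have hTAn : ∀ n, Fq (ψn n) (φn n) θ (Fq (ψn n) (φn n) θ⁻¹ t) = t := fun n => by
    rw [Fq_comp (hgn n) hθ (inv_pos.2 hθ) ht, mul_inv_cancel₀ hθ.ne', Fq_id (hgn n) ht]
  rw [Metric.tendsto_nhds]
  intro ε hε
  have hminpos : 0 < min (ε/2) (A/2) := lt_min (by linarith) (by linarith [hAm.1])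
  set a := A - min (ε/2) (A/2) with ha
  have haS : a ∈ Ioc (0:ℝ) 1 :=
    ⟨by rw [ha]; linarith [min_le_right (ε/2) (A/2), hAm.1], by rw [ha]; linarith [hAm.2]⟩
  have haA : a < A := by rw [ha]; linarith
  have h1 : Fq ψ φ θ a < t := by rw [← hTA]; exact Fq_lt hg hθ haS.1 haA hAm.2
  have hev1 := (h a haS).eventually (gt_mem_nhds h1)
  have hev1' : ∀ᶠ n in atTop, a < Fq (ψn n) (φn n) θ⁻¹ t := by
    filter_upwards [hev1] with n hn
    by_contra hle
    push_neg at hle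
    have hmem := Fq_mem (hgn n) (inv_pos.2 hθ) ht
    have hcontra := Fq_le (hgn n) hθ hmem.1 hle haS.2
    rw [hTAn n] at hcontra
    linarith
  have hev2' : ∀ᶠ n in atTop, Fq (ψn n) (φn n) θ⁻¹ t < A + ε := by
    rcases eq_or_lt_of_le hAm.2 with hA1 | hA1
    · refine Eventually.of_forall fun n => ?_
      calc Fq (ψn n) (φn n) θ⁻¹ t ≤ 1 := (Fq_mem (hgn n) (inv_pos.2 hθ) ht).2
        _ = A := hA1.symm
        _ < A + ε := by linarith
    · set b := min 1 (A + ε/2) with hb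
      have hbS : b ∈ Ioc (0:ℝ) 1 := ⟨lt_min one_pos (by linarith [hAm.1]), min_le_left _ _⟩
      have hAb : A < b := lt_min hA1 (by linarith)
      have h2 : t < Fq ψ φ θ b := by rw [← hTA]; exact Fq_lt hg hθ hAm.1 hAb hbS.2
      have hev2 := (h b hbS).eventually (lt_mem_nhds h2)
      filter_upwards [hev2] with n hn
      by_contra hle
      push_neg at hle
      have hmem := Fq_mem (hgn n) (inv_pos.2 hθ) ht
      have hble : b ≤ Fq (ψn n) (φn n) θ⁻¹ t :=
        le_trans (le_trans (min_le_right _ _) (by linarith)) hle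
      have hcontra := Fq_le (hgn n) hθ hbS.1 hble hmem.2
      rw [hTAn n] at hcontra
      linarith
  filter_upwards [hev1', hev2'] with n h1' h2'
  rw [Real.dist_eq, abs_lt]
  constructor
  · have := min_le_left (ε/2) (A/2)
    rw [ha] at h1'
    linarith
  · linarith

lemma sum_if_eq (d r : ℕ) (hr : r ≤ d) (c : ℝ) :
    (∑ i : Fin d, if (i:ℕ) < r then c else 0) = r * c := by
  rw [Fin.sum_univ_eq_sum_range (fun j => if j < r then c else 0)]
  rw [Finset.sum_ite, Finset.sum_const, Finset.sum_const_zero, add_zero]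
  have hfil : (Finset.range d).filter (fun j => j < r) = Finset.range r := by
    ext j
    simp only [Finset.mem_filter, Finset.mem_range]
    omega
  rw [hfil, Finset.card_range, nsmul_eq_mul]

lemma PQ_nat (hg : IsStrictGenerator d ψ φ) (hgn : ∀ n, IsStrictGenerator d (ψn n) (φn n))
    (hconv : ∀ v : Fin d → ℝ, (∀ i, v i ∈ Icc (0:ℝ) 1) →
      Tendsto (fun n => archCopF (ψn n) (φn n) v) atTop (nhds (archCopF ψ φ v)))
    {r : ℕ} (hr : r ≤ d) : PQ ψ φ ψn φn (r:ℝ) := by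
  intro t ht
  set v : Fin d → ℝ := fun i => if (i:ℕ) < r then t else 1 with hv
  have hvm : ∀ i, v i ∈ Icc (0:ℝ) 1 := by
    intro i
    by_cases h : (i:ℕ) < r <;> simp [hv, h, ht.1.le, ht.2, zero_le_one]
  have hnot : ¬ ∃ i, v i ≤ 0 := by
    rintro ⟨i, hi⟩
    revert hi
    simp only [hv]
    split
    · exact not_le.2 ht.1
    · exact not_le.2 one_pos
  have harch : ∀ (g g' : ℝ → ℝ), IsStrictGenerator d g g' →
      archCopF g g' v = g ((r:ℝ) * g' t) := by
    intro g g' hgg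
    rw [archCopF, if_neg hnot]
    congr 1
    have hterm : ∀ i : Fin d, g' (v i) = if (i:ℕ) < r then g' t else 0 := by
      intro i
      simp only [hv]
      split
      · rfl
      · exact phi_one hgg
    rw [Finset.sum_congr rfl (fun i _ => hterm i), sum_if_eq d r hr (g' t)]
  have H := hconv v hvm
  rw [harch ψ φ hg] at H
  simp only [Fq]
  exact Tendsto.congr (fun n => (harch (ψn n) (φn n) (hgn n)).symm ▸ rfl) H

lemma PQ_zpow (hg : IsStrictGenerator d ψ φ) (hgn : ∀ n, IsStrictGenerator d (ψn n) (φn n))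
    {θ : ℝ} (hθ : 0 < θ) (h : PQ ψ φ ψn φn θ) : ∀ j : ℤ, PQ ψ φ ψn φn (θ^j) := by
  have hnat : ∀ m : ℕ, PQ ψ φ ψn φn (θ^m) := by
    intro m
    induction m with
    | zero => simpa [pow_zero] using PQ_one hg hgn
    | succ k IH =>
      have := PQ_mul hg hgn (pow_pos hθ k) hθ IH h
      simpa [pow_succ] using this
  intro j
  rcases le_or_gt 0 j with hj | hj
  · lift j to ℕ using hj
    rw [zpow_natCast]
    exact hnat j
  · have heq : θ^j = (θ^(-j))⁻¹ := by rw [← zpow_neg, neg_neg]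
    rw [heq]
    have h2 : PQ ψ φ ψn φn (θ^(-j)) := by
      have heq2 : -j = ((-j).toNat : ℤ) := by omega
      rw [heq2, zpow_natCast]
      exact hnat _
    exact PQ_inv hg hgn (zpow_pos hθ _) h2

lemma tendsto_psin_pow (hg : IsStrictGenerator d ψ φ)
    (hgn : ∀ n, IsStrictGenerator d (ψn n) (φn n))
    (hnorm : ψ 1 = 1/2) (hnormn : ∀ n, ψn n 1 = 1/2)
    (hconv : ∀ v : Fin d → ℝ, (∀ i, v i ∈ Icc (0:ℝ) 1) →
      Tendsto (fun n => archCopF (ψn n) (φn n) v) atTop (nhds (archCopF ψ φ v)))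
    (hd3 : 3 ≤ d) (j m : ℤ) :
    Tendsto (fun n => ψn n ((2:ℝ)^j * 3^m)) atTop (nhds (ψ ((2:ℝ)^j * 3^m))) := by
  have P2 : PQ ψ φ ψn φn ((2:ℕ):ℝ) := PQ_nat hg hgn hconv (by omega)
  have P3 : PQ ψ φ ψn φn ((3:ℕ):ℝ) := PQ_nat hg hgn hconv hd3
  have P2' : PQ ψ φ ψn φn 2 := by
    have : ((2:ℕ):ℝ) = 2 := by norm_num
    rwa [this] at P2
  have P3' : PQ ψ φ ψn φn 3 := by
    have : ((3:ℕ):ℝ) = 3 := by norm_num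
    rwa [this] at P3
  have hall : PQ ψ φ ψn φn ((2:ℝ)^j * 3^m) :=
    PQ_mul hg hgn (zpow_pos two_pos j) (zpow_pos (by norm_num : (0:ℝ) < 3) m)
      (PQ_zpow hg hgn two_pos P2' j)
      (PQ_zpow hg hgn (by norm_num : (0:ℝ) < 3) P3' m)
  have hhalf : (1/2 : ℝ) ∈ Ioc (0:ℝ) 1 := by norm_num
  have H := hall (1/2) hhalf
  have hphin : ∀ n, φn n (1/2) = 1 := fun n => by
    rw [← hnormn n]
    exact phi_psi (hgn n) zero_le_one
  have hphi : φ (1/2) = 1 := by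
    rw [← hnorm]
    exact phi_psi hg zero_le_one
  simp only [Fq, hphi, mul_one] at H
  exact Tendsto.congr (fun n => by simp only [hphin n, mul_one]) H

/-- pointwise convergence of the generators. -/
lemma psi_conv (hg : IsStrictGenerator d ψ φ)
    (hgn : ∀ n, IsStrictGenerator d (ψn n) (φn n))
    (hnorm : ψ 1 = 1/2) (hnormn : ∀ n, ψn n 1 = 1/2)
    (hconv : ∀ v : Fin d → ℝ, (∀ i, v i ∈ Icc (0:ℝ) 1) →
      Tendsto (fun n => archCopF (ψn n) (φn n) v) atTop (nhds (archCopF ψ φ v)))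
    (hd3 : 3 ≤ d) :
    ∀ z : ℝ, 0 ≤ z → Tendsto (fun n => ψn n z) atTop (nhds (ψ z)) := by
  intro z hz
  rcases eq_or_lt_of_le hz with rfl | hz
  · have h1 : (fun n => ψn n 0) = fun _ => (1:ℝ) := funext fun n => psi_zero (hgn n)
    rw [h1, psi_zero hg]
    exact tendsto_const_nhds
  rw [Metric.tendsto_nhds]
  intro ε hε
  obtain ⟨δ, hδ, hδ'⟩ := Metric.continuousAt_iff.1 (psi_continuousAt hg hz) (ε/2) (by linarith)
  have hm : 0 < min δ z / 2 := by
    have := lt_min hδ hz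
    linarith
  obtain ⟨j1, m1, h11, h12⟩ := dense_pow23 (show 0 < z - min δ z / 2 by
    have := min_le_right δ z; linarith) (show z - min δ z / 2 < z by linarith)
  obtain ⟨j2, m2, h21, h22⟩ := dense_pow23 hz (show z < z + min δ z / 2 by linarith)
  set θ₁ := (2:ℝ)^j1 * 3^m1 with hθ1
  set θ₂ := (2:ℝ)^j2 * 3^m2 with hθ2
  have hθ1pos : 0 < θ₁ := by positivity
  have hd1 : dist θ₁ z < δ := by
    rw [Real.dist_eq, abs_lt]
    have := min_le_left δ z
    constructor <;> linarith
  have hd2 : dist θ₂ z < δ := by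
    rw [Real.dist_eq, abs_lt]
    have := min_le_left δ z
    constructor <;> linarith
  have hψ1 := hδ' hd1
  have hψ2 := hδ' hd2
  have hc1 := Metric.tendsto_nhds.1
    (tendsto_psin_pow hg hgn hnorm hnormn hconv hd3 j1 m1) (ε/2) (by linarith)
  have hc2 := Metric.tendsto_nhds.1
    (tendsto_psin_pow hg hgn hnorm hnormn hconv hd3 j2 m2) (ε/2) (by linarith)
  filter_upwards [hc1, hc2] with n hn1 hn2
  have l1 : ψn n z ≤ ψn n θ₁ := psi_antitone (hgn n) hθ1pos.le h12.le
  have l2 : ψn n θ₂ ≤ ψn n z := psi_antitone (hgn n) hz.le h21.le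
  rw [Real.dist_eq, abs_lt] at hn1 hn2 hψ1 hψ2 ⊢
  constructor <;> linarith

/-- pointwise convergence of the pseudoinverses. -/
lemma phi_conv (hgn : ∀ n, IsStrictGenerator d (ψn n) (φn n))
    (hg : IsStrictGenerator d ψ φ)
    (hψc : ∀ z : ℝ, 0 ≤ z → Tendsto (fun n => ψn n z) atTop (nhds (ψ z))) :
    ∀ t : ℝ, 0 < t → t < 1 → Tendsto (fun n => φn n t) atTop (nhds (φ t)) := by
  intro t h0 h1
  rw [Metric.tendsto_nhds]
  intro ε hε
  have ha : 0 ≤ φ t := phi_nonneg hg h0 h1.le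
  have hup : ψ (φ t + ε/2) < t := by
    have := psi_lt hg ha (show φ t < φ t + ε/2 by linarith)
    rwa [psi_phi hg h0 h1.le] at this
  have hev1 := (hψc (φ t + ε/2) (by linarith)).eventually (gt_mem_nhds hup)
  have hev2 : ∀ᶠ n in atTop, φ t - ε < φn n t := by
    rcases lt_or_ge (φ t) (ε/2) with hc | hc
    · refine Eventually.of_forall fun n => ?_
      have := phi_nonneg (hgn n) h0 h1.le
      linarith
    · have hlow : t < ψ (φ t - ε/2) := by
        have := psi_lt hg (by linarith) (show φ t - ε/2 < φ t by linarith)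
        rwa [psi_phi hg h0 h1.le] at this
      have hev := (hψc (φ t - ε/2) (by linarith)).eventually (lt_mem_nhds hlow)
      filter_upwards [hev] with n hn
      have := phi_gt_of_lt_psi (hgn n) h0 h1.le (by linarith) hn
      linarith
  filter_upwards [hev1, hev2] with n hn1 hn2
  have hb := phi_lt_of_gt_psi (hgn n) h0 h1.le (by linarith) hn1
  rw [Real.dist_eq, abs_lt]
  constructor <;> linarith

/-- derivative convergence for functions with monotone derivatives. -/
lemma deriv_conv_of_monotone {en : ℕ → ℝ → ℝ} {e : ℝ → ℝ} {en' : ℕ → ℝ → ℝ} {e' z : ℝ}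
    (hz : 0 < z)
    (hder : ∀ n, ∀ w : ℝ, 0 < w → HasDerivAt (en n) (en' n w) w)
    (hmono : ∀ n, ∀ w₁ w₂ : ℝ, 0 < w₁ → w₁ ≤ w₂ → en' n w₁ ≤ en' n w₂)
    (hconv : ∀ w : ℝ, 0 < w → Tendsto (fun n => en n w) atTop (nhds (e w)))
    (hlim : HasDerivAt e e' z) :
    Tendsto (fun n => en' n z) atTop (nhds e') := by
  rw [Metric.tendsto_nhds]
  intro ε hε
  have hslope := hasDerivAt_iff_tendsto_slope.1 hlim
  have hball : {w : ℝ | dist (slope e z w) e' < ε/4} ∈ nhdsWithin z {z}ᶜ :=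
    hslope.eventually (Metric.ball_mem_nhds e' (show (0:ℝ) < ε/4 by linarith))
  obtain ⟨δ, hδpos, hsub⟩ := Metric.mem_nhdsWithin_iff.1 hball
  set h := min (δ/2) (z/2) with hh
  have hhpos : 0 < h := lt_min (by linarith) (by linarith)
  have hhδ : h < δ := lt_of_le_of_lt (min_le_left _ _) (by linarith)
  have hzh : 0 < z - h := by
    have := min_le_right (δ/2) (z/2)
    rw [hh]; linarith [min_le_right (δ/2) (z/2)]
  have hmem1 : (z + h) ∈ Metric.ball z δ ∩ ({z}ᶜ : Set ℝ) := by
    constructor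
    · rw [Metric.mem_ball, Real.dist_eq, abs_lt]
      constructor <;> linarith
    · simp only [Set.mem_compl_iff, Set.mem_singleton_iff]
      exact ne_of_gt (by linarith)
  have hmem2 : (z - h) ∈ Metric.ball z δ ∩ ({z}ᶜ : Set ℝ) := by
    constructor
    · rw [Metric.mem_ball, Real.dist_eq, abs_lt]
      constructor <;> linarith
    · simp only [Set.mem_compl_iff, Set.mem_singleton_iff]
      exact ne_of_lt (by linarith)
  have hs1 : dist (slope e z (z+h)) e' < ε/4 := hsub hmem1
  have hs2 : dist (slope e z (z-h)) e' < ε/4 := hsub hmem2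
  have hse1 : slope e z (z+h) = (e (z+h) - e z)/h := by
    rw [slope_def_field, add_sub_cancel_left]
  have hse2 : slope e z (z-h) = (e z - e (z-h))/h := by
    rw [slope_def_field]
    rw [show z - h - z = -h by ring]
    rw [div_neg, ← neg_div, neg_sub]
  rw [hse1, Real.dist_eq, abs_lt] at hs1
  rw [hse2, Real.dist_eq, abs_lt] at hs2
  have hb1 : e (z+h) - e z < (e' + ε/4) * h := by
    rw [← div_lt_iff₀ hhpos]
    linarith [hs1.2]
  have hb2 : (e' - ε/4) * h < e z - e (z-h) := by
    rw [← lt_div_iff₀ hhpos]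
    linarith [hs2.1]
  have hc1 := Metric.tendsto_nhds.1 (hconv (z+h) (by linarith)) (h*ε/8) (by positivity)
  have hc2 := Metric.tendsto_nhds.1 (hconv z hz) (h*ε/8) (by positivity)
  have hc3 := Metric.tendsto_nhds.1 (hconv (z-h) hzh) (h*ε/8) (by positivity)
  filter_upwards [hc1, hc2, hc3] with n hn1 hn2 hn3
  rw [Real.dist_eq, abs_lt] at hn1 hn2 hn3
  -- upper bound via MVT on [z, z+h]
  obtain ⟨c, hc, hce⟩ := slope_mvt (f := en n) (f' := en' n) (show z < z + h by linarith)
    (fun w hw => (hder n w (lt_of_lt_of_le hz hw.1)).continuousAt)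
    (fun w hw => hder n w (lt_trans hz hw.1))
  rw [add_sub_cancel_left] at hce
  have hmc : en' n z ≤ en' n c := hmono n z c hz hc.1.le
  have hup : en' n z * h ≤ en n (z+h) - en n z := by
    rw [hce]
    exact mul_le_mul_of_nonneg_right hmc hhpos.le
  -- lower bound via MVT on [z-h, z]
  obtain ⟨c2, hc2', hce2⟩ := slope_mvt (f := en n) (f' := en' n) (show z - h < z by linarith)
    (fun w hw => (hder n w (lt_of_lt_of_le hzh hw.1)).continuousAt)
    (fun w hw => hder n w (lt_trans hzh hw.1))
  rw [show z - (z - h) = h by ring] at hce2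
  have hmc2 : en' n c2 ≤ en' n z := hmono n c2 z (lt_trans hzh hc2'.1) hc2'.2.le
  have hlow : en n z - en n (z-h) ≤ en' n z * h := by
    rw [hce2]
    exact mul_le_mul_of_nonneg_right hmc2 hhpos.le
  rw [Real.dist_eq, abs_lt]
  constructor
  · -- e' - ε < en' n z
    have k1 : (e' - ε/2) * h < en' n z * h := by nlinarith
    have := lt_of_mul_lt_mul_right k1 hhpos.le
    linarith
  · have k2 : en' n z * h < (e' + ε/2) * h := by nlinarith
    have := lt_of_mul_lt_mul_right k2 hhpos.le
    linarith

/-- convergence of iterated derivatives. -/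
lemma iter_conv (hg : IsStrictGenerator d ψ φ)
    (hgn : ∀ n, IsStrictGenerator d (ψn n) (φn n))
    (hψc : ∀ z : ℝ, 0 ≤ z → Tendsto (fun n => ψn n z) atTop (nhds (ψ z))) :
    ∀ m : ℕ, m ≤ d - 2 → ∀ z : ℝ, 0 < z →
      Tendsto (fun n => iteratedDeriv m (ψn n) z) atTop (nhds (iteratedDeriv m ψ z)) := by
  intro m
  induction m with
  | zero =>
    intro _ z hz
    simpa [iteratedDeriv_zero] using hψc z hz.le
  | succ k IH =>
    intro hk z hz
    have hconvk : ∀ w : ℝ, 0 < w → Tendsto (fun n => (-1:ℝ)^k * iteratedDeriv k (ψn n) w)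
        atTop (nhds ((-1:ℝ)^k * iteratedDeriv k ψ w)) :=
      fun w hw => ((IH (by omega) w hw).const_mul _)
    have hder : ∀ n, ∀ w : ℝ, 0 < w →
        HasDerivAt (fun u => (-1:ℝ)^k * iteratedDeriv k (ψn n) u)
          ((-1:ℝ)^k * iteratedDeriv (k+1) (ψn n) w) w :=
      fun n w hw => (hasDerivAt_iter (hgn n) (by omega) hw).const_mul _
    have hmono : ∀ n, ∀ w₁ w₂ : ℝ, 0 < w₁ → w₁ ≤ w₂ →
        (-1:ℝ)^k * iteratedDeriv (k+1) (ψn n) w₁ ≤ (-1:ℝ)^k * iteratedDeriv (k+1) (ψn n) w₂ := by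
      intro n w1 w2 h1 h2
      have hmo := signed_antitoneOn (hgn n) (Nat.succ_le_succ (Nat.zero_le k)) hk
        (mem_Ioi.2 h1) (mem_Ioi.2 (lt_of_lt_of_le h1 h2)) h2
      have e1 : ∀ u : ℝ, (-1:ℝ)^(k+1) * u = -((-1:ℝ)^k * u) := fun u => by
        rw [pow_succ]; ring
      have hmo' : (-1:ℝ)^(k+1) * iteratedDeriv (k+1) (ψn n) w2
          ≤ (-1:ℝ)^(k+1) * iteratedDeriv (k+1) (ψn n) w1 := hmo
      rw [e1, e1] at hmo'
      linarith
    have hlim : HasDerivAt (fun u => (-1:ℝ)^k * iteratedDeriv k ψ u)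
        ((-1:ℝ)^k * iteratedDeriv (k+1) ψ z) z :=
      (hasDerivAt_iter hg (by omega) hz).const_mul _
    have H := deriv_conv_of_monotone hz hder hmono hconvk hlim
    have H2 := H.const_mul ((-1:ℝ)^k)
    have he : (-1:ℝ)^k * ((-1:ℝ)^k * iteratedDeriv (k+1) ψ z) = iteratedDeriv (k+1) ψ z := by
      rw [← mul_assoc, neg_one_sq' k, one_mul]
    rw [he] at H2
    exact Tendsto.congr (fun n => by rw [← mul_assoc, neg_one_sq' k, one_mul]) H2

/-- squeeze for antitone functions with moving argument. -/
lemma sq_anti {fn : ℕ → ℝ → ℝ} {f : ℝ → ℝ} {zn : ℕ → ℝ} {z : ℝ}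
    (hmono : ∀ n, ∀ w₁ w₂ : ℝ, 0 < w₁ → w₁ ≤ w₂ → fn n w₂ ≤ fn n w₁)
    (hconv : ∀ w : ℝ, 0 < w → Tendsto (fun n => fn n w) atTop (nhds (f w)))
    (hcont : ContinuousAt f z) (hz : 0 < z)
    (hzn : Tendsto zn atTop (nhds z)) :
    Tendsto (fun n => fn n (zn n)) atTop (nhds (f z)) := by
  rw [Metric.tendsto_nhds]
  intro ε hε
  obtain ⟨δ, hδpos, hδ⟩ := Metric.continuousAt_iff.1 hcont (ε/2) (by linarith)
  set h := min (δ/2) (z/2) with hh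
  have hhpos : 0 < h := lt_min (by linarith) (by linarith)
  have hha : 0 < z - h := by
    have := min_le_right (δ/2) (z/2)
    rw [hh]; linarith [min_le_right (δ/2) (z/2)]
  have hfa : dist (f (z - h)) (f z) < ε/2 := hδ (by
    rw [Real.dist_eq, abs_lt]
    have := min_le_left (δ/2) (z/2)
    constructor <;> linarith)
  have hfb : dist (f (z + h)) (f z) < ε/2 := hδ (by
    rw [Real.dist_eq, abs_lt]
    have := min_le_left (δ/2) (z/2)
    constructor <;> linarith)
  have hc1 := Metric.tendsto_nhds.1 (hconv (z - h) hha) (ε/2) (by linarith)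
  have hc2 := Metric.tendsto_nhds.1 (hconv (z + h) (by linarith)) (ε/2) (by linarith)
  have hev := Metric.tendsto_nhds.1 hzn h hhpos
  filter_upwards [hc1, hc2, hev] with n h1 h2 h3
  rw [Real.dist_eq, abs_lt] at h1 h2 h3 ⊢
  have l1 : fn n (zn n) ≤ fn n (z - h) := hmono n (z - h) (zn n) hha (by linarith)
  have l2 : fn n (z + h) ≤ fn n (zn n) := hmono n (zn n) (z + h) (by linarith) (by linarith)
  rw [Real.dist_eq, abs_lt] at hfa hfb
  constructor <;> linarith

/-- Pólya-type uniform convergence on `[0,∞)` for antitone functions. -/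
lemma polya {Fn : ℕ → ℝ → ℝ} {F : ℝ → ℝ}
    (hmono : ∀ n, ∀ z₁ z₂ : ℝ, 0 ≤ z₁ → z₁ ≤ z₂ → Fn n z₂ ≤ Fn n z₁)
    (hnn : ∀ n, ∀ z : ℝ, 0 ≤ z → 0 ≤ Fn n z)
    (hFanti : ∀ z₁ z₂ : ℝ, 0 ≤ z₁ → z₁ ≤ z₂ → F z₂ ≤ F z₁)
    (hFcont : ∀ z : ℝ, 0 ≤ z → ContinuousAt F z)
    (hFnn : ∀ z : ℝ, 0 ≤ z → 0 ≤ F z)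
    (hconv : ∀ z : ℝ, 0 ≤ z → Tendsto (fun n => Fn n z) atTop (nhds (F z)))
    (htend : Tendsto F atTop (nhds 0)) :
    TendstoUniformlyOn Fn F atTop (Ici 0) := by
  rw [Metric.tendstoUniformlyOn_iff]
  intro ε hε
  obtain ⟨M0, hM0⟩ := ((htend.eventually (gt_mem_nhds (show (0:ℝ) < ε/4 by linarith))).and
    (eventually_ge_atTop (0:ℝ))).exists
  set M := max M0 1 with hM
  have hM1 : (1:ℝ) ≤ M := le_max_right _ _
  have hMpos : (0:ℝ) < M := by linarith
  have hFM : F M < ε/4 := lt_of_le_of_lt (hFanti M0 M hM0.2 (le_max_left _ _)) hM0.1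
  have hcompact : IsCompact (Icc (0:ℝ) (2*M)) := isCompact_Icc
  have hcont : ContinuousOn F (Icc (0:ℝ) (2*M)) := fun w hw => (hFcont w hw.1).continuousWithinAt
  have hUC := hcompact.uniformContinuousOn_of_continuous hcont
  rw [Metric.uniformContinuousOn_iff] at hUC
  obtain ⟨δ, hδpos, hδ⟩ := hUC (ε/4) (by linarith)
  set N : ℕ := ⌈M/δ⌉₊ + 1 with hN
  have hNpos : 0 < (N:ℝ) := by positivity
  set s : ℝ := M / N with hs
  have hspos : 0 < s := div_pos hMpos hNpos
  have hsM : s ≤ M := by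
    rw [hs]
    calc M / (N:ℝ) ≤ M / 1 := by
          apply div_le_div_of_nonneg_left hMpos.le one_pos
          exact_mod_cast Nat.succ_le_succ (Nat.zero_le _)
      _ = M := div_one M
  have hNs : (N:ℝ) * s = M := by
    rw [hs, mul_comm, div_mul_cancel₀ _ (ne_of_gt hNpos)]
  have hsδ : s < δ := by
    rw [hs, div_lt_iff₀ hNpos]
    have h1 : M/δ < N := by
      rw [hN]
      push_cast
      exact lt_of_le_of_lt (Nat.le_ceil _) (by linarith)
    rw [div_lt_iff₀ hδpos] at h1
    linarith
  have hgrid : ∀ i : ℕ, i ≤ N + 1 → (i:ℝ) * s ∈ Icc (0:ℝ) (2*M) := by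
    intro i hi
    constructor
    · positivity
    · calc (i:ℝ) * s ≤ ((N:ℝ) + 1) * s := by
            apply mul_le_mul_of_nonneg_right _ hspos.le
            exact_mod_cast hi
        _ = (N:ℝ) * s + s := by ring
        _ ≤ M + M := by rw [hNs]; linarith
        _ = 2*M := by ring
  have hfin : ∀ᶠ n in atTop, ∀ i ∈ Finset.range (N+2),
      dist (Fn n ((i:ℝ)*s)) (F ((i:ℝ)*s)) < ε/4 := by
    rw [Filter.eventually_all_finset]
    intro i _
    exact Metric.tendsto_nhds.1 (hconv _ (by positivity)) (ε/4) (by linarith)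
  filter_upwards [hfin] with n hn
  intro z hz
  rw [mem_Ici] at hz
  rcases le_or_gt z M with hzM | hzM
  · -- interior
    set i : ℕ := ⌊z/s⌋₊ with hi
    have hiN : i ≤ N := by
      rw [hi]
      have h1 : z/s ≤ (N:ℝ) := by
        rw [div_le_iff₀ hspos, hNs]
        exact hzM
      exact_mod_cast Nat.floor_le_of_le h1
    have hle1 : (i:ℝ) * s ≤ z := by
      have h2 : (⌊z/s⌋₊:ℝ) ≤ z/s := Nat.floor_le (by positivity)
      rw [hi]
      exact (le_div_iff₀ hspos).1 h2
    have hle2 : z ≤ ((i:ℝ)+1) * s := by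
      have h3 : z/s < (⌊z/s⌋₊:ℝ) + 1 := Nat.lt_floor_add_one _
      rw [hi]
      exact le_of_lt ((div_lt_iff₀ hspos).1 h3)
    have hm1 := hgrid i (by omega)
    have hm2 := hgrid (i+1) (by omega)
    have hg1 := hn i (Finset.mem_range.2 (by omega))
    have hg2 := hn (i+1) (Finset.mem_range.2 (by omega))
    have hcast : (((i+1):ℕ):ℝ) = (i:ℝ) + 1 := by push_cast; ring
    rw [hcast] at hm2 hg2
    have hδ12 : dist (F ((i:ℝ)*s)) (F (((i:ℝ)+1)*s)) < ε/4 := by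
      apply hδ _ hm1 _ hm2
      rw [Real.dist_eq]
      rw [show (i:ℝ)*s - ((i:ℝ)+1)*s = -s by ring, abs_neg, abs_of_pos hspos]
      exact hsδ
    have c1 : Fn n z ≤ Fn n ((i:ℝ)*s) := hmono n _ z (by positivity) hle1
    have c2 : Fn n (((i:ℝ)+1)*s) ≤ Fn n z := hmono n z _ hz hle2
    have FF1 : F (((i:ℝ)+1)*s) ≤ F z := hFanti z _ hz hle2
    have FF2 : F z ≤ F ((i:ℝ)*s) := hFanti _ z (by positivity) hle1
    rw [Real.dist_eq, abs_lt] at hg1 hg2 hδ12 ⊢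
    constructor <;> linarith
  · -- tail
    have hFz1 : F z ≤ F M := hFanti M z hMpos.le hzM.le
    have hFz0 : 0 ≤ F z := hFnn z hz
    have hgN := hn N (Finset.mem_range.2 (by omega))
    rw [hNs] at hgN
    have c1 : Fn n z ≤ Fn n M := hmono n M z hMpos.le hzM.le
    have c0 : 0 ≤ Fn n z := hnn n z hz
    rw [Real.dist_eq, abs_lt] at hgN ⊢
    constructor <;> linarith

/-! ### conditional generators -/

lemma sum_phi_pos (hg : IsStrictGenerator d ψ φ) {l : ℕ} (hl : 1 ≤ l) {x : Fin l → ℝ}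
    (hx : ∀ i, x i ∈ Ioo (0:ℝ) 1) : 0 < ∑ i, φ (x i) := by
  have : Nonempty (Fin l) := ⟨⟨0, by omega⟩⟩
  exact Finset.sum_pos (fun i _ => phi_pos hg (hx i).1 (hx i).2) Finset.univ_nonempty

lemma psiX_eq_signed (l : ℕ) {x : Fin l → ℝ} (z : ℝ) :
    psiX ψ φ x z = ((-1:ℝ)^l * iteratedDeriv l ψ ((∑ i, φ (x i)) + z))
      / ((-1:ℝ)^l * iteratedDeriv l ψ (∑ i, φ (x i))) :=
  (mul_div_mul_left _ _ (pow_ne_zero l (by norm_num))).symm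

variable {l : ℕ} {x : Fin l → ℝ}

lemma psiX_den_pos (hg : IsStrictGenerator d ψ φ) (hl : 1 ≤ l) (hld : l ≤ d - 2)
    (hx : ∀ i, x i ∈ Ioo (0:ℝ) 1) :
    0 < (-1:ℝ)^l * iteratedDeriv l ψ (∑ i, φ (x i)) :=
  signed_pos hg l hld _ (sum_phi_pos hg hl hx)

lemma psiX_pos (hg : IsStrictGenerator d ψ φ) (hl : 1 ≤ l) (hld : l ≤ d - 2)
    (hx : ∀ i, x i ∈ Ioo (0:ℝ) 1) {z : ℝ} (hz : 0 ≤ z) :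
    0 < psiX ψ φ x z := by
  rw [psiX_eq_signed]
  exact div_pos (signed_pos hg l hld _ (by linarith [sum_phi_pos hg hl hx]))
    (psiX_den_pos hg hl hld hx)

lemma psiX_zero (hg : IsStrictGenerator d ψ φ) (hl : 1 ≤ l) (hld : l ≤ d - 2)
    (hx : ∀ i, x i ∈ Ioo (0:ℝ) 1) : psiX ψ φ x 0 = 1 := by
  have hden := psiX_den_pos hg hl hld hx
  have hne : iteratedDeriv l ψ (∑ i, φ (x i)) ≠ 0 := by
    intro h
    rw [h, mul_zero] at hden
    exact lt_irrefl 0 hden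
  rw [psiX, add_zero, div_self hne]

lemma psiX_antitone (hg : IsStrictGenerator d ψ φ) (hl : 1 ≤ l) (hld : l ≤ d - 2)
    (hx : ∀ i, x i ∈ Ioo (0:ℝ) 1) {z₁ z₂ : ℝ} (h1 : 0 ≤ z₁) (h12 : z₁ ≤ z₂) :
    psiX ψ φ x z₂ ≤ psiX ψ φ x z₁ := by
  have hc := sum_phi_pos hg hl hx
  rw [psiX_eq_signed, psiX_eq_signed]
  refine (div_le_div_iff_of_pos_right (psiX_den_pos hg hl hld hx)).2 ?_
  exact signed_antitoneOn hg hl hld (mem_Ioi.2 (by linarith)) (mem_Ioi.2 (by linarith))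
    (by linarith)

lemma psiX_strictAnti (hg : IsStrictGenerator d ψ φ) (hl : 1 ≤ l) (hld : l ≤ d - 2)
    (hx : ∀ i, x i ∈ Ioo (0:ℝ) 1) {z₁ z₂ : ℝ} (h1 : 0 ≤ z₁) (h12 : z₁ < z₂) :
    psiX ψ φ x z₂ < psiX ψ φ x z₁ := by
  have hc := sum_phi_pos hg hl hx
  rw [psiX_eq_signed, psiX_eq_signed]
  refine (div_lt_div_iff_of_pos_right (psiX_den_pos hg hl hld hx)).2 ?_
  exact signed_strictAnti hg hl hld (by linarith) (by linarith)

lemma psiX_le_one (hg : IsStrictGenerator d ψ φ) (hl : 1 ≤ l) (hld : l ≤ d - 2)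
    (hx : ∀ i, x i ∈ Ioo (0:ℝ) 1) {z : ℝ} (hz : 0 ≤ z) :
    psiX ψ φ x z ≤ 1 := by
  rcases eq_or_lt_of_le hz with rfl | hz'
  · rw [psiX_zero hg hl hld hx]
  · rw [← psiX_zero hg hl hld hx]
    exact (psiX_strictAnti hg hl hld hx le_rfl hz').le

lemma psiX_continuousAt (hg : IsStrictGenerator d ψ φ) (hl : 1 ≤ l) (hld : l ≤ d - 2)
    (hx : ∀ i, x i ∈ Ioo (0:ℝ) 1) {z : ℝ} (hz : 0 ≤ z) :
    ContinuousAt (psiX ψ φ x) z := by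
  have hc := sum_phi_pos hg hl hx
  have hin : ContinuousAt (fun w : ℝ => iteratedDeriv l ψ ((∑ i, φ (x i)) + w)) z := by
    apply ContinuousAt.comp (continuousAt_iter hg hld (by linarith))
    exact continuousAt_const.add continuousAt_id
  exact hin.div_const _

lemma psiX_tendsto_zero (hg : IsStrictGenerator d ψ φ) (hl : 1 ≤ l) (hld : l ≤ d - 2)
    (hx : ∀ i, x i ∈ Ioo (0:ℝ) 1) :
    Tendsto (psiX ψ φ x) atTop (nhds 0) := by
  have h1 : Tendsto (fun w : ℝ => (∑ i, φ (x i)) + w) atTop atTop :=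
    tendsto_atTop_add_const_left atTop _ tendsto_id
  have h2 := (iter_tendsto_zero hg l hld).comp h1
  have h3 := h2.div_const (iteratedDeriv l ψ (∑ i, φ (x i)))
  have h4 : psiX ψ φ x = fun a => iteratedDeriv l ψ (∑ i, φ (x i) + a) / iteratedDeriv l ψ (∑ i, φ (x i)) := rfl
  rw [h4]
  simpa [psiX, Function.comp] using h3

/-- pointwise convergence of the conditional generators. -/
lemma psiX_conv (hg : IsStrictGenerator d ψ φ)
    (hgn : ∀ n, IsStrictGenerator d (ψn n) (φn n))
    (hψc : ∀ z : ℝ, 0 ≤ z → Tendsto (fun n => ψn n z) atTop (nhds (ψ z)))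
    (hl : 1 ≤ l) (hld : l ≤ d - 2) (hx : ∀ i, x i ∈ Ioo (0:ℝ) 1) :
    ∀ z : ℝ, 0 ≤ z →
      Tendsto (fun n => psiX (ψn n) (φn n) x z) atTop (nhds (psiX ψ φ x z)) := by
  have hiter := iter_conv hg hgn hψc l hld
  have hφ := phi_conv hgn hg hψc
  have hcsum : Tendsto (fun n => ∑ i, φn n (x i)) atTop (nhds (∑ i, φ (x i))) :=
    tendsto_finset_sum _ (fun i _ => hφ (x i) (hx i).1 (hx i).2)
  have hcpos := sum_phi_pos hg hl hx
  intro z hz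
  have hmono : ∀ n, ∀ w₁ w₂ : ℝ, 0 < w₁ → w₁ ≤ w₂ →
      (-1:ℝ)^l * iteratedDeriv l (ψn n) w₂ ≤ (-1:ℝ)^l * iteratedDeriv l (ψn n) w₁ :=
    fun n w1 w2 h1 h2 => signed_antitoneOn (hgn n) hl hld (mem_Ioi.2 h1)
      (mem_Ioi.2 (lt_of_lt_of_le h1 h2)) h2
  have hcsq : ∀ w : ℝ, 0 < w → Tendsto (fun n => (-1:ℝ)^l * iteratedDeriv l (ψn n) w)
      atTop (nhds ((-1:ℝ)^l * iteratedDeriv l ψ w)) :=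
    fun w hw => (hiter w hw).const_mul _
  have hnum : Tendsto (fun n => (-1:ℝ)^l * iteratedDeriv l (ψn n) ((∑ i, φn n (x i)) + z))
      atTop (nhds ((-1:ℝ)^l * iteratedDeriv l ψ ((∑ i, φ (x i)) + z))) := by
    apply sq_anti hmono hcsq
    · exact continuousAt_const.mul (continuousAt_iter hg hld (by linarith))
    · linarith
    · exact hcsum.add_const z
  have hden : Tendsto (fun n => (-1:ℝ)^l * iteratedDeriv l (ψn n) (∑ i, φn n (x i)))
      atTop (nhds ((-1:ℝ)^l * iteratedDeriv l ψ (∑ i, φ (x i)))) := by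
    apply sq_anti hmono hcsq
    · exact continuousAt_const.mul (continuousAt_iter hg hld hcpos)
    · exact hcpos
    · exact hcsum
  have hdenpos := psiX_den_pos hg hl hld hx
  have H := hnum.div hden (ne_of_gt hdenpos)
  rw [← psiX_eq_signed l z] at H
  exact Tendsto.congr (fun n => (psiX_eq_signed l z).symm) H

/-- uniform convergence of the conditional generators on `[0,∞)`. -/
lemma psiX_unif (hg : IsStrictGenerator d ψ φ)
    (hgn : ∀ n, IsStrictGenerator d (ψn n) (φn n))
    (hψc : ∀ z : ℝ, 0 ≤ z → Tendsto (fun n => ψn n z) atTop (nhds (ψ z)))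
    (hl : 1 ≤ l) (hld : l ≤ d - 2) (hx : ∀ i, x i ∈ Ioo (0:ℝ) 1) :
    TendstoUniformlyOn (fun n => psiX (ψn n) (φn n) x) (psiX ψ φ x) atTop (Ici 0) := by
  apply polya
  · exact fun n z1 z2 h1 h12 => psiX_antitone (hgn n) hl hld hx h1 h12
  · exact fun n z hz => (psiX_pos (hgn n) hl hld hx hz).le
  · exact fun z1 z2 h1 h12 => psiX_antitone hg hl hld hx h1 h12
  · exact fun z hz => psiX_continuousAt hg hl hld hx hz
  · exact fun z hz => (psiX_pos hg hl hld hx hz).le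
  · exact psiX_conv hg hgn hψc hl hld hx
  · exact psiX_tendsto_zero hg hl hld hx

/-! ### the pseudo-inverse of the conditional generator -/

lemma psiX_set_nonempty (hg : IsStrictGenerator d ψ φ) (hl : 1 ≤ l) (hld : l ≤ d - 2)
    (hx : ∀ i, x i ∈ Ioo (0:ℝ) 1) {u : ℝ} (h0 : 0 < u) :
    {z : ℝ | 0 ≤ z ∧ psiX ψ φ x z ≤ u}.Nonempty := by
  have hev := (psiX_tendsto_zero hg hl hld hx).eventually (gt_mem_nhds h0)
  obtain ⟨z, hz1, hz2⟩ := (hev.and (eventually_ge_atTop (0:ℝ))).exists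
  exact ⟨z, hz2, hz1.le⟩

lemma pseudoInv_spec (hg : IsStrictGenerator d ψ φ) (hl : 1 ≤ l) (hld : l ≤ d - 2)
    (hx : ∀ i, x i ∈ Ioo (0:ℝ) 1) {u : ℝ} (h0 : 0 < u) (h1 : u ≤ 1) :
    0 ≤ pseudoInv (psiX ψ φ x) u ∧ psiX ψ φ x (pseudoInv (psiX ψ φ x) u) = u := by
  set P := psiX ψ φ x with hP
  set A := {z : ℝ | 0 ≤ z ∧ P z ≤ u} with hA
  have hdef : pseudoInv P u = sInf A := rfl
  have hbdd : BddBelow A := ⟨0, fun z hz => hz.1⟩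
  have hne : A.Nonempty := psiX_set_nonempty hg hl hld hx h0
  have ha0 : 0 ≤ sInf A := le_csInf hne (fun z hz => hz.1)
  have hle : P (sInf A) ≤ u := by
    have hseq : ∀ k : ℕ, P (sInf A + 1/((k:ℝ)+1)) ≤ u := by
      intro k
      obtain ⟨z, hzA, hz⟩ := exists_lt_of_csInf_lt hne
        (show sInf A < sInf A + 1/((k:ℝ)+1) by
          have : (0:ℝ) < 1/((k:ℝ)+1) := by positivity
          linarith)
      calc P (sInf A + 1/((k:ℝ)+1)) ≤ P z := psiX_antitone hg hl hld hx hzA.1 hz.le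
        _ ≤ u := hzA.2
    have hlim : Tendsto (fun k : ℕ => P (sInf A + 1/((k:ℝ)+1))) atTop (nhds (P (sInf A))) := by
      apply (psiX_continuousAt hg hl hld hx ha0).tendsto.comp
      have h2 : Tendsto (fun k : ℕ => 1/((k:ℝ)+1)) atTop (nhds 0) :=
        tendsto_one_div_add_atTop_nhds_zero_nat
      simpa using tendsto_const_nhds.add h2
    exact le_of_tendsto hlim (Eventually.of_forall hseq)
  have hge : u ≤ P (sInf A) := by
    rcases eq_or_lt_of_le ha0 with h0' | h0'
    · rw [← h0', hP, psiX_zero hg hl hld hx]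
      exact h1
    · have hnot : ∀ z, 0 ≤ z → z < sInf A → u < P z := by
        intro z hz0 hzlt
        by_contra hle'
        push_neg at hle'
        exact absurd (csInf_le hbdd ⟨hz0, hle'⟩) (not_le.2 hzlt)
      have hseq : ∀ k : ℕ, u ≤ P (sInf A - sInf A/((k:ℝ)+2)) := by
        intro k
        have hd1 : sInf A/((k:ℝ)+2) ≤ sInf A := by
          apply div_le_self ha0
          have : (0:ℝ) ≤ (k:ℝ) := Nat.cast_nonneg k
          linarith
        have hd2 : 0 < sInf A/((k:ℝ)+2) := by positivity
        exact (hnot _ (by linarith) (by linarith)).le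
      have hlim : Tendsto (fun k : ℕ => P (sInf A - sInf A/((k:ℝ)+2)))
          atTop (nhds (P (sInf A))) := by
        apply (psiX_continuousAt hg hl hld hx ha0).tendsto.comp
        have h2 : Tendsto (fun k : ℕ => sInf A/((k:ℝ)+2)) atTop (nhds 0) := by
          apply Tendsto.div_atTop (tendsto_const_nhds)
          have := tendsto_natCast_atTop_atTop (R := ℝ)
          exact tendsto_atTop_add_const_right atTop 2 this
        simpa using tendsto_const_nhds.sub h2
      exact ge_of_tendsto hlim (Eventually.of_forall hseq)
  exact ⟨by rw [hdef]; exact ha0, by rw [hdef]; exact le_antisymm hle hge⟩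

/-- convergence of the pseudo-inverses of the conditional generators. -/
lemma pseudoInv_conv (hg : IsStrictGenerator d ψ φ)
    (hgn : ∀ n, IsStrictGenerator d (ψn n) (φn n))
    (hψc : ∀ z : ℝ, 0 ≤ z → Tendsto (fun n => ψn n z) atTop (nhds (ψ z)))
    (hl : 1 ≤ l) (hld : l ≤ d - 2) (hx : ∀ i, x i ∈ Ioo (0:ℝ) 1)
    {u : ℝ} (h0 : 0 < u) (h1 : u ≤ 1) :
    Tendsto (fun n => pseudoInv (psiX (ψn n) (φn n) x) u) atTop
      (nhds (pseudoInv (psiX ψ φ x) u)) := by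
  obtain ⟨ha0, haP⟩ := pseudoInv_spec hg hl hld hx h0 h1
  set a := pseudoInv (psiX ψ φ x) u with haa
  rw [Metric.tendsto_nhds]
  intro ε hε
  have hconv := psiX_conv hg hgn hψc hl hld hx
  have hup : psiX ψ φ x (a + ε/2) < u := by
    rw [← haP]
    exact psiX_strictAnti hg hl hld hx ha0 (by linarith)
  have hev1 := (hconv (a + ε/2) (by linarith)).eventually (gt_mem_nhds hup)
  have hev1' : ∀ᶠ n in atTop, pseudoInv (psiX (ψn n) (φn n) x) u ≤ a + ε/2 := by
    filter_upwards [hev1] with n hn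
    exact csInf_le ⟨0, fun z hz => hz.1⟩ ⟨by linarith, hn.le⟩
  have hev2 : ∀ᶠ n in atTop, a - ε < pseudoInv (psiX (ψn n) (φn n) x) u := by
    rcases lt_or_ge a (ε/2) with hc | hc
    · refine Eventually.of_forall fun n => ?_
      have := (pseudoInv_spec (hgn n) hl hld hx h0 h1).1
      linarith
    · have hlow : u < psiX ψ φ x (a - ε/2) := by
        rw [← haP]
        exact psiX_strictAnti hg hl hld hx (by linarith) (by linarith)
      have hev := (hconv (a - ε/2) (by linarith)).eventually (lt_mem_nhds hlow)
      filter_upwards [hev] with n hn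
      have hlb : a - ε/2 ≤ pseudoInv (psiX (ψn n) (φn n) x) u := by
        apply le_csInf (psiX_set_nonempty (hgn n) hl hld hx h0)
        intro z hz
        by_contra hlt
        push_neg at hlt
        have := psiX_antitone (hgn n) hl hld hx hz.1 (le_of_lt hlt)
        linarith [hz.2]
      linarith
  filter_upwards [hev1', hev2] with n h1' h2'
  rw [Real.dist_eq, abs_lt]
  constructor <;> linarith

/-- pointwise convergence of the conditional copulas. -/
lemma condCop_conv (hg : IsStrictGenerator d ψ φ)
    (hgn : ∀ n, IsStrictGenerator d (ψn n) (φn n))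
    (hψc : ∀ z : ℝ, 0 ≤ z → Tendsto (fun n => ψn n z) atTop (nhds (ψ z)))
    (hl : 1 ≤ l) (hld : l ≤ d - 2) (hx : ∀ i, x i ∈ Ioo (0:ℝ) 1)
    {k : ℕ} (u : Fin k → ℝ) (hu : ∀ j, u j ∈ Icc (0:ℝ) 1) :
    Tendsto (fun n => condCop (ψn n) (φn n) x u) atTop (nhds (condCop ψ φ x u)) := by
  by_cases hzero : ∃ j, u j ≤ 0
  · have h1 : (fun n => condCop (ψn n) (φn n) x u) = fun _ => (0:ℝ) :=
      funext fun n => by rw [condCop, if_pos hzero]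
    rw [h1, condCop, if_pos hzero]
    exact tendsto_const_nhds
  · have hpos : ∀ j, 0 < u j := by
      intro j
      by_contra hc
      exact hzero ⟨j, not_lt.1 hc⟩
    have hS : Tendsto (fun n => ∑ j, pseudoInv (psiX (ψn n) (φn n) x) (u j)) atTop
        (nhds (∑ j, pseudoInv (psiX ψ φ x) (u j))) :=
      tendsto_finset_sum _ (fun j _ =>
        pseudoInv_conv hg hgn hψc hl hld hx (hpos j) (hu j).2)
    have hS0 : 0 ≤ ∑ j, pseudoInv (psiX ψ φ x) (u j) :=
      Finset.sum_nonneg (fun j _ => (pseudoInv_spec hg hl hld hx (hpos j) (hu j).2).1)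
    have hSn0 : ∀ n, 0 ≤ ∑ j, pseudoInv (psiX (ψn n) (φn n) x) (u j) :=
      fun n => Finset.sum_nonneg (fun j _ =>
        (pseudoInv_spec (hgn n) hl hld hx (hpos j) (hu j).2).1)
    have hfn : (fun n => condCop (ψn n) (φn n) x u)
        = fun n => psiX (ψn n) (φn n) x (∑ j, pseudoInv (psiX (ψn n) (φn n) x) (u j)) :=
      funext fun n => by rw [condCop, if_neg hzero]
    rw [hfn, condCop, if_neg hzero]
    have hunif := psiX_unif hg hgn hψc hl hld hx
    rw [Metric.tendstoUniformlyOn_iff] at hunif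
    rw [Metric.tendsto_nhds]
    intro ε hε
    have hcont := ((psiX_continuousAt hg hl hld hx hS0).tendsto.comp hS)
    simp only [Function.comp_def] at hcont
    have hev1 := Metric.tendsto_nhds.1 hcont (ε/2) (by linarith)
    filter_upwards [hunif (ε/2) (by linarith), hev1] with n h1 h2
    have h3 := h1 _ (mem_Ici.2 (hSn0 n))
    rw [dist_comm] at h3
    have htri := dist_triangle
      (psiX (ψn n) (φn n) x (∑ j, pseudoInv (psiX (ψn n) (φn n) x) (u j)))
      (psiX ψ φ x (∑ j, pseudoInv (psiX (ψn n) (φn n) x) (u j)))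
      (psiX ψ φ x (∑ j, pseudoInv (psiX ψ φ x) (u j)))
    linarith

-- more lemmas to come
end SG


/-- **Theorem 6.5** (convergence of conditional copulas). Let `C, C₁, C₂, …` be strict
`d`-dimensional Archimedean copulas with strict, normalized generators
`ψ, ψ₁, ψ₂, …` (normalization: `ψ(1) = 1/2`). If `(C_n)` converges pointwise to `C` on
`[0,1]^d`, then for every `ℓ ∈ {1,…,d-2}` and every fixed `x ∈ (0,1)^ℓ` the conditional
copulas converge pointwise on `[0,1]^{d-ℓ}`, i.e. `C_nˣ(u) → Cˣ(u)` for every `u`, and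
the conditional generators converge uniformly on `[0,∞)`: `ψ_nˣ → ψˣ`. -/
theorem conditional_copula_convergence
    (d : ℕ) (hd : 2 ≤ d)
    (ψ φ : ℝ → ℝ) (hgen : IsStrictGenerator d ψ φ) (hnorm : ψ 1 = 1 / 2)
    (ψn φn : ℕ → ℝ → ℝ) (hgenn : ∀ n, IsStrictGenerator d (ψn n) (φn n))
    (hnormn : ∀ n, ψn n 1 = 1 / 2)
    (hconv : ∀ v : Fin d → ℝ, (∀ i, v i ∈ Icc (0:ℝ) 1) →
      Tendsto (fun n => archCopF (ψn n) (φn n) v) atTop (nhds (archCopF ψ φ v))) :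
    ∀ l : ℕ, 1 ≤ l → l ≤ d - 2 → ∀ x : Fin l → ℝ, (∀ i, x i ∈ Ioo (0:ℝ) 1) →
      (∀ u : Fin (d - l) → ℝ, (∀ j, u j ∈ Icc (0:ℝ) 1) →
        Tendsto (fun n => condCop (ψn n) (φn n) x u) atTop (nhds (condCop ψ φ x u))) ∧
      TendstoUniformlyOn (fun n => psiX (ψn n) (φn n) x) (psiX ψ φ x) atTop (Ici 0) := by
  intro l hl1 hld x hx
  have hd3 : 3 ≤ d := by omega
  have hψc := SG.psi_conv hgen hgenn hnorm hnormn hconv hd3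
  exact ⟨fun u hu => SG.condCop_conv hgen hgenn hψc hl1 hld hx u hu,
    SG.psiX_unif hgen hgenn hψc hl1 hld hx⟩
end
end

section
/- Let C be a d-dimensional Archimedean copula with generator ψ, let ℓ ∈ {1,…,d−2} and x ∈ (0,1)^ℓ. If C is conditionally increasing — equivalently, if the function z ↦ (−1)^{d−1} D⁻ψ^{(d−2)}(z) is log-convex on (0,∞) — then the conditional copula Cˣ is conditionally increasing; in particular, the function z ↦ (−1)^{d−ℓ−1}(ψˣ)^{(d−ℓ−1)}(z) = (−1)^{d−1}D⁻ψ^{(d−2)}(Σ_{i=1}^ℓ φ(x_i)+z) / ((−1)^ℓ ψ^{(ℓ)}(Σ_{i=1}^ℓ φ(x_i))) is log-convex on (0,∞). -/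
open MeasureTheory ProbabilityTheory Set Filter Topology
open scoped ENNReal

noncomputable section
attribute [local instance] Classical.propDecidable

/-- The left-hand derivative `D⁻f(z)`. -/
def leftDeriv (f : ℝ → ℝ) (z : ℝ) : ℝ := derivWithin f (Iio z) z

/-- `f` is log-convex on `s`: `f > 0` on `s` and `log ∘ f` is convex on `s`. -/
def LogConvexOn (s : Set ℝ) (f : ℝ → ℝ) : Prop :=
  (∀ z ∈ s, 0 < f z) ∧ ConvexOn ℝ s (fun z => Real.log (f z))

lemma my_iteratedDeriv_div_const (f : ℝ → ℝ) (c : ℝ) (n : ℕ) :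
    iteratedDeriv n (fun z => f z / c) = fun z => iteratedDeriv n f z / c := by
  induction n with
  | zero => simp [iteratedDeriv_zero]
  | succ n IH =>
    funext z
    rw [iteratedDeriv_succ, IH, iteratedDeriv_succ]
    exact deriv_div_const c

lemma my_iteratedDeriv_iteratedDeriv (f : ℝ → ℝ) (m n : ℕ) :
    iteratedDeriv m (iteratedDeriv n f) = iteratedDeriv (m + n) f := by
  induction m with
  | zero => simp
  | succ m IH =>
    rw [iteratedDeriv_succ, IH, ← iteratedDeriv_succ]
    rw [Nat.add_right_comm m 1 n]

lemma myDiffWithin_shift {G : ℝ → ℝ} {s z : ℝ}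
    (h : DifferentiableWithinAt ℝ (fun w => G (s + w)) (Iio z) z) :
    DifferentiableWithinAt ℝ G (Iio (s + z)) (s + z) := by
  have hmaps : MapsTo (fun u : ℝ => u - s) (Iio (s + z)) (Iio z) := fun u hu => by
    simp only [mem_Iio] at hu ⊢; linarith
  have hz' : (fun u : ℝ => u - s) (s + z) = z := by simp
  have hinner : DifferentiableWithinAt ℝ (fun u : ℝ => u - s) (Iio (s + z)) (s + z) :=
    (differentiable_id.sub_const s).differentiableAt.differentiableWithinAt
  have h2 : DifferentiableWithinAt ℝ (fun w => G (s + w)) (Iio z) ((fun u : ℝ => u - s) (s + z)) := by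
    simpa using h
  have hc := DifferentiableWithinAt.comp (s + z) h2 hinner hmaps
  have heq : ((fun w => G (s + w)) ∘ fun u : ℝ => u - s) = G := by
    funext u; show G (s + (u - s)) = G u; congr 1; ring
  rwa [heq] at hc

lemma my_leftDeriv_comp_const_add (G : ℝ → ℝ) (s z : ℝ) :
    leftDeriv (fun w => G (s + w)) z = leftDeriv G (s + z) := by
  unfold leftDeriv
  by_cases h : DifferentiableWithinAt ℝ G (Iio (s + z)) (s + z)
  · have hmaps : MapsTo (fun w : ℝ => s + w) (Iio z) (Iio (s + z)) := fun w hw => by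
      simp only [mem_Iio] at hw ⊢; linarith
    have hinner : HasDerivWithinAt (fun w : ℝ => s + w) 1 (Iio z) z :=
      (hasDerivWithinAt_id z (Iio z)).const_add s
    have hcomp := HasDerivWithinAt.comp (x := z) h.hasDerivWithinAt hinner hmaps
    rw [← mul_one (derivWithin G (Iio (s + z)) (s + z))]
    exact hcomp.derivWithin (uniqueDiffWithinAt_Iio z)
  · have h' : ¬ DifferentiableWithinAt ℝ (fun w => G (s + w)) (Iio z) z := fun hc =>
      h (myDiffWithin_shift hc)
    rw [derivWithin_zero_of_not_differentiableWithinAt h,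
      derivWithin_zero_of_not_differentiableWithinAt h']

lemma my_leftDeriv_div_const (G : ℝ → ℝ) (c : ℝ) (hc : c ≠ 0) (z : ℝ) :
    leftDeriv (fun w => G w / c) z = leftDeriv G z / c := by
  unfold leftDeriv
  by_cases h : DifferentiableWithinAt ℝ G (Iio z) z
  · exact (h.hasDerivWithinAt.div_const c).derivWithin (uniqueDiffWithinAt_Iio z)
  · have h' : ¬ DifferentiableWithinAt ℝ (fun w => G w / c) (Iio z) z := by
      intro hc'
      have h2 := hc'.mul_const c
      apply h
      have heq : (fun w => G w / c * c) = G := by funext w; field_simp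
      rwa [heq] at h2
    rw [derivWithin_zero_of_not_differentiableWithinAt h,
      derivWithin_zero_of_not_differentiableWithinAt h', zero_div]

lemma my_leftDeriv_zero_on_right {G : ℝ → ℝ} {z : ℝ}
    (h : ∀ t, z ≤ t → G t = 0) : leftDeriv G (z + 1) = 0 := by
  unfold leftDeriv
  have hmem : Ioi z ∈ 𝓝[Iio (z + 1)] (z + 1) :=
    mem_nhdsWithin_of_mem_nhds (Ioi_mem_nhds (by linarith))
  have hev : G =ᶠ[𝓝[Iio (z + 1)] (z + 1)] (fun _ => (0 : ℝ)) := by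
    filter_upwards [hmem] with t ht
    exact h t (le_of_lt ht)
  rw [hev.derivWithin_eq (h (z + 1) (by linarith))]
  exact congrFun (derivWithin_const (Iio (z + 1)) (0 : ℝ)) (z + 1)

/-- **Proposition 6.8** (conditional increasingness carries over). Let `C` be a
`d`-dimensional Archimedean copula with generator `ψ`, `ℓ ∈ {1,…,d-2}` and
`x ∈ (0,1)^ℓ`. If `C` is conditionally increasing — equivalently (by the
Müller–Scarsini characterization), if `z ↦ (−1)^{d-1} D⁻ψ^{(d-2)}(z)` is log-convex on
`(0,∞)` — then the conditional copula `Cˣ` is conditionally increasing; in particular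
the function
`z ↦ (−1)^{d-ℓ-1}(ψˣ)^{(d-ℓ-1)}(z) = (−1)^{d-1}D⁻ψ^{(d-2)}(Σᵢφ(xᵢ)+z)/((−1)^ℓ ψ^{(ℓ)}(Σᵢφ(xᵢ)))`
is log-convex on `(0,∞)`. -/
theorem conditional_copula_conditionally_increasing
    (d l : ℕ) (hd : 2 ≤ d) (hl1 : 1 ≤ l) (hl2 : l ≤ d - 2)
    (ψ φ : ℝ → ℝ) (hgen : IsRealGenerator d ψ φ)
    (x : Fin l → ℝ) (hx : ∀ i, x i ∈ Ioo (0:ℝ) 1)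
    (hCI : LogConvexOn (Ioi 0)
      (fun z => (-1:ℝ) ^ (d - 1) * leftDeriv (iteratedDeriv (d - 2) ψ) z)) :
    (∀ z : ℝ, 0 < z →
      (-1:ℝ) ^ (d - l - 1) * leftDeriv (iteratedDeriv (d - l - 2) (psiX ψ φ x)) z
        = ((-1:ℝ) ^ (d - 1) * leftDeriv (iteratedDeriv (d - 2) ψ) ((∑ i, φ (x i)) + z))
          / ((-1:ℝ) ^ l * iteratedDeriv l ψ (∑ i, φ (x i)))) ∧
    LogConvexOn (Ioi 0) (fun z =>
      ((-1:ℝ) ^ (d - 1) * leftDeriv (iteratedDeriv (d - 2) ψ) ((∑ i, φ (x i)) + z))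
        / ((-1:ℝ) ^ l * iteratedDeriv l ψ (∑ i, φ (x i)))) := by

  obtain ⟨e, rfl⟩ : ∃ e, d = e + 2 := ⟨d - 2, by omega⟩
  obtain ⟨r, rfl⟩ : ∃ r, e = l + r := ⟨e - l, by omega⟩
  have E2 : l + r + 2 - l - 2 = r := by omega
  have E3 : l + r + 2 - l - 1 = r + 1 := by omega
  have E0 : l + r + 2 - 2 = l + r := rfl
  have E1 : l + r + 2 - 1 = l + r + 1 := rfl
  rw [E2, E3]
  simp only [E0, E1] at hCI ⊢
  set s := ∑ i, φ (x i) with hs_def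
  -- positivity of s
  have hphi_pos : ∀ i, 0 < φ (x i) := by
    intro i
    have h0 : 0 ≤ φ (x i) := hgen.xi_nonneg _ (hx i).1 (le_of_lt (hx i).2)
    rcases h0.lt_or_eq with h | h
    · exact h
    · exfalso
      have := hgen.eta_xi (x i) (hx i).1 (le_of_lt (hx i).2)
      rw [← h, hgen.at_zero] at this
      have := (hx i).2
      linarith
  have hs_pos : 0 < s := by
    rw [hs_def]
    have : Nonempty (Fin l) := ⟨⟨0, by omega⟩⟩
    exact Finset.sum_pos (fun i _ => hphi_pos i) Finset.univ_nonempty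
  -- smoothness on Ioi 0
  have hCO : ContDiffOn ℝ ((l + r : ℕ) : ℕ∞) ψ (Ioi 0) := fun z hz =>
    (hgen.smooth z hz).contDiffWithinAt
  have hdiffAt : ∀ m, m < l + r → ∀ z : ℝ, 0 < z → DifferentiableAt ℝ (iteratedDeriv m ψ) z := by
    intro m hm z hz
    have h1 : DifferentiableWithinAt ℝ (iteratedDerivWithin m ψ (Ioi 0)) (Ioi 0) z :=
      hCO.differentiableOn_iteratedDerivWithin (by exact_mod_cast hm) (uniqueDiffOn_Ioi 0) z hz
    have heq : Set.EqOn (iteratedDerivWithin m ψ (Ioi 0)) (iteratedDeriv m ψ) (Ioi 0) := by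
      intro w hw
      rw [iteratedDerivWithin_eq_iteratedFDerivWithin, iteratedDeriv_eq_iteratedFDeriv,
        iteratedFDerivWithin_of_isOpen m isOpen_Ioi hw]
    exact ((h1.congr (fun w hw => (heq hw).symm) (heq hz).symm).differentiableAt
      (isOpen_Ioi.mem_nhds hz))
  have hnn : ∀ m, m ≤ l + r → ∀ z : ℝ, 0 < z → 0 ≤ (-1 : ℝ) ^ m * iteratedDeriv m ψ z := by
    intro m hm z hz
    exact hgen.alt_sign m (by omega) z hz
  -- positivity chain
  have key : ∀ k : ℕ, k ≤ r → ∀ z : ℝ, 0 < z → 0 < (-1 : ℝ) ^ (l + r - k) * iteratedDeriv (l + r - k) ψ z := by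
    intro k
    induction k with
    | zero =>
      intro _ z hz
      simp only [Nat.sub_zero]
      rcases (hnn (l + r) le_rfl z hz).lt_or_eq with h | h
      · exact h
      · exfalso
        have hzero : ∀ t, z ≤ t → iteratedDeriv (l + r) ψ t = 0 := by
          intro t ht
          have h1 : 0 ≤ (-1 : ℝ) ^ (l + r) * iteratedDeriv (l + r) ψ t := hnn _ le_rfl t (lt_of_lt_of_le hz ht)
          have h2 : (-1 : ℝ) ^ (l + r) * iteratedDeriv (l + r) ψ t ≤ (-1 : ℝ) ^ (l + r) * iteratedDeriv (l + r) ψ z :=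
            hgen.top_antitone (mem_Ioi.2 hz) (mem_Ioi.2 (lt_of_lt_of_le hz ht)) ht
          have h3 : (-1 : ℝ) ^ (l + r) * iteratedDeriv (l + r) ψ t = 0 :=
            le_antisymm (le_trans h2 (le_of_eq h.symm)) h1
          have h4 : ((-1 : ℝ) ^ (l + r)) ≠ 0 := by positivity
          exact by
            rcases mul_eq_zero.1 h3 with h5 | h5
            · exact absurd h5 h4
            · exact h5
        have hld : leftDeriv (iteratedDeriv (l + r) ψ) (z + 1) = 0 :=
          my_leftDeriv_zero_on_right hzero
        have hpos : 0 < (-1 : ℝ) ^ (l + r + 1) * leftDeriv (iteratedDeriv (l + r) ψ) (z + 1) :=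
          hCI.1 (z + 1) (mem_Ioi.2 (by linarith))
        rw [hld] at hpos
        simp at hpos
    | succ k IH =>
      intro hk z hz
      have hm : l + r - (k + 1) < l + r := by omega
      have hm1 : l + r - (k + 1) + 1 = l + r - k := by omega
      set m := l + r - (k + 1) with hm_def
      have hcontOn : ContinuousOn (fun w => (-1 : ℝ) ^ m * iteratedDeriv m ψ w) (Ioi 0) :=
        continuousOn_const.mul (fun w hw => (hdiffAt m hm w hw).continuousAt.continuousWithinAt)
      have hanti : StrictAntiOn (fun w => (-1 : ℝ) ^ m * iteratedDeriv m ψ w) (Ioi 0) := by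
        apply strictAntiOn_of_deriv_neg (convex_Ioi 0) hcontOn
        intro w hw
        rw [interior_Ioi] at hw
        rw [deriv_const_mul_field]
        have hd1 : deriv (iteratedDeriv m ψ) w = iteratedDeriv (m + 1) ψ w := by
          rw [← iteratedDeriv_succ]
        rw [hd1]
        have hp := IH (by omega) w hw
        rw [← hm1] at hp
        have hpow : ((-1 : ℝ) ^ (m + 1)) = -((-1 : ℝ) ^ m) := by ring
        rw [hpow] at hp
        nlinarith
      rcases (hnn m (by omega) z hz).lt_or_eq with h | h
      · exact h
      · exfalso
        have h1 := hanti (mem_Ioi.2 hz) (mem_Ioi.2 (by linarith : (0:ℝ) < z + 1)) (by linarith)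
        have h2 := hnn m (by omega) (z + 1) (by linarith)
        simp only at h1
        rw [← h] at h1
        linarith
  have hKpos : 0 < (-1 : ℝ) ^ l * iteratedDeriv l ψ s := by
    have := key r le_rfl s hs_pos
    simpa using this
  have hc_ne : iteratedDeriv l ψ s ≠ 0 := by
    intro h
    rw [h, mul_zero] at hKpos
    exact lt_irrefl 0 hKpos
  -- the derivative identity
  have hID : iteratedDeriv r (psiX ψ φ x) = fun z => iteratedDeriv (l + r) ψ (s + z) / iteratedDeriv l ψ s := by
    have h1 : psiX ψ φ x = fun z => (fun w => iteratedDeriv l ψ (s + w)) z / iteratedDeriv l ψ s := rfl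
    rw [h1, my_iteratedDeriv_div_const]
    funext z
    rw [iteratedDeriv_comp_const_add r (iteratedDeriv l ψ) s]
    rw [my_iteratedDeriv_iteratedDeriv, Nat.add_comm r l]
  have hld_eq : ∀ z : ℝ, leftDeriv (iteratedDeriv r (psiX ψ φ x)) z
      = leftDeriv (iteratedDeriv (l + r) ψ) (s + z) / iteratedDeriv l ψ s := by
    intro z
    rw [hID]
    have h2 : (fun z => iteratedDeriv (l + r) ψ (s + z) / iteratedDeriv l ψ s)
        = fun z => (fun w => iteratedDeriv (l + r) ψ (s + w)) z / iteratedDeriv l ψ s := rfl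
    rw [h2, my_leftDeriv_div_const _ _ hc_ne, my_leftDeriv_comp_const_add]
  constructor
  · intro z _
    rw [hld_eq z]
    have hl2r : ((-1 : ℝ) ^ l) ≠ 0 := by positivity
    field_simp
    ring
  · constructor
    · intro z hz
      have hA := hCI.1 (s + z) (mem_Ioi.2 (by linarith [mem_Ioi.1 hz]))
      exact div_pos hA hKpos
    · refine ⟨convex_Ioi 0, ?_⟩
      intro p hp q hq a b ha hb hab
      have hsp : s + p ∈ Ioi (0:ℝ) := mem_Ioi.2 (by linarith [mem_Ioi.1 hp])
      have hsq : s + q ∈ Ioi (0:ℝ) := mem_Ioi.2 (by linarith [mem_Ioi.1 hq])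
      have h1 := hCI.2.2 hsp hsq ha hb hab
      simp only [smul_eq_mul] at h1 ⊢
      have harg : a * (s + p) + b * (s + q) = s + (a * p + b * q) := by
        linear_combination s * hab
      rw [harg] at h1
      have hA0 : 0 < (-1 : ℝ) ^ (l + r + 1) * leftDeriv (iteratedDeriv (l + r) ψ)
          (s + (a * p + b * q)) := hCI.1 (s + (a * p + b * q))
        (mem_Ioi.2 (by nlinarith [mem_Ioi.1 hp, mem_Ioi.1 hq]))
      have hA1 : 0 < (-1 : ℝ) ^ (l + r + 1) * leftDeriv (iteratedDeriv (l + r) ψ) (s + p) :=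
        hCI.1 _ hsp
      have hA2 : 0 < (-1 : ℝ) ^ (l + r + 1) * leftDeriv (iteratedDeriv (l + r) ψ) (s + q) :=
        hCI.1 _ hsq
      rw [Real.log_div hA0.ne' hKpos.ne', Real.log_div hA1.ne' hKpos.ne',
        Real.log_div hA2.ne' hKpos.ne']
      set K := Real.log ((-1 : ℝ) ^ l * iteratedDeriv l ψ s) with hK_def
      set L0 := Real.log ((-1 : ℝ) ^ (l + r + 1) * leftDeriv (iteratedDeriv (l + r) ψ)
        (s + (a * p + b * q))) with hL0
      set L1 := Real.log ((-1 : ℝ) ^ (l + r + 1) * leftDeriv (iteratedDeriv (l + r) ψ)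
        (s + p)) with hL1
      set L2 := Real.log ((-1 : ℝ) ^ (l + r + 1) * leftDeriv (iteratedDeriv (l + r) ψ)
        (s + q)) with hL2
      have expand : a * (L1 - K) + b * (L2 - K) = a * L1 + b * L2 - K := by
        linear_combination (-K) * hab
      linarith [h1, expand]
end
end

section
/- Let H be a d-dimensional distribution function and ℓ ∈ {1,…,d−1}. If the ℓ-th order iterated partial derivatives of H in the first ℓ coordinates exist and are continuous, then for every fixed x ∈ ℝ^ℓ the function F_x(y) := ∂^ℓ H(x,y)/∂x₁ ∂x₂ ⋯ ∂x_ℓ is (d−ℓ)-increasing, i.e. V_{F_x}((a,b]) ≥ 0 for all a, b ∈ ℝ^{d−ℓ} with b_j ≥ a_j for all j. -/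
open MeasureTheory ProbabilityTheory Set Filter Topology
open scoped ENNReal

noncomputable section

/-- The lower-left orthant `(−∞, y] = (−∞,y₁] × ⋯ × (−∞,y_k]` in `ℝ^k`. -/
def orthant {k : ℕ} (y : Fin k → ℝ) : Set (Fin k → ℝ) := {t | ∀ i, t i ≤ y i}

/-- The iterated partial derivative of `H(x, y)` in the first `j` of the `x`-coordinates:
`partialD H j = ∂^j H / ∂x_j ⋯ ∂x_1`. -/
noncomputable def partialD {l m : ℕ} (H : (Fin l → ℝ) → (Fin m → ℝ) → ℝ) :
    ℕ → (Fin l → ℝ) → (Fin m → ℝ) → ℝ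
  | 0 => H
  | j + 1 => fun x y =>
      if h : j < l then
        deriv (fun t => partialD H j (Function.update x ⟨j, h⟩ t) y) (x ⟨j, h⟩)
      else 0

/-- The `G`-volume `V_G((a,b]) = Σ_{v ∈ ver((a,b])} sign(v)·G(v)` of the box `(a, b]`,
where the sign is `+1` if `v_j = a_j` for an even number of indices and `−1`
otherwise. -/
def gVolume {m : ℕ} (G : (Fin m → ℝ) → ℝ) (a b : Fin m → ℝ) : ℝ :=
  ∑ v : Fin m → Bool,
    (-1 : ℝ) ^ (Finset.univ.filter (fun j : Fin m => v j = false)).card *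
      G (fun j => if v j then b j else a j)

/-!
Write `Φ j z := V_{∂^j H(z, ·)}((a, b])`. Then `Φ 0 z = μ((−∞, z] × (a, b])` is the distribution
function of a finite measure on `ℝ^ℓ`, so all its mixed differences are nonnegative.
If the mixed differences of `Φ j` in the coordinates `j, …, ℓ - 1` are nonnegative, then those
in the coordinates `j + 1, …, ℓ - 1` are monotone in `z_j`, so their derivative in `z_j`, the
corresponding mixed differences of `Φ (j + 1)`, are nonnegative. After `ℓ` steps no
coordinate is left and `Φ ℓ x = V_{F_x}((a, b]) ≥ 0`.
-/

section IterDiff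

variable {ι : Type*} [DecidableEq ι]

/-- The mixed difference `(∏_{i ∈ L} Δ^i_{u i, w i}) f`, evaluated at `x`. -/
def iterDiff (f : (ι → ℝ) → ℝ) (u w : ι → ℝ) : List ι → (ι → ℝ) → ℝ
  | [], x => f x
  | i :: L, x => iterDiff f u w L (Function.update x i (w i)) -
      iterDiff f u w L (Function.update x i (u i))

theorem iterDiff_congr (f : (ι → ℝ) → ℝ) {u w u' w' : ι → ℝ} {L : List ι}
    (hu : ∀ i ∈ L, u i = u' i) (hw : ∀ i ∈ L, w i = w' i) :
    iterDiff f u w L = iterDiff f u' w' L := by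
  induction L with
  | nil => rfl
  | cons i L ih =>
    funext x
    simp only [iterDiff, hu i (List.mem_cons_self ..), hw i (List.mem_cons_self ..),
      ih (fun k hk => hu k (List.mem_cons_of_mem _ hk))
        (fun k hk => hw k (List.mem_cons_of_mem _ hk))]

theorem hasDerivAt_iterDiff {f f' : (ι → ℝ) → ℝ} {j : ι}
    (hf : ∀ z, HasDerivAt (fun t => f (Function.update z j t)) (f' z) (z j))
    (u w : ι → ℝ) {L : List ι} (hj : j ∉ L) (z : ι → ℝ) :
    HasDerivAt (fun t => iterDiff f u w L (Function.update z j t)) (iterDiff f' u w L z)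
      (z j) := by
  induction L generalizing z with
  | nil => exact hf z
  | cons i L ih =>
    have hij : j ≠ i := fun h => hj (h ▸ List.mem_cons_self ..)
    have hL : j ∉ L := fun h => hj (List.mem_cons_of_mem _ h)
    have hw := ih hL (Function.update z i (w i))
    have hu := ih hL (Function.update z i (u i))
    rw [Function.update_of_ne hij] at hw hu
    simpa only [iterDiff, Function.update_comm hij] using hw.fun_sub hu

/-- The mixed differences over `L` are monotone in the coordinate `j`, hence have a nonnegative
partial derivative in it. -/
theorem iterDiff_nonneg_of_hasDerivAt {f f' : (ι → ℝ) → ℝ} {j : ι}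
    (hf : ∀ z, HasDerivAt (fun t => f (Function.update z j t)) (f' z) (z j))
    {L : List ι} (hj : j ∉ L) (hL : ∀ u w z, u ≤ w → 0 ≤ iterDiff f u w (j :: L) z)
    {u w : ι → ℝ} (huw : u ≤ w) (z : ι → ℝ) : 0 ≤ iterDiff f' u w L z := by
  have hmono : Monotone fun t => iterDiff f u w L (Function.update z j t) := by
    intro s t hst
    have huw' : Function.update u j s ≤ Function.update w j t := by
      intro i
      rcases eq_or_ne i j with rfl | hi
      · simpa using hst
      · simpa [Function.update_of_ne hi] using huw i
    have hdiff := hL _ _ z huw'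
    rw [iterDiff, iterDiff_congr f (u' := u) (w' := w)] at hdiff
    · simpa using hdiff
    all_goals intro i hi; exact Function.update_of_ne (by rintro rfl; exact hj hi) _ _
  exact (hasDerivAt_iterDiff hf u w hj z).deriv ▸ hmono.deriv_nonneg

end IterDiff

theorem List.finRange_drop_eq_cons {l j : ℕ} (hj : j < l) :
    (List.finRange l).drop j = ⟨j, hj⟩ :: (List.finRange l).drop (j + 1) := by
  rw [List.drop_eq_getElem_cons (by simpa using hj), List.getElem_finRange]
  rfl

/-- By induction on `j`, `Φ j` has nonnegative mixed differences in the coordinates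
`j, …, l - 1`. -/
theorem nonneg_of_iterDiff_finRange_nonneg {l : ℕ} (Φ : ℕ → (Fin l → ℝ) → ℝ)
    (hΦ : ∀ j (hj : j < l) z,
      HasDerivAt (fun t => Φ j (Function.update z ⟨j, hj⟩ t)) (Φ (j + 1) z) (z ⟨j, hj⟩))
    (h0 : ∀ u w z, u ≤ w → 0 ≤ iterDiff (Φ 0) u w (List.finRange l) z) (x : Fin l → ℝ) :
    0 ≤ Φ l x := by
  have key : ∀ j ≤ l, ∀ u w z, u ≤ w →
      0 ≤ iterDiff (Φ j) u w ((List.finRange l).drop j) z := by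
    intro j
    induction j with
    | zero => simpa using h0
    | succ j ih =>
      intro hj u w z huw
      have hnd := (List.nodup_finRange l).sublist (List.drop_sublist j _)
      rw [List.finRange_drop_eq_cons hj, List.nodup_cons] at hnd
      refine iterDiff_nonneg_of_hasDerivAt (hΦ j hj) hnd.1 (fun u w z huw => ?_) huw z
      rw [← List.finRange_drop_eq_cons hj]
      exact ih (by omega) u w z huw
  have hl := key l le_rfl x x x le_rfl
  rwa [List.drop_of_length_le (by simp), iterDiff] at hl

theorem Set.univ_pi_update_union {ι : Type*} [DecidableEq ι] {α : ι → Type*}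
    (F : ∀ i, Set (α i)) (i : ι) (s t : Set (α i)) :
    univ.pi (Function.update F i (s ∪ t)) =
      univ.pi (Function.update F i s) ∪ univ.pi (Function.update F i t) := by
  have h := fun a => univ_pi_update (β := α) i F a (fun _ s => s)
  rw [h, h, h, ← union_inter_distrib_right]
  rfl

theorem iterDiff_measureReal_Iic {ι : Type*} [DecidableEq ι] [Countable ι]
    (ν : Measure (ι → ℝ)) [IsFiniteMeasure ν] {u w : ι → ℝ} (huw : u ≤ w) {L : List ι}
    (hL : L.Nodup) (x : ι → ℝ) :
    iterDiff (fun z => ν.real (Iic z)) u w L x =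
      ν.real (univ.pi fun i => if i ∈ L then Ioc (u i) (w i) else Iic (x i)) := by
  induction L generalizing x with
  | nil => simp [iterDiff, pi_univ_Iic]
  | cons i L ih =>
    obtain ⟨hi, hL⟩ := List.nodup_cons.mp hL
    set F : ι → Set ℝ := fun k => if k ∈ L then Ioc (u k) (w k) else Iic (x k)
    have hupdate : ∀ c, (univ.pi fun k => if k ∈ L then Ioc (u k) (w k)
        else Iic (Function.update x i c k)) = univ.pi (Function.update F i (Iic c)) := by
      intro c
      congr 1; funext k
      rcases eq_or_ne k i with rfl | hk
      · simp [F, hi]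
      · simp [F, hk]
    have hcons : (univ.pi fun k => if k ∈ i :: L then Ioc (u k) (w k) else Iic (x k)) =
        univ.pi (Function.update F i (Ioc (u i) (w i))) := by
      congr 1; funext k
      rcases eq_or_ne k i with rfl | hk
      · simp
      · simp [F, hk]
    have hsplit := Set.univ_pi_update_union F i (Iic (u i)) (Ioc (u i) (w i))
    rw [Iic_union_Ioc_eq_Iic (huw i)] at hsplit
    have hdisj : Disjoint (univ.pi (Function.update F i (Iic (u i))))
        (univ.pi (Function.update F i (Ioc (u i) (w i)))) :=
      disjoint_univ_pi.mpr ⟨i, by simp [Iic_disjoint_Ioc le_rfl]⟩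
    have hmeas : MeasurableSet (univ.pi (Function.update F i (Ioc (u i) (w i)))) := by
      refine MeasurableSet.univ_pi fun k => ?_
      rcases eq_or_ne k i with rfl | hk
      · simp
      · simp only [Function.update_of_ne hk, F]
        split_ifs <;> measurability
    simp only [iterDiff, ih hL, hupdate, hcons, hsplit, measureReal_union (μ := ν) hdisj hmeas]
    ring

theorem Set.indicator_univ_pi_one_apply {ι : Type*} [Fintype ι] (s : ι → Set ℝ)
    (t : ι → ℝ) : (univ.pi s).indicator (1 : (ι → ℝ) → ℝ) t = ∏ i, (s i).indicator 1 (t i) := by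
  by_cases h : t ∈ univ.pi s
  · rw [indicator_of_mem h]
    exact (Finset.prod_eq_one fun i _ => indicator_of_mem (h i (mem_univ i)) _).symm
  · obtain ⟨i, hi⟩ : ∃ i, t i ∉ s i := by simpa using h
    rw [indicator_of_notMem h, Finset.prod_eq_zero (Finset.mem_univ i) (indicator_of_notMem hi _)]

theorem neg_one_pow_card_filter_eq_prod {ι : Type*} [Fintype ι] (v : ι → Bool) :
    (-1 : ℝ) ^ (Finset.univ.filter fun j => v j = false).card = ∏ i, if v i then 1 else -1 := by
  rw [Finset.prod_ite, Finset.prod_const_one, one_mul, Finset.prod_const]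
  simp

/-- Expand `∏ i (1[t i ≤ b i] - 1[t i ≤ a i])`. -/
theorem sum_sign_mul_indicator_Iic_corner {ι : Type*} [Fintype ι] [DecidableEq ι]
    {a b : ι → ℝ} (hab : a ≤ b) (t : ι → ℝ) :
    ∑ v : ι → Bool, (-1 : ℝ) ^ (Finset.univ.filter fun j => v j = false).card *
        (Iic fun j => if v j then b j else a j).indicator 1 t =
      (univ.pi fun i => Ioc (a i) (b i)).indicator 1 t := by
  set g : ι → Bool → ℝ := fun i β =>
    if β then (Iic (b i)).indicator 1 (t i) else -(Iic (a i)).indicator 1 (t i)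
  have hcorner : ∀ v : ι → Bool, (-1 : ℝ) ^ (Finset.univ.filter fun j => v j = false).card *
      (Iic fun j => if v j then b j else a j).indicator 1 t = ∏ i, g i (v i) := by
    intro v
    rw [neg_one_pow_card_filter_eq_prod, ← pi_univ_Iic, indicator_univ_pi_one_apply,
      ← Finset.prod_mul_distrib]
    refine Finset.prod_congr rfl fun i _ => ?_
    cases v i <;> simp [g]
  have hIoc : ∀ i, (Ioc (a i) (b i)).indicator (1 : ℝ → ℝ) (t i) = ∑ β, g i β := by
    intro i
    have habi := hab i
    simp only [g, Fintype.sum_bool, ↓reduceIte, Bool.false_eq_true, indicator_apply, mem_Ioc,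
      mem_Iic, Pi.one_apply]
    split_ifs <;> grind
  simp only [hcorner, indicator_univ_pi_one_apply, hIoc, Fintype.prod_sum]

theorem gVolume_measureReal_Iic {m : ℕ} (ρ : Measure (Fin m → ℝ)) [IsFiniteMeasure ρ]
    {a b : Fin m → ℝ} (hab : a ≤ b) :
    gVolume (fun y => ρ.real (Iic y)) a b = ρ.real (univ.pi fun i => Ioc (a i) (b i)) := by
  have hbox : MeasurableSet (univ.pi fun i => Ioc (a i) (b i)) :=
    MeasurableSet.univ_pi fun _ => measurableSet_Ioc
  simp only [gVolume, ← integral_indicator_one measurableSet_Iic, ← integral_indicator_one hbox,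
    ← integral_const_mul]
  rw [← integral_finsetSum _ fun v _ =>
    ((integrable_const 1).indicator measurableSet_Iic).const_mul _]
  exact congrArg _ (funext (sum_sign_mul_indicator_Iic_corner hab))

theorem hasDerivAt_gVolume {m : ℕ} {G : ℝ → (Fin m → ℝ) → ℝ} {G' : (Fin m → ℝ) → ℝ} {s : ℝ}
    (a b : Fin m → ℝ) (hG : ∀ y, HasDerivAt (fun t => G t y) (G' y) s) :
    HasDerivAt (fun t => gVolume (G t) a b) (gVolume G' a b) s :=
  HasDerivAt.fun_sum fun _ _ => (hG _).const_mul _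

section Marginals

variable {α β : Type*} [MeasurableSpace α] [MeasurableSpace β] (μ : Measure (α × β))

theorem MeasureTheory.Measure.fst_restrict_univ_prod_real {s : Set α} (hs : MeasurableSet s)
    (t : Set β) : (μ.restrict (univ ×ˢ t)).fst.real s = μ.real (s ×ˢ t) := by
  rw [measureReal_def, measureReal_def, Measure.fst_apply hs,
    Measure.restrict_apply (measurable_fst hs)]
  congr 2
  ext p
  simp

theorem MeasureTheory.Measure.snd_restrict_prod_univ_real (s : Set α) {t : Set β}
    (ht : MeasurableSet t) : (μ.restrict (s ×ˢ univ)).snd.real t = μ.real (s ×ˢ t) := by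
  rw [measureReal_def, measureReal_def, Measure.snd_apply ht,
    Measure.restrict_apply (measurable_snd ht)]
  congr 2
  ext p
  simp [and_comm]

end Marginals

theorem iterated_partial_derivative_increasing_general
    (d l : ℕ)
    (μ : Measure ((Fin l → ℝ) × (Fin (d - l) → ℝ))) (hμp : IsProbabilityMeasure μ)
    (H : (Fin l → ℝ) → (Fin (d - l) → ℝ) → ℝ)
    (hH : ∀ x y, H x y = (μ (orthant x ×ˢ orthant y)).toReal)
    (hderiv : ∀ (j : ℕ) (hj : j < l) (x : Fin l → ℝ) (y : Fin (d - l) → ℝ),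
      HasDerivAt (fun t => partialD H j (Function.update x ⟨j, hj⟩ t) y)
        (partialD H (j + 1) x y) (x ⟨j, hj⟩)) :
    ∀ (x : Fin l → ℝ) (a b : Fin (d - l) → ℝ), (∀ j, a j ≤ b j) →
      0 ≤ gVolume (fun y => partialD H l x y) a b := by
  intro x a b hab
  have hbox : MeasurableSet (univ.pi fun i => Ioc (a i) (b i)) :=
    MeasurableSet.univ_pi fun _ => measurableSet_Ioc
  have hH0 : ∀ z, gVolume (fun y => H z y) a b =
      (μ.restrict (univ ×ˢ univ.pi fun i => Ioc (a i) (b i))).fst.real (Iic z) := by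
    intro z
    have hz : ∀ y, H z y = (μ.restrict (Iic z ×ˢ univ)).snd.real (Iic y) := fun y => by
      rw [hH, Measure.snd_restrict_prod_univ_real _ _ measurableSet_Iic]
      rfl
    rw [funext hz, gVolume_measureReal_Iic _ hab, Measure.snd_restrict_prod_univ_real _ _ hbox,
      Measure.fst_restrict_univ_prod_real _ measurableSet_Iic]
  refine nonneg_of_iterDiff_finRange_nonneg (fun j z => gVolume (fun y => partialD H j z y) a b)
    (fun j hj z => hasDerivAt_gVolume a b (hderiv j hj z)) (fun u w z huw => ?_) x
  simp only [partialD, hH0]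
  rw [iterDiff_measureReal_Iic _ huw (List.nodup_finRange l)]
  exact measureReal_nonneg

/-- **Lemma A.2.** Let `H` be a `d`-dimensional distribution function (of the probability
measure `μ` on `ℝ^ℓ × ℝ^{d-ℓ}`) and `ℓ ∈ {1,…,d-1}`. If the `ℓ`-th order iterated
partial derivatives of `H` in the first `ℓ` coordinates exist and are continuous, then
for every fixed `x ∈ ℝ^ℓ` the function `F_x(y) = ∂^ℓ H(x,y)/∂x₁⋯∂x_ℓ` is
`(d-ℓ)`-increasing, i.e. `V_{F_x}((a,b]) ≥ 0` whenever `a ≤ b`. -/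
theorem iterated_partial_derivative_increasing
    (d l : ℕ) (hl1 : 1 ≤ l) (hl2 : l ≤ d - 1)
    (μ : Measure ((Fin l → ℝ) × (Fin (d - l) → ℝ))) (hμp : IsProbabilityMeasure μ)
    (H : (Fin l → ℝ) → (Fin (d - l) → ℝ) → ℝ)
    (hH : ∀ x y, H x y = (μ (orthant x ×ˢ orthant y)).toReal)
    (hderiv : ∀ (j : ℕ) (hj : j < l) (x : Fin l → ℝ) (y : Fin (d - l) → ℝ),
      HasDerivAt (fun t => partialD H j (Function.update x ⟨j, hj⟩ t) y)
        (partialD H (j + 1) x y) (x ⟨j, hj⟩))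
    (hcont : ∀ j : ℕ, j ≤ l →
      Continuous (fun p : (Fin l → ℝ) × (Fin (d - l) → ℝ) => partialD H j p.1 p.2)) :
    ∀ (x : Fin l → ℝ) (a b : Fin (d - l) → ℝ), (∀ j, a j ≤ b j) →
      0 ≤ gVolume (fun y => partialD H l x y) a b :=
  iterated_partial_derivative_increasing_general d l μ hμp H hH hderiv
end
end
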